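/- arXiv:2404.15671 — 4 statements merged into one kernel-verified Lean document; each statement's English description precedes it below -/
import Mathlib

section
/- Let X be a Banach function space over ℝⁿ, and assume that the Hardy–Littlewood maximal operator M is bounded on X. If there exists λ₀ ∈ (0,1) such that φ_X(λ₀) > 1, where φ_X(λ) := inf{‖m_λ f‖_X : ‖f‖_X = 1}, then M is bounded on the associate space X'. -/
open MeasureTheory ENNReal Filter Set
open scoped NNReal ENNReal

noncomputable section

/-- The axis-parallel closed cube in `ℝⁿ` with lower corner `a` and side length `h`. -/
def Cube {n : ℕ} (a : Fin n → ℝ) (h : ℝ) : Set (Fin n → ℝ) :=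
  {x | ∀ i, x i ∈ Set.Icc (a i) (a i + h)}

/-- The Hardy–Littlewood maximal operator, acting on nonnegative
(extended-real-valued) measurable functions on `ℝⁿ`:
`Mf(x) = sup_{Q ∋ x} (1/|Q|) ∫_Q f`, the sup over all cubes `Q` containing `x`. -/
def hlMaximal {n : ℕ} (f : (Fin n → ℝ) → ℝ≥0∞) (x : Fin n → ℝ) : ℝ≥0∞ :=
  ⨆ (a : Fin n → ℝ) (h : ℝ) (_ : 0 < h) (_ : x ∈ Cube a h),
    (∫⁻ y in Cube a h, f y) / volume (Cube a h)

/-- The Hardy–Littlewood maximal operator of a real-valued function. -/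
def hlMaximalR {n : ℕ} (f : (Fin n → ℝ) → ℝ) : (Fin n → ℝ) → ℝ≥0∞ :=
  hlMaximal (fun x => (‖f x‖₊ : ℝ≥0∞))

/-- The non-increasing rearrangement `f^*(t) = inf {α : |{|f| > α}| ≤ t}`. -/
def decRearr {n : ℕ} (f : (Fin n → ℝ) → ℝ≥0∞) (t : ℝ≥0∞) : ℝ≥0∞ :=
  sInf {α : ℝ≥0∞ | volume {x | α < f x} ≤ t}

/-- The local maximal operator `m_λ f(x) = sup_{Q ∋ x} (f χ_Q)^*(λ|Q|)`. -/
def locMax {n : ℕ} (lam : ℝ) (f : (Fin n → ℝ) → ℝ≥0∞) (x : Fin n → ℝ) : ℝ≥0∞ :=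
  ⨆ (a : Fin n → ℝ) (h : ℝ) (_ : 0 < h) (_ : x ∈ Cube a h),
    decRearr (Set.indicator (Cube a h) f) (ENNReal.ofReal lam * volume (Cube a h))

/-- A Banach function space over `ℝⁿ`, described (à la Bennett–Sharpley and
Lorist–Nieraeth) by its function norm `ρ` on nonnegative extended-real-valued
functions:  `ρ` is a norm on measurable functions satisfying the ideal property,
the Fatou property and the saturation property. -/
structure BanachFunctionSpace (n : ℕ) where
  ρ : ((Fin n → ℝ) → ℝ≥0∞) → ℝ≥0∞
  congr_ae : ∀ f g, Measurable f → Measurable g → f =ᵐ[volume] g → ρ f = ρ g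
  eq_zero_iff : ∀ f, Measurable f → (ρ f = 0 ↔ f =ᵐ[volume] 0)
  add_le : ∀ f g, Measurable f → Measurable g → ρ (fun x => f x + g x) ≤ ρ f + ρ g
  smul_eq : ∀ (c : ℝ≥0) f, Measurable f → ρ (fun x => (c : ℝ≥0∞) * f x) = (c : ℝ≥0∞) * ρ f
  -- ideal property
  mono : ∀ f g, Measurable f → Measurable g → (∀ᵐ x ∂volume, f x ≤ g x) → ρ f ≤ ρ g
  -- Fatou property
  fatou : ∀ f : ℕ → (Fin n → ℝ) → ℝ≥0∞, (∀ j, Measurable (f j)) →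
    (∀ x, Monotone fun j => f j x) → (⨆ j, ρ (f j)) < ⊤ →
    ρ (fun x => ⨆ j, f j x) = ⨆ j, ρ (f j)
  -- saturation property
  saturation : ∀ E : Set (Fin n → ℝ), MeasurableSet E → 0 < volume E →
    ∃ F, F ⊆ E ∧ MeasurableSet F ∧ 0 < volume F ∧ ρ (Set.indicator F fun _ => 1) < ⊤

/-- The associate (Köthe dual) norm: `‖f‖_{X'} = sup_{‖g‖_X ≤ 1} ∫ |fg|`. -/
def assocNorm {n : ℕ} (N : ((Fin n → ℝ) → ℝ≥0∞) → ℝ≥0∞)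
    (f : (Fin n → ℝ) → ℝ≥0∞) : ℝ≥0∞ :=
  ⨆ (g : (Fin n → ℝ) → ℝ≥0∞) (_ : Measurable g) (_ : N g ≤ 1), ∫⁻ x, f x * g x

/-- The norm of the rescaled space `X^p`: `‖f‖_{X^p} = ‖ |f|^{1/p} ‖_X^p`. -/
def powNorm {n : ℕ} (N : ((Fin n → ℝ) → ℝ≥0∞) → ℝ≥0∞) (p : ℝ)
    (f : (Fin n → ℝ) → ℝ≥0∞) : ℝ≥0∞ :=
  (N fun x => f x ^ (1 / p)) ^ p

/-- Boundedness of the Hardy–Littlewood maximal operator on the space with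
function norm `N`. -/
def MaximalBounded {n : ℕ} (N : ((Fin n → ℝ) → ℝ≥0∞) → ℝ≥0∞) : Prop :=
  ∃ C : ℝ≥0, ∀ f, Measurable f → N (hlMaximal f) ≤ (C : ℝ≥0∞) * N f

/-- The function `φ_X(λ) = inf {‖m_λ f‖_X : ‖f‖_X = 1}`. -/
def phiFn {n : ℕ} (N : ((Fin n → ℝ) → ℝ≥0∞) → ℝ≥0∞) (lam : ℝ) : ℝ≥0∞ :=
  ⨅ (f : (Fin n → ℝ) → ℝ≥0∞) (_ : Measurable f) (_ : N f = 1), N (locMax lam f)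

/-- Unboundedness of `φ_X` on `(0,1)`. -/
def phiUnbounded {n : ℕ} (N : ((Fin n → ℝ) → ℝ≥0∞) → ℝ≥0∞) : Prop :=
  (⨆ lam ∈ Set.Ioo (0 : ℝ) 1, phiFn N lam) = ⊤

/-- Local integrability of a weight (finite integral over every cube). -/
def LocIntegrableW {n : ℕ} (w : (Fin n → ℝ) → ℝ≥0∞) : Prop :=
  ∀ (a : Fin n → ℝ) (h : ℝ), 0 < h → (∫⁻ x in Cube a h, w x) < ⊤

/-- The `A₁` constant `[w]_{A₁} = ‖Mw/w‖_{L^∞}`. -/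
def A1Const {n : ℕ} (w : (Fin n → ℝ) → ℝ≥0∞) : ℝ≥0∞ :=
  essSup (fun x => hlMaximal w x / w x) volume

/-- The (Fujii–Wilson) `A_∞` constant `[w]_{A_∞} = sup_Q (∫_Q M(wχ_Q)) / w(Q)`. -/
def AinfConst {n : ℕ} (w : (Fin n → ℝ) → ℝ≥0∞) : ℝ≥0∞ :=
  ⨆ (a : Fin n → ℝ) (h : ℝ) (_ : 0 < h),
    (∫⁻ x in Cube a h, hlMaximal (Set.indicator (Cube a h) w) x) /
      ∫⁻ x in Cube a h, w x

/-- The `A_p` constant: for `p = 1` it is the `A₁` constant, and for `p > 1` it is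
`[w]_{A_p} = sup_Q ⟨w⟩_Q ⟨w^{-p'/p}⟩_Q^{p/p'}` (note `p'/p = 1/(p-1)` and `p/p' = p-1`). -/
def ApConst {n : ℕ} (p : ℝ) (w : (Fin n → ℝ) → ℝ≥0∞) : ℝ≥0∞ :=
  if p = 1 then A1Const w
  else
    ⨆ (a : Fin n → ℝ) (h : ℝ) (_ : 0 < h),
      ((∫⁻ x in Cube a h, w x) / volume (Cube a h)) *
        ((∫⁻ x in Cube a h, w x ^ (-(p - 1)⁻¹)) / volume (Cube a h)) ^ (p - 1)

/-- `A_p`-regularity of the space with function norm `N`: there are `C₁, C₂ > 0` such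
that every `f` in the space is dominated by an `A_p` weight `w` with `[w]_{A_p} ≤ C₁`
and `‖w‖ ≤ C₂ ‖f‖`. -/
def IsApRegular {n : ℕ} (N : ((Fin n → ℝ) → ℝ≥0∞) → ℝ≥0∞) (p : ℝ) : Prop :=
  ∃ C₁ C₂ : ℝ≥0, 0 < C₁ ∧ 0 < C₂ ∧
    ∀ f, Measurable f → N f < ⊤ →
      ∃ w : (Fin n → ℝ) → ℝ≥0∞, Measurable w ∧ LocIntegrableW w ∧
        (∀ᵐ x ∂volume, f x ≤ w x) ∧ ApConst p w ≤ (C₁ : ℝ≥0∞) ∧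
        N w ≤ (C₂ : ℝ≥0∞) * N f

/-- `A_∞`-regularity of the space with function norm `N`. -/
def IsAinfRegular {n : ℕ} (N : ((Fin n → ℝ) → ℝ≥0∞) → ℝ≥0∞) : Prop :=
  ∃ C₁ C₂ : ℝ≥0, 0 < C₁ ∧ 0 < C₂ ∧
    ∀ f, Measurable f → N f < ⊤ →
      ∃ w : (Fin n → ℝ) → ℝ≥0∞, Measurable w ∧ LocIntegrableW w ∧
        (∀ᵐ x ∂volume, f x ≤ w x) ∧ AinfConst w ≤ (C₁ : ℝ≥0∞) ∧
        N w ≤ (C₂ : ℝ≥0∞) * N f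

/-- The Fefferman–Stein sharp maximal function
`f^#(x) = sup_{Q ∋ x} (1/|Q|) ∫_Q |f - ⟨f⟩_Q|`. -/
def sharpMax {n : ℕ} (f : (Fin n → ℝ) → ℝ) (x : Fin n → ℝ) : ℝ≥0∞ :=
  ⨆ (a : Fin n → ℝ) (h : ℝ) (_ : 0 < h) (_ : x ∈ Cube a h),
    (∫⁻ y in Cube a h,
      (‖f y - (∫ z in Cube a h, f z) / (volume (Cube a h)).toReal‖₊ : ℝ≥0∞)) /
      volume (Cube a h)

/-- Membership in `S₀(ℝⁿ)`: all level sets `{|f| > α}`, `α > 0`, have finite measure. -/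
def MemS0 {n : ℕ} (f : (Fin n → ℝ) → ℝ) : Prop :=
  ∀ α : ℝ, 0 < α → volume {x | α < |f x|} < ⊤

/-- `p`-convexity of a Banach function space. -/
def IsPConvex {n : ℕ} (X : BanachFunctionSpace n) (p : ℝ) : Prop :=
  ∀ f g, Measurable f → Measurable g →
    X.ρ (fun x => (f x ^ p + g x ^ p) ^ (1 / p)) ≤ (X.ρ f ^ p + X.ρ g ^ p) ^ (1 / p)

/-- `q`-concavity of a Banach function space. -/
def IsQConcave {n : ℕ} (X : BanachFunctionSpace n) (q : ℝ) : Prop :=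
  ∀ f g, Measurable f → Measurable g →
    (X.ρ f ^ q + X.ρ g ^ q) ^ (1 / q) ≤ X.ρ (fun x => (f x ^ q + g x ^ q) ^ (1 / q))

namespace Lerner
variable {n : ℕ}

lemma cube_eq_pi (a : Fin n → ℝ) (h : ℝ) :
    Cube a h = Set.pi Set.univ (fun i => Set.Icc (a i) (a i + h)) := by
  ext x; simp [Cube, Set.mem_pi, Pi.le_def, forall_and]

lemma measurableSet_cube (a : Fin n → ℝ) (h : ℝ) : MeasurableSet (Cube a h) := by
  rw [cube_eq_pi]
  exact MeasurableSet.pi Set.countable_univ (fun i _ => measurableSet_Icc)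

lemma volume_cube (a : Fin n → ℝ) (h : ℝ) :
    volume (Cube a h) = ENNReal.ofReal h ^ n := by
  rw [cube_eq_pi, volume_pi_pi]
  simp [Real.volume_Icc]

lemma volume_cube_pos (a : Fin n → ℝ) {h : ℝ} (hh : 0 < h) : 0 < volume (Cube a h) := by
  rw [volume_cube]
  have : (0:ℝ≥0∞) < ENNReal.ofReal h := ENNReal.ofReal_pos.mpr hh
  positivity

lemma volume_cube_ne_zero (a : Fin n → ℝ) {h : ℝ} (hh : 0 < h) : volume (Cube a h) ≠ 0 :=
  (volume_cube_pos a hh).ne'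

lemma volume_cube_ne_top (a : Fin n → ℝ) (h : ℝ) : volume (Cube a h) ≠ ⊤ := by
  rw [volume_cube]; exact (ENNReal.pow_lt_top ENNReal.ofReal_lt_top).ne

lemma mem_cube {a x : Fin n → ℝ} {h : ℝ} :
    x ∈ Cube a h ↔ ∀ i, a i ≤ x i ∧ x i ≤ a i + h := by
  simp [Cube]

lemma cube_subset_cube {a b : Fin n → ℝ} {h r : ℝ}
    (hab : ∀ i, b i ≤ a i) (hr : ∀ i, a i + h ≤ b i + r) :
    Cube a h ⊆ Cube b r := by
  intro x hx
  rw [mem_cube] at hx ⊢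
  intro i
  exact ⟨(hab i).trans (hx i).1, (hx i).2.trans (hr i)⟩


/-! ### decRearr lemmas -/

lemma decRearr_le {f : (Fin n → ℝ) → ℝ≥0∞} {t α : ℝ≥0∞}
    (hα : volume {x | α < f x} ≤ t) : decRearr f t ≤ α :=
  sInf_le (by exact hα)

lemma lt_volume_of_lt_decRearr {f : (Fin n → ℝ) → ℝ≥0∞} {t α : ℝ≥0∞}
    (h : α < decRearr f t) : t < volume {x | α < f x} := by
  by_contra hc
  push_neg at hc
  exact absurd (decRearr_le hc) (not_le.mpr h)

lemma le_decRearr_of_lt {f : (Fin n → ℝ) → ℝ≥0∞} {t α : ℝ≥0∞}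
    (h : t < volume {x | α < f x}) : α ≤ decRearr f t := by
  apply le_sInf
  intro β hβ
  by_contra hc
  push_neg at hc
  have hsub : {x | α < f x} ⊆ {x | β < f x} := fun x hx => lt_of_le_of_lt hc.le hx
  have : volume {x | α < f x} ≤ t := le_trans (measure_mono hsub) hβ
  exact absurd this (not_le.mpr h)

lemma decRearr_mono_fun {f g : (Fin n → ℝ) → ℝ≥0∞} {t : ℝ≥0∞}
    (hfg : ∀ x, f x ≤ g x) : decRearr f t ≤ decRearr g t := by
  apply le_sInf
  intro β hβ
  apply sInf_le
  refine le_trans (measure_mono ?_) hβ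
  intro x hx
  exact lt_of_lt_of_le hx (hfg x)

lemma decRearr_smul (c : ℝ≥0) (hc : c ≠ 0) (f : (Fin n → ℝ) → ℝ≥0∞) (t : ℝ≥0∞) :
    decRearr (fun x => (c : ℝ≥0∞) * f x) t = (c : ℝ≥0∞) * decRearr f t := by
  have hc' : (c : ℝ≥0∞) ≠ 0 := by exact_mod_cast hc
  have hctop : (c : ℝ≥0∞) ≠ ⊤ := ENNReal.coe_ne_top
  -- key : for any c ≠ 0, ≠ ⊤ :  c * sInf S_f ≤ sInf S_{c f}
  have key : ∀ (d : ℝ≥0∞), d ≠ 0 → d ≠ ⊤ → ∀ g : (Fin n → ℝ) → ℝ≥0∞,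
      d * decRearr g t ≤ decRearr (fun x => d * g x) t := by
    intro d hd hdtop g
    apply le_sInf
    intro β hβ
    have hmem : volume {x | d⁻¹ * β < g x} ≤ t := by
      have : {x | d⁻¹ * β < g x} = {x | β < d * g x} := by
        ext x
        constructor
        · intro hx
          have := ENNReal.mul_lt_mul_iff_right (a := d) hd hdtop |>.mpr hx
          rwa [← mul_assoc, ENNReal.mul_inv_cancel hd hdtop, one_mul] at this
        · intro hx
          have := ENNReal.mul_lt_mul_iff_right (a := d⁻¹) (ENNReal.inv_ne_zero.mpr hdtop)
            (ENNReal.inv_ne_top.mpr hd) |>.mpr hx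
          rwa [← mul_assoc, ENNReal.inv_mul_cancel hd hdtop, one_mul] at this
      rw [this]; exact hβ
    have h1 : decRearr g t ≤ d⁻¹ * β := sInf_le hmem
    calc d * decRearr g t ≤ d * (d⁻¹ * β) := mul_le_mul_right h1 d
      _ = β := by rw [← mul_assoc, ENNReal.mul_inv_cancel hd hdtop, one_mul]
  apply le_antisymm
  · -- ≤ : use key with d := c⁻¹ on (c • f)
    have h2 := key (c : ℝ≥0∞)⁻¹ (ENNReal.inv_ne_zero.mpr hctop) (ENNReal.inv_ne_top.mpr hc')
      (fun x => (c : ℝ≥0∞) * f x)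
    have heq : (fun x => (c : ℝ≥0∞)⁻¹ * ((c:ℝ≥0∞) * f x)) = f := by
      funext x; rw [← mul_assoc, ENNReal.inv_mul_cancel hc' hctop, one_mul]
    rw [heq] at h2
    calc decRearr (fun x => (c:ℝ≥0∞) * f x) t
        = (c:ℝ≥0∞) * ((c:ℝ≥0∞)⁻¹ * decRearr (fun x => (c:ℝ≥0∞) * f x) t) := by
          rw [← mul_assoc, ENNReal.mul_inv_cancel hc' hctop, one_mul]
      _ ≤ (c:ℝ≥0∞) * decRearr f t := mul_le_mul_right h2 _
  · exact key _ hc' hctop f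


/-! ### Rational cube approximation -/

/-- The average of `g` over the cube. -/
noncomputable def avg (g : (Fin n → ℝ) → ℝ≥0∞) (a : Fin n → ℝ) (h : ℝ) : ℝ≥0∞ :=
  (∫⁻ y in Cube a h, g y) / volume (Cube a h)

lemma avg_le_hlMaximal {g : (Fin n → ℝ) → ℝ≥0∞} {a : Fin n → ℝ} {h : ℝ} {x : Fin n → ℝ}
    (hh : 0 < h) (hx : x ∈ Cube a h) : avg g a h ≤ hlMaximal g x := by
  unfold hlMaximal
  refine le_iSup_of_le a (le_iSup_of_le h ?_)
  rw [iSup_pos hh, iSup_pos hx]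
  rfl

/-- Rational approximation of cubes from outside. -/
lemma exists_rat_cube (a : Fin n → ℝ) {h : ℝ} (hh : 0 < h) {x : Fin n → ℝ}
    (hx : x ∈ Cube a h) (j : ℕ) :
    ∃ (b : Fin n → ℚ) (r : ℚ), 0 < (r : ℝ) ∧ h ≤ (r : ℝ) ∧ (r : ℝ) ≤ h + 2/(j+1) ∧
      Cube a h ⊆ Cube (fun i => (b i : ℝ)) (r : ℝ) ∧
      x ∈ Cube (fun i => (b i : ℝ)) (r : ℝ) := by
  have hη : (0:ℝ) < 1/(j+1) := by positivity
  choose b hb1 hb2 using fun i => exists_rat_btwn (show a i - 1/(j+1) < a i by linarith)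
  obtain ⟨r, hr1, hr2⟩ := exists_rat_btwn (show h + 1/(j+1) < h + 2/(j+1) by
    have h2 : (2:ℝ)/(j+1) = 2 * (1/(j+1)) := by ring
    have : (1:ℝ)/(j+1) < 2/(j+1) := by rw [h2]; linarith
    linarith)
  have hsub : Cube a h ⊆ Cube (fun i => (b i : ℝ)) (r : ℝ) := by
    apply cube_subset_cube
    · intro i; exact (hb2 i).le
    · intro i
      have := hb1 i
      have := hr1
      linarith
  exact ⟨b, r, by linarith, by linarith, hr2.le, hsub, hsub hx⟩

/-- The pointwise value of the rational-cube maximal function. -/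
noncomputable def ratM (g : (Fin n → ℝ) → ℝ≥0∞) (p : (Fin n → ℚ) × ℚ) :
    (Fin n → ℝ) → ℝ≥0∞ :=
  if 0 < (p.2 : ℝ) then
    Set.indicator (Cube (fun i => (p.1 i : ℝ)) (p.2 : ℝ))
      (fun _ => avg g (fun i => (p.1 i : ℝ)) (p.2 : ℝ))
  else 0

lemma measurable_ratM (g : (Fin n → ℝ) → ℝ≥0∞) (p : (Fin n → ℚ) × ℚ) :
    Measurable (ratM g p) := by
  unfold ratM
  split
  · exact measurable_const.indicator (measurableSet_cube _ _)
  · exact measurable_const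

lemma iInf_ofReal_pow_side {h : ℝ} (hh : 0 < h) :
    ⨅ j : ℕ, (ENNReal.ofReal (h + 2/(j+1))) ^ n = (ENNReal.ofReal h) ^ n := by
  have hanti : Antitone (fun j : ℕ => (ENNReal.ofReal (h + 2/(j+1))) ^ n) := by
    intro j k hjk
    have h2 : (2:ℝ)/(k+1) ≤ 2/(j+1) := by
      apply div_le_div_of_nonneg_left <;> [norm_num; positivity; exact_mod_cast by omega]
    exact pow_le_pow_left' (ENNReal.ofReal_le_ofReal (by linarith)) n
  have htend : Filter.Tendsto (fun j : ℕ => (ENNReal.ofReal (h + 2/(j+1))) ^ n)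
      Filter.atTop (nhds ((ENNReal.ofReal h) ^ n)) := by
    have h0 : Filter.Tendsto (fun j : ℕ => h + 2/(j+1)) Filter.atTop (nhds h) := by
      have := tendsto_one_div_add_atTop_nhds_zero_nat (𝕜 := ℝ)
      have h2 : Filter.Tendsto (fun j : ℕ => 2/((j:ℝ)+1)) Filter.atTop (nhds 0) := by
        have := this.const_mul (2:ℝ)
        simpa [div_eq_mul_inv, mul_comm, mul_assoc] using this
      simpa using tendsto_const_nhds.add h2
    exact ((ENNReal.continuous_pow n).tendsto _).comp ((ENNReal.continuous_ofReal.tendsto h).comp h0)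
  exact tendsto_nhds_unique (tendsto_atTop_iInf hanti) htend

/-- `hlMaximal` is the supremum over rational cubes. -/
lemma hlMaximal_eq (g : (Fin n → ℝ) → ℝ≥0∞) (x : Fin n → ℝ) :
    hlMaximal g x = ⨆ p : (Fin n → ℚ) × ℚ, ratM g p x := by
  apply le_antisymm
  · unfold hlMaximal
    refine iSup_le fun a => iSup_le fun h => iSup_le fun hh => iSup_le fun hx => ?_
    -- approximate by rational cubes
    have key : ∀ j : ℕ, (∫⁻ y in Cube a h, g y) / (ENNReal.ofReal (h + 2/(j+1)))^n ≤
        ⨆ p : (Fin n → ℚ) × ℚ, ratM g p x := by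
      intro j
      obtain ⟨b, r, hr0, hrh, hrle, hsub, hxmem⟩ := exists_rat_cube a hh hx j
      refine le_trans ?_ (le_iSup _ (b, r))
      rw [ratM, if_pos hr0, Set.indicator_of_mem hxmem]
      unfold avg
      apply ENNReal.div_le_div
      · exact lintegral_mono' (Measure.restrict_mono hsub le_rfl) le_rfl
      · rw [volume_cube]
        exact pow_le_pow_left' (ENNReal.ofReal_le_ofReal hrle) n
    have : (∫⁻ y in Cube a h, g y) / volume (Cube a h) =
        ⨆ j : ℕ, (∫⁻ y in Cube a h, g y) / (ENNReal.ofReal (h + 2/(j+1)))^n := by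
      rw [volume_cube, ← iInf_ofReal_pow_side hh]
      rw [div_eq_mul_inv, ENNReal.inv_iInf, ENNReal.mul_iSup]
      simp [div_eq_mul_inv]
    rw [this]
    exact iSup_le key
  · refine iSup_le fun p => ?_
    rw [ratM]
    split
    · rename_i hr
      by_cases hxmem : x ∈ Cube (fun i => (p.1 i : ℝ)) (p.2 : ℝ)
      · rw [Set.indicator_of_mem hxmem]
        exact avg_le_hlMaximal hr hxmem
      · rw [Set.indicator_of_notMem hxmem]
        exact zero_le
    · exact zero_le

lemma measurable_hlMaximal (g : (Fin n → ℝ) → ℝ≥0∞) : Measurable (hlMaximal g) := by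
  have : hlMaximal g = fun x => ⨆ p : (Fin n → ℚ) × ℚ, ratM g p x := by
    funext x; exact hlMaximal_eq g x
  rw [this]
  exact Measurable.iSup (fun p => measurable_ratM g p)


/-! ### locMax : rational representation, measurability, scaling -/

noncomputable def ratL (lam : ℝ) (u : (Fin n → ℝ) → ℝ≥0∞) (p : (Fin n → ℚ) × ℚ) :
    (Fin n → ℝ) → ℝ≥0∞ :=
  if 0 < (p.2 : ℝ) then
    Set.indicator (Cube (fun i => (p.1 i : ℝ)) (p.2 : ℝ))
      (fun _ => decRearr (Set.indicator (Cube (fun i => (p.1 i : ℝ)) (p.2 : ℝ)) u)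
        (ENNReal.ofReal lam * volume (Cube (fun i => (p.1 i : ℝ)) (p.2 : ℝ))))
  else 0

lemma measurable_ratL (lam : ℝ) (u : (Fin n → ℝ) → ℝ≥0∞) (p : (Fin n → ℚ) × ℚ) :
    Measurable (ratL lam u p) := by
  unfold ratL
  split
  · exact measurable_const.indicator (measurableSet_cube _ _)
  · exact measurable_const

lemma decRearr_le_locMax {lam : ℝ} {u : (Fin n → ℝ) → ℝ≥0∞} {a : Fin n → ℝ} {h : ℝ}
    {x : Fin n → ℝ} (hh : 0 < h) (hx : x ∈ Cube a h) :
    decRearr (Set.indicator (Cube a h) u) (ENNReal.ofReal lam * volume (Cube a h)) ≤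
      locMax lam u x := by
  unfold locMax
  refine le_iSup_of_le a (le_iSup_of_le h ?_)
  rw [iSup_pos hh, iSup_pos hx]

lemma locMax_eq (lam : ℝ) (hlam : 0 ≤ lam) (u : (Fin n → ℝ) → ℝ≥0∞) (x : Fin n → ℝ) :
    locMax lam u x = ⨆ p : (Fin n → ℚ) × ℚ, ratL lam u p x := by
  apply le_antisymm
  · unfold locMax
    refine iSup_le fun a => iSup_le fun h => iSup_le fun hh => iSup_le fun hx => ?_
    set S := ⨆ p : (Fin n → ℚ) × ℚ, ratL lam u p x with hS
    apply le_of_forall_lt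
    intro c hc
    obtain ⟨α, hcα, hα⟩ := exists_between hc
    refine lt_of_lt_of_le hcα (le_trans ?_ (le_refl S))
    -- show α ≤ S
    have hvol := lt_volume_of_lt_decRearr hα
    set D := volume {y | α < Set.indicator (Cube a h) u y} with hD
    -- choose j with ofReal lam * (ofReal (h + 2/(j+1)))^n < D
    have htend : Filter.Tendsto
        (fun j : ℕ => ENNReal.ofReal lam * (ENNReal.ofReal (h + 2/(j+1)))^n)
        Filter.atTop (nhds (ENNReal.ofReal lam * (ENNReal.ofReal h)^n)) := by
      have hbase : Filter.Tendsto (fun j : ℕ => (ENNReal.ofReal (h + 2/(j+1)))^n)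
          Filter.atTop (nhds ((ENNReal.ofReal h)^n)) := by
        have h0 : Filter.Tendsto (fun j : ℕ => h + 2/(j+1)) Filter.atTop (nhds h) := by
          have h2 : Filter.Tendsto (fun j : ℕ => 2/((j:ℝ)+1)) Filter.atTop (nhds 0) := by
            have := tendsto_one_div_add_atTop_nhds_zero_nat.const_mul (2:ℝ)
            simpa [div_eq_mul_inv, mul_comm, mul_assoc] using this
          simpa using tendsto_const_nhds.add h2
        exact ((ENNReal.continuous_pow n).tendsto _).comp
          ((ENNReal.continuous_ofReal.tendsto h).comp h0)
      exact ENNReal.Tendsto.const_mul hbase (Or.inr ENNReal.ofReal_ne_top)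
    have hlt : ENNReal.ofReal lam * (ENNReal.ofReal h)^n < D := by
      rw [← volume_cube a h]; exact hvol
    obtain ⟨j, hj⟩ := (htend.eventually_lt_const hlt).exists
    obtain ⟨b, r, hr0, hrh, hrle, hsub, hxmem⟩ := exists_rat_cube a hh hx j
    -- level sets inclusion
    have hlev : {y | α < Set.indicator (Cube a h) u y} ⊆
        {y | α < Set.indicator (Cube (fun i => (b i : ℝ)) (r:ℝ)) u y} := by
      intro y hy
      simp only [Set.mem_setOf_eq] at hy ⊢
      exact lt_of_lt_of_le hy (Set.indicator_le_indicator_of_subset hsub (fun a => zero_le) y)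
    have hvolj : ENNReal.ofReal lam * volume (Cube (fun i => (b i : ℝ)) (r:ℝ)) <
        volume {y | α < Set.indicator (Cube (fun i => (b i : ℝ)) (r:ℝ)) u y} := by
      refine lt_of_le_of_lt ?_ (lt_of_lt_of_le hj (le_trans (measure_mono hlev) le_rfl))
      rw [volume_cube]
      exact mul_le_mul_right (pow_le_pow_left' (ENNReal.ofReal_le_ofReal hrle) n) _
    have hval : α ≤ decRearr (Set.indicator (Cube (fun i => (b i : ℝ)) (r:ℝ)) u)
        (ENNReal.ofReal lam * volume (Cube (fun i => (b i : ℝ)) (r:ℝ))) :=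
      le_decRearr_of_lt hvolj
    refine le_trans hval (le_trans ?_ (le_iSup _ (b, r)))
    rw [ratL, if_pos hr0, Set.indicator_of_mem hxmem]
  · refine iSup_le fun p => ?_
    rw [ratL]
    split
    · rename_i hr
      by_cases hxmem : x ∈ Cube (fun i => (p.1 i : ℝ)) (p.2 : ℝ)
      · rw [Set.indicator_of_mem hxmem]
        exact decRearr_le_locMax hr hxmem
      · rw [Set.indicator_of_notMem hxmem]
        exact zero_le
    · exact zero_le

lemma measurable_locMax (lam : ℝ) (hlam : 0 ≤ lam) (u : (Fin n → ℝ) → ℝ≥0∞) :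
    Measurable (locMax lam u) := by
  have : locMax lam u = fun x => ⨆ p : (Fin n → ℚ) × ℚ, ratL lam u p x := by
    funext x; exact locMax_eq lam hlam u x
  rw [this]
  exact Measurable.iSup (fun p => measurable_ratL lam u p)

lemma locMax_smul (lam : ℝ) (c : ℝ≥0) (hc : c ≠ 0) (u : (Fin n → ℝ) → ℝ≥0∞) (x : Fin n → ℝ) :
    locMax lam (fun y => (c:ℝ≥0∞) * u y) x = (c:ℝ≥0∞) * locMax lam u x := by
  unfold locMax
  rw [ENNReal.mul_iSup]
  apply iSup_congr
  intro a
  rw [ENNReal.mul_iSup]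
  apply iSup_congr
  intro h
  rw [ENNReal.mul_iSup]
  apply iSup_congr
  intro hh
  rw [ENNReal.mul_iSup]
  apply iSup_congr
  intro hx
  have hind : Set.indicator (Cube a h) (fun y => (c:ℝ≥0∞) * u y) =
      fun y => (c:ℝ≥0∞) * Set.indicator (Cube a h) u y := by
    funext y
    by_cases hy : y ∈ Cube a h
    · rw [Set.indicator_of_mem hy, Set.indicator_of_mem hy]
    · rw [Set.indicator_of_notMem hy, Set.indicator_of_notMem hy, mul_zero]
  rw [hind, decRearr_smul c hc]


/-! ### The φ inequality -/

lemma rho_le_inv_phi_mul (X : BanachFunctionSpace n) {lam : ℝ} (hlam : 0 ≤ lam)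
    {φ : ℝ≥0∞} (hφ1 : 1 < φ) (hφtop : φ ≠ ⊤) (hφ : φ ≤ phiFn X.ρ lam)
    {u : (Fin n → ℝ) → ℝ≥0∞} (hu : Measurable u) (hutop : X.ρ u ≠ ⊤) :
    X.ρ u ≤ φ⁻¹ * X.ρ (locMax lam u) := by
  rcases eq_or_ne (X.ρ u) 0 with h0 | h0
  · rw [h0]; exact zero_le
  set r := X.ρ u with hr
  have hφ0 : φ ≠ 0 := by intro h; rw [h] at hφ1; exact absurd hφ1 (by simp)
  set c : ℝ≥0 := r.toNNReal⁻¹ with hc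
  have hrnn : r.toNNReal ≠ 0 := by
    simp only [ne_eq, ENNReal.toNNReal_eq_zero_iff]
    push_neg
    exact ⟨h0, hutop⟩
  have hcne : c ≠ 0 := by simp [hc, hrnn]
  have hccoe : (c : ℝ≥0∞) = r⁻¹ := by
    rw [hc, ENNReal.coe_inv hrnn, ENNReal.coe_toNNReal hutop]
  have hnorm : X.ρ (fun x => (c : ℝ≥0∞) * u x) = 1 := by
    rw [X.smul_eq c u hu, hccoe, ← hr, ENNReal.inv_mul_cancel h0 hutop]
  have hphi_le : φ ≤ X.ρ (locMax lam (fun x => (c:ℝ≥0∞) * u x)) := by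
    refine le_trans hφ ?_
    unfold phiFn
    exact iInf_le_of_le (fun x => (c:ℝ≥0∞) * u x)
      (iInf_le_of_le (hu.const_mul _) (iInf_le_of_le hnorm le_rfl))
  have hloc : locMax lam (fun x => (c:ℝ≥0∞) * u x) = fun x => (c:ℝ≥0∞) * locMax lam u x := by
    funext x; exact locMax_smul lam c hcne u x
  rw [hloc, X.smul_eq c _ (measurable_locMax lam hlam u), hccoe] at hphi_le
  -- φ ≤ r⁻¹ * L  ⟹  r ≤ φ⁻¹ * L
  set L := X.ρ (locMax lam u) with hL
  have h1 : φ * r ≤ L := by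
    calc φ * r ≤ (r⁻¹ * L) * r := mul_le_mul_left hphi_le r
      _ = L * (r⁻¹ * r) := by ring
      _ = L := by rw [ENNReal.inv_mul_cancel h0 hutop, mul_one]
  calc r = φ⁻¹ * (φ * r) := by
        rw [← mul_assoc, ENNReal.inv_mul_cancel hφ0 hφtop, one_mul]
    _ ≤ φ⁻¹ * L := mul_le_mul_right h1 _

/-! ### The linearized adjoint operator -/

/-- `opA f a s E = ∑ i (∫_{E i} f / |Q_i|) χ_{Q_i}` where `Q_i = Cube (a i) (s i)`. -/
noncomputable def opA {m : ℕ} (f : (Fin n → ℝ) → ℝ≥0∞) (a : Fin m → Fin n → ℝ)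
    (s : Fin m → ℝ) (E : Fin m → Set (Fin n → ℝ)) : (Fin n → ℝ) → ℝ≥0∞ :=
  fun x => ∑ i : Fin m, Set.indicator (Cube (a i) (s i))
    (fun _ => (∫⁻ y in E i, f y) / volume (Cube (a i) (s i))) x

lemma measurable_opA {m : ℕ} (f : (Fin n → ℝ) → ℝ≥0∞) (a : Fin m → Fin n → ℝ)
    (s : Fin m → ℝ) (E : Fin m → Set (Fin n → ℝ)) : Measurable (opA f a s E) :=
  Finset.measurable_sum _ (fun i _ => measurable_const.indicator (measurableSet_cube _ _))

lemma opA_le_maximal {m : ℕ} (f : (Fin n → ℝ) → ℝ≥0∞) (a : Fin m → Fin n → ℝ)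
    (s : Fin m → ℝ) (E : Fin m → Set (Fin n → ℝ)) (hs : ∀ i, 0 < s i)
    (hEsub : ∀ i, E i ⊆ Cube (a i) (s i)) (x : Fin n → ℝ) :
    opA f a s E x ≤ (m : ℝ≥0∞) * hlMaximal f x := by
  have hterm : ∀ i : Fin m, Set.indicator (Cube (a i) (s i))
      (fun _ => (∫⁻ y in E i, f y) / volume (Cube (a i) (s i))) x ≤ hlMaximal f x := by
    intro i
    by_cases hx : x ∈ Cube (a i) (s i)
    · rw [Set.indicator_of_mem hx]
      refine le_trans ?_ (avg_le_hlMaximal (hs i) hx)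
      unfold avg
      exact ENNReal.div_le_div
        (lintegral_mono' (Measure.restrict_mono (hEsub i) le_rfl) le_rfl) le_rfl
    · rw [Set.indicator_of_notMem hx]; exact zero_le
  calc opA f a s E x ≤ ∑ _i : Fin m, hlMaximal f x := Finset.sum_le_sum (fun i _ => hterm i)
    _ = (m : ℝ≥0∞) * hlMaximal f x := by
      rw [Finset.sum_const, Finset.card_univ, Fintype.card_fin, nsmul_eq_mul]


/-! ### Geometry of cubes -/

section Geometry

variable {b : Fin n → ℝ} {r : ℝ} {aa : Fin n → ℝ} {s γ : ℝ}

/-- A cube is contained in its dilation. -/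
lemma subset_dilated (hs : 0 < s) (hγ : 1 ≤ γ) :
    Cube aa s ⊆ Cube (fun k => aa k - s/γ) (s*(1+2/γ)) := by
  have hγ0 : (0:ℝ) < γ := lt_of_lt_of_le one_pos hγ
  apply cube_subset_cube
  · intro k
    have : 0 ≤ s/γ := le_of_lt (div_pos hs hγ0)
    linarith
  · intro k
    have h1 : s*(1+2/γ) = s + 2*(s/γ) := by field_simp
    have : 0 ≤ s/γ := le_of_lt (div_pos hs hγ0)
    linarith

/-- GEO1: if `y` lies in a big cube `Q` and `x, y` lie in a common cube of side `r`,
with `γ r ≤ s`, then `x` lies in the dilated `Q`. -/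
lemma mem_dilated_of_big (hγ : 1 ≤ γ) (hbig : γ * r ≤ s)
    {x y : Fin n → ℝ} (hxR : x ∈ Cube b r) (hyR : y ∈ Cube b r)
    (hyQ : y ∈ Cube aa s) : x ∈ Cube (fun k => aa k - s/γ) (s*(1+2/γ)) := by
  have hγ0 : (0:ℝ) < γ := lt_of_lt_of_le one_pos hγ
  have hrs : r ≤ s/γ := (le_div_iff₀ hγ0).mpr (by linarith [mul_comm γ r])
  rw [mem_cube] at hxR hyR hyQ ⊢
  intro k
  obtain ⟨hx1, hx2⟩ := hxR k
  obtain ⟨hy1, hy2⟩ := hyR k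
  obtain ⟨hq1, hq2⟩ := hyQ k
  constructor
  · linarith
  · have h1 : s*(1+2/γ) = s + 2*(s/γ) := by field_simp
    linarith

/-- GEO2: a small cube touching `R` is inside the `(2γ+1)`-dilation of `R`. -/
lemma small_subset_dilated (hγ : 0 < γ) (hsmall : s ≤ γ * r)
    (hne : (Cube aa s ∩ Cube b r).Nonempty) :
    Cube aa s ⊆ Cube (fun k => b k - γ*r) ((2*γ+1)*r) := by
  obtain ⟨z, hz1, hz2⟩ := hne
  rw [mem_cube] at hz1 hz2
  apply cube_subset_cube
  · intro k
    obtain ⟨h1, h2⟩ := hz1 k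
    obtain ⟨h3, h4⟩ := hz2 k
    linarith
  · intro k
    obtain ⟨h1, h2⟩ := hz1 k
    obtain ⟨h3, h4⟩ := hz2 k
    linarith

/-- GEO3: `R` is inside its own `(2γ+1)`-dilation. -/
lemma self_subset_dilated (hγ : 0 < γ) (hr : 0 < r) :
    Cube b r ⊆ Cube (fun k => b k - γ*r) ((2*γ+1)*r) := by
  apply cube_subset_cube
  · intro k; nlinarith
  · intro k; nlinarith

end Geometry

/-! ### The key pointwise estimate -/

lemma div_dilate {I V Θ : ℝ≥0∞} (h0 : Θ ≠ 0) (ht : Θ ≠ ⊤) :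
    Θ * (I / (Θ * V)) = I / V := by
  rw [div_eq_mul_inv, ENNReal.mul_inv (Or.inl h0) (Or.inl ht), div_eq_mul_inv]
  have : Θ * (I * (Θ⁻¹ * V⁻¹)) = (Θ * Θ⁻¹) * (I * V⁻¹) := by ring
  rw [this, ENNReal.mul_inv_cancel h0 ht, one_mul]

lemma key_pointwise {m : ℕ} (f : (Fin n → ℝ) → ℝ≥0∞) (hf : Measurable f)
    (a : Fin m → Fin n → ℝ) (s : Fin m → ℝ) (E : Fin m → Set (Fin n → ℝ))
    (hs : ∀ i, 0 < s i) (hE : ∀ i, MeasurableSet (E i))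
    (hEsub : ∀ i, E i ⊆ Cube (a i) (s i)) (hdisj : Pairwise (Function.onFun Disjoint E))
    {lam : ℝ} (hlam0 : 0 < lam) {γ : ℝ} (hγ : 1 ≤ γ) (x : Fin n → ℝ) :
    locMax lam (opA f a s E) x ≤
      ENNReal.ofReal ((1 + 2/γ)^n) *
        opA f (fun i k => a i k - (s i)/γ) (fun i => s i * (1 + 2/γ)) E x +
      ENNReal.ofReal ((2*γ+1)^n * (2/lam)) * hlMaximal f x := by
  classical
  have hγ0 : (0:ℝ) < γ := lt_of_lt_of_le one_pos hγ
  have h2γ : (0:ℝ) < 2/γ := by positivity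
  have h2γ1 : (0:ℝ) < 2*γ+1 := by linarith
  set Θ : ℝ≥0∞ := ENNReal.ofReal ((1 + 2/γ)^n) with hΘ
  set C2 : ℝ≥0∞ := ENNReal.ofReal ((2*γ+1)^n) with hC2
  set A : ℝ≥0∞ := ENNReal.ofReal ((2*γ+1)^n * (2/lam)) with hA
  have hΘ0 : Θ ≠ 0 := by
    rw [hΘ]; simp only [ne_eq, ENNReal.ofReal_eq_zero, not_le]; positivity
  have hΘtop : Θ ≠ ⊤ := ENNReal.ofReal_ne_top
  have hA0 : A ≠ 0 := by
    rw [hA]; simp only [ne_eq, ENNReal.ofReal_eq_zero, not_le]; positivity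
  have hAtop : A ≠ ⊤ := ENNReal.ofReal_ne_top
  have hAsplit : A = C2 * ENNReal.ofReal (2/lam) := by
    rw [hA, hC2, ← ENNReal.ofReal_mul (by positivity)]
  set T1 : ℝ≥0∞ := Θ * opA f (fun i k => a i k - (s i)/γ) (fun i => s i * (1 + 2/γ)) E x
    with hT1
  set β : ℝ≥0∞ := A * hlMaximal f x with hβ
  -- it suffices to bound each quantile
  unfold locMax
  refine iSup_le fun b => iSup_le fun r => iSup_le fun hr => iSup_le fun hxR => ?_
  refine decRearr_le ?_
  -- STEP 1 : big cubes
  have step1 : ∀ y ∈ Cube b r, (∑ i ∈ Finset.univ.filter (fun i => γ * r ≤ s i),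
      Set.indicator (Cube (a i) (s i))
        (fun _ => (∫⁻ z in E i, f z) / volume (Cube (a i) (s i))) y) ≤ T1 := by
    intro y hy
    have hterm : ∀ i ∈ Finset.univ.filter (fun i => γ * r ≤ s i),
        Set.indicator (Cube (a i) (s i))
          (fun _ => (∫⁻ z in E i, f z) / volume (Cube (a i) (s i))) y ≤
        Θ * Set.indicator (Cube (fun k => a i k - (s i)/γ) ((s i) * (1 + 2/γ)))
          (fun _ => (∫⁻ z in E i, f z) / volume (Cube (fun k => a i k - (s i)/γ)
            ((s i) * (1 + 2/γ)))) x := by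
      intro i hi
      rw [Finset.mem_filter] at hi
      by_cases hyQ : y ∈ Cube (a i) (s i)
      · rw [Set.indicator_of_mem hyQ]
        have hxQ' := mem_dilated_of_big hγ hi.2 hxR hy hyQ
        rw [Set.indicator_of_mem hxQ']
        have hvol' : volume (Cube (fun k => a i k - (s i)/γ) ((s i) * (1 + 2/γ))) =
            Θ * volume (Cube (a i) (s i)) := by
          rw [volume_cube, volume_cube, hΘ]
          rw [ENNReal.ofReal_mul (le_of_lt (hs i)), mul_pow,
            ENNReal.ofReal_pow (show (0:ℝ) ≤ 1 + 2/γ by positivity)]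
          ring
        rw [hvol', div_dilate hΘ0 hΘtop]
      · rw [Set.indicator_of_notMem hyQ]
        exact zero_le
    calc (∑ i ∈ Finset.univ.filter (fun i => γ * r ≤ s i),
        Set.indicator (Cube (a i) (s i))
          (fun _ => (∫⁻ z in E i, f z) / volume (Cube (a i) (s i))) y)
        ≤ ∑ i ∈ Finset.univ.filter (fun i => γ * r ≤ s i),
          Θ * Set.indicator (Cube (fun k => a i k - (s i)/γ) ((s i) * (1 + 2/γ)))
            (fun _ => (∫⁻ z in E i, f z) / volume (Cube (fun k => a i k - (s i)/γ)
              ((s i) * (1 + 2/γ)))) x := Finset.sum_le_sum hterm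
      _ ≤ ∑ i : Fin m, Θ * Set.indicator (Cube (fun k => a i k - (s i)/γ)
            ((s i) * (1 + 2/γ)))
            (fun _ => (∫⁻ z in E i, f z) / volume (Cube (fun k => a i k - (s i)/γ)
              ((s i) * (1 + 2/γ)))) x :=
          Finset.sum_le_sum_of_subset (Finset.filter_subset _ _)
      _ = T1 := by rw [hT1, opA, Finset.mul_sum]
  -- STEP 2 : small cubes, integral bound
  have step2 : (∫⁻ y in Cube b r, ∑ i ∈ Finset.univ.filter (fun i => ¬ γ * r ≤ s i),
      Set.indicator (Cube (a i) (s i))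
        (fun _ => (∫⁻ z in E i, f z) / volume (Cube (a i) (s i))) y) ≤
      C2 * (hlMaximal f x * volume (Cube b r)) := by
    rw [lintegral_finset_sum _
      (fun i _ => measurable_const.indicator (measurableSet_cube _ _))]
    -- each term : w i * volume (Q i ∩ R)
    have hterm : ∀ i ∈ Finset.univ.filter (fun i => ¬ γ * r ≤ s i),
        (∫⁻ y in Cube b r, Set.indicator (Cube (a i) (s i))
          (fun _ => (∫⁻ z in E i, f z) / volume (Cube (a i) (s i))) y) =
        ((∫⁻ z in E i, f z) / volume (Cube (a i) (s i))) *
          volume (Cube (a i) (s i) ∩ Cube b r) := by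
      intro i _
      rw [lintegral_indicator (measurableSet_cube _ _), setLIntegral_const,
        Measure.restrict_apply (measurableSet_cube _ _)]
    rw [Finset.sum_congr rfl hterm]
    -- bound by the integral of f over the union of E i inside the dilated cube
    set Rd := Cube (fun k => b k - γ*r) ((2*γ+1)*r) with hRd
    have hbound : ∀ i ∈ (Finset.univ.filter (fun i => ¬ γ * r ≤ s i)).filter
        (fun i => (Cube (a i) (s i) ∩ Cube b r).Nonempty),
        ((∫⁻ z in E i, f z) / volume (Cube (a i) (s i))) *
          volume (Cube (a i) (s i) ∩ Cube b r) ≤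
        (volume.withDensity f) (E i) := by
      intro i hi
      rw [withDensity_apply f (hE i)]
      calc ((∫⁻ z in E i, f z) / volume (Cube (a i) (s i))) *
            volume (Cube (a i) (s i) ∩ Cube b r)
          ≤ ((∫⁻ z in E i, f z) / volume (Cube (a i) (s i))) *
            volume (Cube (a i) (s i)) :=
            mul_le_mul_right (measure_mono Set.inter_subset_left) _
        _ = ∫⁻ z in E i, f z :=
            ENNReal.div_mul_cancel (volume_cube_ne_zero _ (hs i)) (volume_cube_ne_top _ _)
    -- drop the non-touching terms
    have hdrop : (∑ i ∈ Finset.univ.filter (fun i => ¬ γ * r ≤ s i),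
        ((∫⁻ z in E i, f z) / volume (Cube (a i) (s i))) *
          volume (Cube (a i) (s i) ∩ Cube b r)) =
        ∑ i ∈ (Finset.univ.filter (fun i => ¬ γ * r ≤ s i)).filter
          (fun i => (Cube (a i) (s i) ∩ Cube b r).Nonempty),
        ((∫⁻ z in E i, f z) / volume (Cube (a i) (s i))) *
          volume (Cube (a i) (s i) ∩ Cube b r) := by
      symm
      apply Finset.sum_filter_of_ne
      intro i _ hne
      by_contra hcon
      rw [Set.not_nonempty_iff_eq_empty] at hcon
      rw [hcon, measure_empty, mul_zero] at hne
      exact hne rfl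
    rw [hdrop]
    calc (∑ i ∈ (Finset.univ.filter (fun i => ¬ γ * r ≤ s i)).filter
          (fun i => (Cube (a i) (s i) ∩ Cube b r).Nonempty),
        ((∫⁻ z in E i, f z) / volume (Cube (a i) (s i))) *
          volume (Cube (a i) (s i) ∩ Cube b r))
        ≤ ∑ i ∈ (Finset.univ.filter (fun i => ¬ γ * r ≤ s i)).filter
          (fun i => (Cube (a i) (s i) ∩ Cube b r).Nonempty),
          (volume.withDensity f) (E i) := Finset.sum_le_sum hbound
      _ = (volume.withDensity f) (⋃ i ∈ (Finset.univ.filter (fun i => ¬ γ * r ≤ s i)).filter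
          (fun i => (Cube (a i) (s i) ∩ Cube b r).Nonempty), E i) := by
          have hpw : Set.PairwiseDisjoint
              (↑((Finset.univ.filter (fun i => ¬ γ * r ≤ s i)).filter
                (fun i => (Cube (a i) (s i) ∩ Cube b r).Nonempty)) : Set (Fin m)) E :=
            fun i _ j _ hij => hdisj hij
          exact (measure_biUnion_finset hpw (fun i _ => hE i)).symm
      _ ≤ (volume.withDensity f) Rd := by
          apply measure_mono
          refine Set.iUnion₂_subset fun i hi => ?_
          rw [Finset.mem_filter] at hi
          obtain ⟨hi1, hi2⟩ := hi
          rw [Finset.mem_filter] at hi1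
          refine (hEsub i).trans ?_
          exact small_subset_dilated hγ0 (le_of_not_ge hi1.2) hi2
      _ = ∫⁻ z in Rd, f z := withDensity_apply f (measurableSet_cube _ _)
      _ ≤ hlMaximal f x * volume Rd := by
          have hside : (0:ℝ) < (2*γ+1)*r := by positivity
          have hxRd : x ∈ Rd := self_subset_dilated hγ0 hr hxR
          have havg := avg_le_hlMaximal (g := f) hside hxRd
          unfold avg at havg
          rw [← ENNReal.div_le_iff_le_mul
            (Or.inl (volume_cube_ne_zero _ hside)) (Or.inl (volume_cube_ne_top _ _))]
          exact havg
      _ = C2 * (hlMaximal f x * volume (Cube b r)) := by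
          rw [hRd, volume_cube, volume_cube, hC2]
          rw [ENNReal.ofReal_mul (by positivity), mul_pow,
            ← ENNReal.ofReal_pow (by positivity)]
          ring
  -- STEP 3 : Chebyshev and conclusion
  -- the sum splits into big and small parts
  have hsplit : ∀ y, opA f a s E y =
      (∑ i ∈ Finset.univ.filter (fun i => γ * r ≤ s i),
        Set.indicator (Cube (a i) (s i))
          (fun _ => (∫⁻ z in E i, f z) / volume (Cube (a i) (s i))) y) +
      (∑ i ∈ Finset.univ.filter (fun i => ¬ γ * r ≤ s i),
        Set.indicator (Cube (a i) (s i))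
          (fun _ => (∫⁻ z in E i, f z) / volume (Cube (a i) (s i))) y) := by
    intro y
    rw [opA, Finset.sum_filter_add_sum_filter_not]
  set g2 : (Fin n → ℝ) → ℝ≥0∞ := Set.indicator (Cube b r)
      (fun y => ∑ i ∈ Finset.univ.filter (fun i => ¬ γ * r ≤ s i),
        Set.indicator (Cube (a i) (s i))
          (fun _ => (∫⁻ z in E i, f z) / volume (Cube (a i) (s i))) y) with hg2
  have hg2meas : Measurable g2 := by
    rw [hg2]
    exact (Finset.measurable_sum _ (fun i _ =>
      measurable_const.indicator (measurableSet_cube _ _))).indicator (measurableSet_cube _ _)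
  have hsubset : {y | T1 + β < Set.indicator (Cube b r) (opA f a s E) y} ⊆
      {y | β < g2 y} := by
    intro y hy
    simp only [Set.mem_setOf_eq] at hy ⊢
    by_cases hyR : y ∈ Cube b r
    · rw [Set.indicator_of_mem hyR] at hy
      rw [hg2, Set.indicator_of_mem hyR]
      by_contra hcon
      rw [not_lt] at hcon
      have : opA f a s E y ≤ T1 + β := by
        rw [hsplit y]
        exact add_le_add (step1 y hyR) hcon
      exact absurd hy (not_lt.mpr this)
    · rw [Set.indicator_of_notMem hyR] at hy
      exact absurd hy (by simp)
  have hg2int : (∫⁻ y, g2 y) ≤ C2 * (hlMaximal f x * volume (Cube b r)) := by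
    rw [hg2]
    rw [lintegral_indicator (measurableSet_cube _ _)]
    exact step2
  -- final volume bound
  have hfinal : volume {y | T1 + β < Set.indicator (Cube b r) (opA f a s E) y} ≤
      ENNReal.ofReal lam * volume (Cube b r) := by
    refine le_trans (measure_mono hsubset) ?_
    rcases eq_or_ne (hlMaximal f x) ⊤ with htop | htop
    · have : β = ⊤ := by rw [hβ, htop, ENNReal.mul_top hA0]
      have hempty : {y | β < g2 y} = ∅ := by
        ext y; simp [this]
      rw [hempty, measure_empty]
      exact zero_le
    rcases eq_or_ne (hlMaximal f x) 0 with hzero | hzero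
    · -- integral of g2 is zero
      have hint0 : (∫⁻ y, g2 y) = 0 := by
        refine le_antisymm ?_ (zero_le)
        refine le_trans hg2int ?_
        rw [hzero]; simp
      have hae := (lintegral_eq_zero_iff hg2meas).mp hint0
      have hsub2 : {y | β < g2 y} ⊆ {y | g2 y ≠ 0} := by
        intro y hy
        simp only [Set.mem_setOf_eq] at hy ⊢
        exact fun h0 => by simp [h0] at hy
      refine le_trans (measure_mono hsub2) (le_trans (le_of_eq ?_) (zero_le))
      exact hae
    · -- Chebyshev
      have hβ0 : β ≠ 0 := by
        rw [hβ]
        exact mul_ne_zero hA0 hzero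
      have hβtop : β ≠ ⊤ := ENNReal.mul_ne_top hAtop htop
      have hcheb : β * volume {y | β ≤ g2 y} ≤ ∫⁻ y, g2 y :=
        mul_meas_ge_le_lintegral₀ hg2meas.aemeasurable β
      have hv1 : volume {y | β < g2 y} ≤ volume {y | β ≤ g2 y} :=
        measure_mono (Set.setOf_subset_setOf.mpr (fun y => le_of_lt))
      have hv2 : volume {y | β ≤ g2 y} ≤ (∫⁻ y, g2 y) / β := by
        rw [ENNReal.le_div_iff_mul_le (Or.inl hβ0) (Or.inl hβtop)]
        rw [mul_comm]
        exact hcheb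
      refine le_trans hv1 (le_trans hv2 ?_)
      refine le_trans (ENNReal.div_le_div hg2int le_rfl) ?_
      -- (C2 * (Mf x * vol R)) / (C2 * ofReal (2/lam) * Mf x) = vol R * ofReal (lam/2)
      have hrw : C2 * (hlMaximal f x * volume (Cube b r)) =
          (C2 * hlMaximal f x) * volume (Cube b r) := by ring
      have hrwβ : β = (C2 * hlMaximal f x) * ENNReal.ofReal (2/lam) := by
        rw [hβ, hAsplit]; ring
      rw [hrw, hrwβ]
      have hk0 : C2 * hlMaximal f x ≠ 0 := by
        apply mul_ne_zero ?_ hzero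
        rw [hC2]; simp only [ne_eq, ENNReal.ofReal_eq_zero, not_le]; positivity
      have hktop : C2 * hlMaximal f x ≠ ⊤ := ENNReal.mul_ne_top ENNReal.ofReal_ne_top htop
      rw [ENNReal.mul_div_mul_left _ _ hk0 hktop]
      rw [div_eq_mul_inv, ← ENNReal.ofReal_inv_of_pos (by positivity)]
      have hinv : (2/lam)⁻¹ = lam/2 := by
        field_simp
      rw [hinv]
      calc volume (Cube b r) * ENNReal.ofReal (lam/2)
          ≤ volume (Cube b r) * ENNReal.ofReal lam :=
            mul_le_mul_right (ENNReal.ofReal_le_ofReal (by linarith)) _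
        _ = ENNReal.ofReal lam * volume (Cube b r) := mul_comm _ _
  exact hfinal


/-! ### The uniform bound on the adjoint operators -/

noncomputable def Bsup (X : BanachFunctionSpace n) (m : ℕ) : ℝ≥0∞ :=
  ⨆ (f : (Fin n → ℝ) → ℝ≥0∞) (_ : Measurable f) (_ : X.ρ f ≤ 1)
    (a : Fin m → Fin n → ℝ) (s : Fin m → ℝ) (_ : ∀ i, 0 < s i)
    (E : Fin m → Set (Fin n → ℝ)) (_ : ∀ i, MeasurableSet (E i))
    (_ : ∀ i, E i ⊆ Cube (a i) (s i)) (_ : Pairwise (Function.onFun Disjoint E)),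
    X.ρ (opA f a s E)

lemma le_Bsup (X : BanachFunctionSpace n) {m : ℕ} {f : (Fin n → ℝ) → ℝ≥0∞}
    {a : Fin m → Fin n → ℝ} {s : Fin m → ℝ} {E : Fin m → Set (Fin n → ℝ)}
    (hf : Measurable f) (hf1 : X.ρ f ≤ 1) (hs : ∀ i, 0 < s i)
    (hE : ∀ i, MeasurableSet (E i)) (hEsub : ∀ i, E i ⊆ Cube (a i) (s i))
    (hdisj : Pairwise (Function.onFun Disjoint E)) :
    X.ρ (opA f a s E) ≤ Bsup X m := by
  apply le_iSup_of_le f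
  apply le_iSup_of_le hf
  apply le_iSup_of_le hf1
  apply le_iSup_of_le a
  apply le_iSup_of_le s
  apply le_iSup_of_le hs
  apply le_iSup_of_le E
  apply le_iSup_of_le hE
  apply le_iSup_of_le hEsub
  exact le_iSup_of_le hdisj le_rfl

lemma Bsup_le (X : BanachFunctionSpace n) (m : ℕ) (K : ℝ≥0∞)
    (h : ∀ (f : (Fin n → ℝ) → ℝ≥0∞) (a : Fin m → Fin n → ℝ) (s : Fin m → ℝ)
      (E : Fin m → Set (Fin n → ℝ)), Measurable f → X.ρ f ≤ 1 → (∀ i, 0 < s i) →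
      (∀ i, MeasurableSet (E i)) → (∀ i, E i ⊆ Cube (a i) (s i)) →
      Pairwise (Function.onFun Disjoint E) → X.ρ (opA f a s E) ≤ K) : Bsup X m ≤ K :=
  iSup_le fun f => iSup_le fun hf => iSup_le fun hf1 => iSup_le fun a => iSup_le fun s =>
    iSup_le fun hs => iSup_le fun E => iSup_le fun hE => iSup_le fun hEsub =>
    iSup_le fun hdisj => h f a s E hf hf1 hs hE hEsub hdisj

lemma rho_opA_le (X : BanachFunctionSpace n) (CM : ℝ≥0)
    (hM : ∀ f, Measurable f → X.ρ (hlMaximal f) ≤ (CM : ℝ≥0∞) * X.ρ f)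
    {m : ℕ} {f : (Fin n → ℝ) → ℝ≥0∞} {a : Fin m → Fin n → ℝ} {s : Fin m → ℝ}
    {E : Fin m → Set (Fin n → ℝ)} (hf : Measurable f) (hf1 : X.ρ f ≤ 1)
    (hs : ∀ i, 0 < s i) (hEsub : ∀ i, E i ⊆ Cube (a i) (s i)) :
    X.ρ (opA f a s E) ≤ (m : ℝ≥0∞) * CM := by
  have h1 : ∀ x, opA f a s E x ≤ (((m : ℝ≥0)) : ℝ≥0∞) * hlMaximal f x := by
    intro x
    have := opA_le_maximal f a s E hs hEsub x
    rwa [show ((m:ℝ≥0):ℝ≥0∞) = (m : ℝ≥0∞) by exact_mod_cast rfl]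
  calc X.ρ (opA f a s E)
      ≤ X.ρ (fun x => ((m : ℝ≥0) : ℝ≥0∞) * hlMaximal f x) :=
        X.mono _ _ (measurable_opA f a s E)
          ((measurable_hlMaximal f).const_mul _) (Filter.Eventually.of_forall h1)
    _ = ((m : ℝ≥0) : ℝ≥0∞) * X.ρ (hlMaximal f) := X.smul_eq _ _ (measurable_hlMaximal f)
    _ ≤ ((m : ℝ≥0) : ℝ≥0∞) * ((CM : ℝ≥0∞) * X.ρ f) := mul_le_mul_right (hM f hf) _
    _ ≤ ((m : ℝ≥0) : ℝ≥0∞) * ((CM : ℝ≥0∞) * 1) := by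
        exact mul_le_mul_right (mul_le_mul_right hf1 _) _
    _ = (m : ℝ≥0∞) * CM := by
        rw [mul_one]
        norm_cast

lemma Bsup_ne_top (X : BanachFunctionSpace n) (CM : ℝ≥0)
    (hM : ∀ f, Measurable f → X.ρ (hlMaximal f) ≤ (CM : ℝ≥0∞) * X.ρ f) (m : ℕ) :
    Bsup X m ≠ ⊤ := by
  have : Bsup X m ≤ (m : ℝ≥0∞) * CM :=
    Bsup_le X m _ (fun f a s E hf hf1 hs hE hEsub hdisj =>
      rho_opA_le X CM hM hf hf1 hs hEsub)
  exact ne_top_of_le_ne_top (by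
    exact ENNReal.mul_ne_top (ENNReal.natCast_ne_top m) ENNReal.coe_ne_top) this

lemma Bsup_recursion (X : BanachFunctionSpace n) {lam : ℝ} (hlam0 : 0 < lam)
    {φ : ℝ≥0∞} (hφ1 : 1 < φ) (hφtop : φ ≠ ⊤) (hφ : φ ≤ phiFn X.ρ lam)
    {γ : ℝ} (hγ : 1 ≤ γ) (CM : ℝ≥0)
    (hM : ∀ f, Measurable f → X.ρ (hlMaximal f) ≤ (CM : ℝ≥0∞) * X.ρ f) (m : ℕ) :
    Bsup X m ≤ (φ⁻¹ * ENNReal.ofReal ((1+2/γ)^n)) * Bsup X m +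
      φ⁻¹ * (ENNReal.ofReal ((2*γ+1)^n * (2/lam)) * CM) := by
  apply Bsup_le
  intro f a s E hf hf1 hs hE hEsub hdisj
  have hγ0 : (0:ℝ) < γ := lt_of_lt_of_le one_pos hγ
  set Θr : ℝ := (1+2/γ)^n with hΘr
  set Ar : ℝ := (2*γ+1)^n * (2/lam) with hAr
  have hΘrpos : 0 ≤ Θr := by positivity
  have hArpos : 0 ≤ Ar := by
    have : (0:ℝ) < 2*γ+1 := by linarith
    positivity
  -- finiteness
  have hufin : X.ρ (opA f a s E) ≠ ⊤ :=
    ne_top_of_le_ne_top (ENNReal.mul_ne_top (ENNReal.natCast_ne_top m) ENNReal.coe_ne_top)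
      (rho_opA_le X CM hM hf hf1 hs hEsub)
  -- the φ inequality
  have h5 := rho_le_inv_phi_mul X hlam0.le hφ1 hφtop hφ
    (measurable_opA f a s E) hufin
  -- pointwise key bound
  have hkey := key_pointwise f hf a s E hs hE hEsub hdisj hlam0 hγ
  -- dilated family data
  have hs' : ∀ i, 0 < s i * (1 + 2/γ) := by
    intro i
    have : (0:ℝ) < 2/γ := by positivity
    have := hs i
    nlinarith
  have hEsub' : ∀ i, E i ⊆ Cube (fun k => a i k - (s i)/γ) (s i * (1 + 2/γ)) :=
    fun i => (hEsub i).trans (subset_dilated (hs i) hγ)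
  -- monotonicity + additivity
  have hmeas1 : Measurable (fun x => ENNReal.ofReal Θr *
      opA f (fun i k => a i k - (s i)/γ) (fun i => s i * (1 + 2/γ)) E x) :=
    (measurable_opA f _ _ E).const_mul _
  have hmeas2 : Measurable (fun x => ENNReal.ofReal Ar * hlMaximal f x) :=
    (measurable_hlMaximal f).const_mul _
  have hmono : X.ρ (locMax lam (opA f a s E)) ≤
      X.ρ (fun x => ENNReal.ofReal Θr *
        opA f (fun i k => a i k - (s i)/γ) (fun i => s i * (1 + 2/γ)) E x +
        ENNReal.ofReal Ar * hlMaximal f x) :=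
    X.mono _ _ (measurable_locMax lam hlam0.le _) (hmeas1.add hmeas2)
      (Filter.Eventually.of_forall (fun x => hkey x))
  have hadd := X.add_le _ _ hmeas1 hmeas2
  -- pull out the constants (as ℝ≥0 scalars)
  have hofReal1 : (((Real.toNNReal Θr) : ℝ≥0) : ℝ≥0∞) = ENNReal.ofReal Θr := rfl
  have hofReal2 : (((Real.toNNReal Ar) : ℝ≥0) : ℝ≥0∞) = ENNReal.ofReal Ar := rfl
  have hsmul1 : X.ρ (fun x => ENNReal.ofReal Θr *
      opA f (fun i k => a i k - (s i)/γ) (fun i => s i * (1 + 2/γ)) E x) =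
      ENNReal.ofReal Θr *
        X.ρ (opA f (fun i k => a i k - (s i)/γ) (fun i => s i * (1 + 2/γ)) E) := by
    rw [← hofReal1]
    exact X.smul_eq _ _ (measurable_opA f _ _ E)
  have hsmul2 : X.ρ (fun x => ENNReal.ofReal Ar * hlMaximal f x) =
      ENNReal.ofReal Ar * X.ρ (hlMaximal f) := by
    rw [← hofReal2]
    exact X.smul_eq _ _ (measurable_hlMaximal f)
  have hdil : X.ρ (opA f (fun i k => a i k - (s i)/γ) (fun i => s i * (1 + 2/γ)) E) ≤
      Bsup X m :=
    le_Bsup X hf hf1 hs' (fun i => hE i) hEsub' hdisj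
  have hMf : X.ρ (hlMaximal f) ≤ (CM : ℝ≥0∞) := by
    refine le_trans (hM f hf) ?_
    calc (CM : ℝ≥0∞) * X.ρ f ≤ (CM : ℝ≥0∞) * 1 := mul_le_mul_right hf1 _
      _ = CM := mul_one _
  calc X.ρ (opA f a s E) ≤ φ⁻¹ * X.ρ (locMax lam (opA f a s E)) := h5
    _ ≤ φ⁻¹ * (X.ρ (fun x => ENNReal.ofReal Θr *
          opA f (fun i k => a i k - (s i)/γ) (fun i => s i * (1 + 2/γ)) E x) +
        X.ρ (fun x => ENNReal.ofReal Ar * hlMaximal f x)) :=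
        mul_le_mul_right (le_trans hmono hadd) _
    _ ≤ φ⁻¹ * (ENNReal.ofReal Θr * Bsup X m + ENNReal.ofReal Ar * CM) := by
        refine mul_le_mul_right ?_ _
        rw [hsmul1, hsmul2]
        exact add_le_add (mul_le_mul_right hdil _) (mul_le_mul_right hMf _)
    _ = (φ⁻¹ * ENNReal.ofReal Θr) * Bsup X m + φ⁻¹ * (ENNReal.ofReal Ar * CM) := by
        rw [mul_add, mul_assoc]

/-- Absorption in `ℝ≥0∞`. -/
lemma absorb {B q d : ℝ≥0∞} (hB : B ≠ ⊤) (hq : q < 1) (hd : d ≠ ⊤)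
    (h : B ≤ q * B + d) : B ≤ ENNReal.ofReal (d.toReal / (1 - q.toReal)) := by
  have hqtop : q ≠ ⊤ := (hq.trans_le le_top).ne
  have hq1 : q.toReal < 1 := by
    have := (ENNReal.toReal_lt_toReal hqtop (by simp : (1:ℝ≥0∞) ≠ ⊤)).mpr hq
    simpa using this
  have h1q : 0 < 1 - q.toReal := by linarith
  have hfin : q * B + d ≠ ⊤ :=
    ENNReal.add_ne_top.mpr ⟨ENNReal.mul_ne_top hqtop hB, hd⟩
  have hreal : B.toReal ≤ q.toReal * B.toReal + d.toReal := by
    have := ENNReal.toReal_mono hfin h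
    rwa [ENNReal.toReal_add (ENNReal.mul_ne_top hqtop hB) hd, ENNReal.toReal_mul] at this
  have hfinal : B.toReal ≤ d.toReal / (1 - q.toReal) := by
    rw [le_div_iff₀ h1q]
    nlinarith
  calc B = ENNReal.ofReal B.toReal := (ENNReal.ofReal_toReal hB).symm
    _ ≤ ENNReal.ofReal (d.toReal / (1 - q.toReal)) := ENNReal.ofReal_le_ofReal hfinal


/-! ### Linearization of the maximal pairing -/

lemma one_add_pow_le (n : ℕ) {ε : ℝ} (h0 : 0 ≤ ε) (h1 : ε ≤ 1) :
    (1+ε)^n ≤ 1 + 3^n * ε := by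
  induction n with
  | zero => simpa using h0
  | succ k ih =>
    have h3 : (1:ℝ) ≤ 3^k := one_le_pow₀ (by norm_num)
    calc (1+ε)^(k+1) = (1+ε)^k * (1+ε) := by ring
      _ ≤ (1 + 3^k * ε) * (1+ε) := by nlinarith
      _ = 1 + (1 + 3^k + 3^k * ε) * ε := by ring
      _ ≤ 1 + 3^(k+1) * ε := by
        have h4 : (3:ℝ)^k * ε ≤ 3^k := by nlinarith
        have h5 : (1 + 3^k + 3^k*ε ) ≤ 3 * 3^k := by nlinarith
        have h6 : (1 + 3^k + 3^k*ε) * ε ≤ (3*3^k) * ε := mul_le_mul_of_nonneg_right h5 h0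
        have h7 : (3:ℝ)^(k+1) = 3 * 3^k := by ring
        nlinarith

lemma pairing (X : BanachFunctionSpace n) (K : ℝ≥0∞) (hK0 : K ≠ 0) (hKtop : K ≠ ⊤)
    (hBsup : ∀ m : ℕ, Bsup X m ≤ K)
    (g fl : (Fin n → ℝ) → ℝ≥0∞) (hg : Measurable g) (hfl : Measurable fl)
    (hfl1 : X.ρ fl ≤ 1) :
    (∫⁻ x, hlMaximal g x * fl x) ≤ K * assocNorm X.ρ g := by
  classical
  obtain ⟨e, he⟩ := exists_surjective_nat ((Fin n → ℚ) × ℚ)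
  set v : ℕ → (Fin n → ℝ) → ℝ≥0∞ := fun k => ratM g (e k) with hv
  have hvmeas : ∀ k, Measurable (v k) := fun k => measurable_ratM g (e k)
  have hMg : ∀ x, hlMaximal g x = ⨆ k : ℕ, v k x := by
    intro x
    rw [hlMaximal_eq g x]
    exact (he.iSup_comp (fun p => ratM g p x)).symm
  set F : ℕ → (Fin n → ℝ) → ℝ≥0∞ := fun m x => ⨆ k : Fin (m+1), v (k:ℕ) x with hF
  have hFmeas : ∀ m, Measurable (F m) := fun m => Measurable.iSup (fun k => hvmeas _)
  have hFm : ∀ x, Monotone (fun m => F m x) := by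
    intro x m m' hmm
    refine iSup_le fun k => ?_
    exact le_iSup_of_le (⟨(k:ℕ), by omega⟩ : Fin (m'+1)) le_rfl
  have hsupF : ∀ x, (⨆ m : ℕ, F m x) = hlMaximal g x := by
    intro x; rw [hMg x]
    apply le_antisymm
    · exact iSup_le fun m => iSup_le fun k => le_iSup (fun k : ℕ => v k x) (k:ℕ)
    · refine iSup_le fun k => ?_
      exact le_iSup_of_le k (le_iSup_of_le (⟨k, Nat.lt_succ_self k⟩ : Fin (k+1)) le_rfl)
  have hint : (∫⁻ x, hlMaximal g x * fl x) = ⨆ m : ℕ, ∫⁻ x, F m x * fl x := by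
    have hcong : ∀ x, hlMaximal g x * fl x = ⨆ m : ℕ, F m x * fl x := by
      intro x; rw [← hsupF x, ENNReal.iSup_mul]
    rw [lintegral_congr hcong]
    exact lintegral_iSup (fun m => (hFmeas m).mul hfl)
      (fun m m' hmm x => mul_le_mul_left (hFm x hmm) _)
  rw [hint]
  refine iSup_le fun m => ?_
  -- finite linearization at level m
  set bb : Fin (m+1) → Fin n → ℝ := fun k i => ((e (k:ℕ)).1 i : ℝ) with hbb
  set rr : Fin (m+1) → ℝ := fun k => ((e (k:ℕ)).2 : ℝ) with hrr
  set ss : Fin (m+1) → ℝ := fun k => if 0 < rr k then rr k else 1 with hss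
  have hsspos : ∀ k, 0 < ss k := by
    intro k
    rw [hss]
    dsimp only
    split
    · assumption
    · norm_num
  set E : Fin (m+1) → Set (Fin n → ℝ) := fun k =>
    ({x | 0 < F m x} ∩ {x | v (k:ℕ) x = F m x}) ∩
      ⋂ (j : Fin (m+1)) (_ : j < k), {x | v (j:ℕ) x = F m x}ᶜ with hE
  have hvFmeas : ∀ k : Fin (m+1), MeasurableSet {x | v (k:ℕ) x = F m x} := by
    intro k
    have h1 : MeasurableSet {x | v (k:ℕ) x ≤ F m x} := measurableSet_le (hvmeas _) (hFmeas m)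
    have h2 : MeasurableSet {x | F m x ≤ v (k:ℕ) x} := measurableSet_le (hFmeas m) (hvmeas _)
    have : {x | v (k:ℕ) x = F m x} = {x | v (k:ℕ) x ≤ F m x} ∩ {x | F m x ≤ v (k:ℕ) x} := by
      ext x; simp only [Set.mem_setOf_eq, Set.mem_inter_iff]
      constructor
      · intro h; exact ⟨le_of_eq h, ge_of_eq h⟩
      · intro h; exact le_antisymm h.1 h.2
    rw [this]; exact h1.inter h2
  have hEmeas : ∀ k, MeasurableSet (E k) := by
    intro k
    refine (MeasurableSet.inter ?_ (hvFmeas k)).inter ?_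
    · exact measurableSet_lt measurable_const (hFmeas m)
    · exact MeasurableSet.iInter fun j => MeasurableSet.iInter fun _ => (hvFmeas j).compl
  have hposside : ∀ k : Fin (m+1), ∀ x ∈ E k, 0 < rr k ∧
      x ∈ Cube (bb k) (rr k) ∧ F m x = avg g (bb k) (rr k) := by
    intro k x hx
    obtain ⟨⟨hx0, hxeq⟩, -⟩ := hx
    have hne : v (k:ℕ) x ≠ 0 := by
      rw [hxeq]; exact ne_of_gt hx0
    rw [hv] at hne
    simp only [ratM] at hne
    by_cases hpos : 0 < ((e (k:ℕ)).2 : ℝ)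
    · rw [if_pos hpos] at hne
      have hmem : x ∈ Cube (fun i => ((e (k:ℕ)).1 i : ℝ)) ((e (k:ℕ)).2 : ℝ) := by
        by_contra hc
        rw [Set.indicator_of_notMem hc] at hne
        exact hne rfl
      refine ⟨hpos, hmem, ?_⟩
      have : v (k:ℕ) x = avg g (bb k) (rr k) := by
        rw [hv]; simp only [ratM, if_pos hpos]
        rw [Set.indicator_of_mem hmem]
      rw [← hxeq, this]
    · rw [if_neg hpos] at hne
      exact absurd rfl hne
  have hEsub : ∀ k, E k ⊆ Cube (bb k) (ss k) := by
    intro k x hx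
    obtain ⟨hpos, hmem, -⟩ := hposside k x hx
    have hssk : ss k = rr k := by simp only [hss]; rw [if_pos hpos]
    rwa [hssk]
  have hdisjE : Pairwise (Function.onFun Disjoint E) := by
    intro j k hjk
    rcases lt_or_gt_of_ne hjk with hlt | hgt
    · rw [Function.onFun]
      rw [Set.disjoint_left]
      intro x hxj hxk
      have h1 : v (j:ℕ) x = F m x := hxj.1.2
      have h2 := hxk.2
      rw [Set.mem_iInter] at h2
      have := h2 j
      rw [Set.mem_iInter] at this
      exact (this hlt) h1
    · rw [Function.onFun]
      rw [Set.disjoint_left]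
      intro x hxj hxk
      have h1 : v (k:ℕ) x = F m x := hxk.1.2
      have h2 := hxj.2
      rw [Set.mem_iInter] at h2
      have := h2 k
      rw [Set.mem_iInter] at this
      exact (this hgt) h1
  have hcover : {x | 0 < F m x} = ⋃ k, E k := by
    apply le_antisymm
    · intro x hx0
      have hx0' : 0 < F m x := hx0
      obtain ⟨k₀, hk₀⟩ := exists_eq_ciSup_of_finite (f := fun k : Fin (m+1) => v (k:ℕ) x)
      have hk₀' : v (k₀:ℕ) x = F m x := hk₀
      set P := Finset.univ.filter (fun k : Fin (m+1) => v (k:ℕ) x = F m x) with hP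
      have hPne : P.Nonempty := ⟨k₀, by simp [hP, hk₀']⟩
      obtain ⟨kmin, hkmem, hkmin⟩ := P.exists_min_image id hPne
      rw [hP, Finset.mem_filter] at hkmem
      refine Set.mem_iUnion.mpr ⟨kmin, ⟨⟨hx0', hkmem.2⟩, ?_⟩⟩
      rw [Set.mem_iInter]
      intro j
      rw [Set.mem_iInter]
      intro hjlt
      intro hc
      have hjP : j ∈ P := by
        rw [hP, Finset.mem_filter]
        exact ⟨Finset.mem_univ j, hc⟩
      have : kmin ≤ j := hkmin j hjP
      exact absurd hjlt (not_lt.mpr this)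
    · refine Set.iUnion_subset fun k x hx => ?_
      exact hx.1.1
  -- split the integral
  have hGmeas : MeasurableSet {x | 0 < F m x} := measurableSet_lt measurable_const (hFmeas m)
  have hsplit : (∫⁻ x, F m x * fl x) = ∫⁻ x in {x | 0 < F m x}, F m x * fl x := by
    rw [← lintegral_add_compl (fun x => F m x * fl x) hGmeas]
    have hzero : (∫⁻ x in {x | 0 < F m x}ᶜ, F m x * fl x) = 0 := by
      have : ∀ x ∈ {x | 0 < F m x}ᶜ, F m x * fl x = 0 := by
        intro x hx
        simp only [Set.mem_compl_iff, Set.mem_setOf_eq, not_lt, le_zero_iff] at hx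
        rw [hx, zero_mul]
      rw [setLIntegral_congr_fun hGmeas.compl this]
      simp
    rw [hzero, add_zero]
  rw [hsplit, hcover, lintegral_iUnion hEmeas hdisjE, tsum_fintype]
  -- per-piece computation
  have hpiece : ∀ k : Fin (m+1), (∫⁻ x in E k, F m x * fl x) =
      avg g (bb k) (ss k) * ∫⁻ x in E k, fl x := by
    intro k
    by_cases hEk : (E k).Nonempty
    · obtain ⟨x₀, hx₀⟩ := hEk
      have hrk : 0 < rr k := (hposside k x₀ hx₀).1
      have hssk : ss k = rr k := by simp only [hss]; rw [if_pos hrk]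
      have hcong : ∀ x ∈ E k, F m x * fl x = avg g (bb k) (ss k) * fl x := by
        intro x hx
        have hval := (hposside k x hx).2.2
        rw [hssk, hval]
      rw [setLIntegral_congr_fun (hEmeas k) hcong]
      exact lintegral_const_mul _ hfl
    · rw [Set.not_nonempty_iff_eq_empty] at hEk
      rw [hEk]
      simp
  rw [Finset.sum_congr rfl (fun k _ => hpiece k)]
  -- identify with the pairing against opA
  have hswap : ∀ k : Fin (m+1), avg g (bb k) (ss k) * (∫⁻ x in E k, fl x) =
      ((∫⁻ x in E k, fl x) / volume (Cube (bb k) (ss k))) * ∫⁻ x in Cube (bb k) (ss k), g x := by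
    intro k
    rw [avg, div_eq_mul_inv, div_eq_mul_inv]
    ring
  rw [Finset.sum_congr rfl (fun k _ => hswap k)]
  have hopA_pair : (∑ k : Fin (m+1),
      ((∫⁻ x in E k, fl x) / volume (Cube (bb k) (ss k))) * ∫⁻ x in Cube (bb k) (ss k), g x) =
      ∫⁻ x, g x * opA fl bb ss E x := by
    have hptwise : ∀ x, g x * opA fl bb ss E x = ∑ k : Fin (m+1),
        Set.indicator (Cube (bb k) (ss k))
          (fun y => ((∫⁻ z in E k, fl z) / volume (Cube (bb k) (ss k))) * g y) x := by
      intro x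
      rw [opA, Finset.mul_sum]
      refine Finset.sum_congr rfl fun k _ => ?_
      by_cases hx : x ∈ Cube (bb k) (ss k)
      · rw [Set.indicator_of_mem hx, Set.indicator_of_mem hx, mul_comm]
      · rw [Set.indicator_of_notMem hx, Set.indicator_of_notMem hx, mul_zero]
    rw [lintegral_congr hptwise, lintegral_finset_sum _
      (fun k _ => (hg.const_mul _).indicator (measurableSet_cube _ _))]
    refine Finset.sum_congr rfl fun k _ => ?_
    rw [lintegral_indicator (measurableSet_cube _ _), lintegral_const_mul _ hg]
  rw [hopA_pair]
  -- finally, pay with the norm bound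
  have hopA_bound : X.ρ (opA fl bb ss E) ≤ K :=
    le_trans (le_Bsup X hfl hfl1 hsspos hEmeas hEsub hdisjE) (hBsup (m+1))
  set c : ℝ≥0 := (K.toNNReal)⁻¹ with hc
  have hKnn : K.toNNReal ≠ 0 := by
    simp only [ne_eq, ENNReal.toNNReal_eq_zero_iff]
    push_neg
    exact ⟨hK0, hKtop⟩
  have hccoe : (c : ℝ≥0∞) = K⁻¹ := by
    rw [hc, ENNReal.coe_inv hKnn, ENNReal.coe_toNNReal hKtop]
  have hhmeas : Measurable (fun x => (c:ℝ≥0∞) * opA fl bb ss E x) :=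
    (measurable_opA fl bb ss E).const_mul _
  have hhnorm : X.ρ (fun x => (c:ℝ≥0∞) * opA fl bb ss E x) ≤ 1 := by
    rw [X.smul_eq c _ (measurable_opA fl bb ss E), hccoe]
    calc K⁻¹ * X.ρ (opA fl bb ss E) ≤ K⁻¹ * K := mul_le_mul_right hopA_bound _
      _ = 1 := ENNReal.inv_mul_cancel hK0 hKtop
  have hassoc : (∫⁻ x, g x * ((c:ℝ≥0∞) * opA fl bb ss E x)) ≤ assocNorm X.ρ g := by
    unfold assocNorm
    exact le_iSup_of_le (fun x => (c:ℝ≥0∞) * opA fl bb ss E x)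
      (le_iSup_of_le hhmeas (le_iSup_of_le hhnorm le_rfl))
  have hrearr : (∫⁻ x, g x * ((c:ℝ≥0∞) * opA fl bb ss E x)) =
      K⁻¹ * ∫⁻ x, g x * opA fl bb ss E x := by
    rw [← lintegral_const_mul (f := fun x => g x * opA fl bb ss E x) _
      (hg.mul (measurable_opA fl bb ss E))]
    rw [← hccoe]
    refine lintegral_congr fun x => ?_
    ring
  calc (∫⁻ x, g x * opA fl bb ss E x)
      = K * (K⁻¹ * ∫⁻ x, g x * opA fl bb ss E x) := by
        rw [← mul_assoc, ENNReal.mul_inv_cancel hK0 hKtop, one_mul]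
    _ = K * (∫⁻ x, g x * ((c:ℝ≥0∞) * opA fl bb ss E x)) := by rw [hrearr]
    _ ≤ K * assocNorm X.ρ g := mul_le_mul_right hassoc _



theorem main (n : ℕ) (X : BanachFunctionSpace n)
    (hM : MaximalBounded X.ρ)
    (hphi : ∃ lam₀ ∈ Set.Ioo (0 : ℝ) 1, 1 < phiFn X.ρ lam₀) :
    MaximalBounded (assocNorm X.ρ) := by
  classical
  obtain ⟨lam₀, hlam, hphi₀⟩ := hphi
  obtain ⟨hlam0, hlam1⟩ := hlam
  obtain ⟨CM, hCM⟩ := hM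
  set φ : ℝ≥0∞ := min (phiFn X.ρ lam₀) 2 with hφdef
  have hφ1 : 1 < φ := lt_min hphi₀ one_lt_two
  have hφtop : φ ≠ ⊤ :=
    ne_top_of_le_ne_top (by norm_num : (2:ℝ≥0∞) ≠ ⊤) (min_le_right _ _)
  have hφle : φ ≤ phiFn X.ρ lam₀ := min_le_left _ _
  have hφ0 : φ ≠ 0 := (lt_trans zero_lt_one hφ1).ne'
  have hφreal : 1 < φ.toReal := by
    have := (ENNReal.toReal_lt_toReal (by norm_num : (1:ℝ≥0∞) ≠ ⊤) hφtop).mpr hφ1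
    simpa using this
  set δ : ℝ := φ.toReal - 1 with hδ
  have hδ0 : 0 < δ := by rw [hδ]; linarith
  have hδne : δ ≠ 0 := ne_of_gt hδ0
  have h3n : (0:ℝ) < 3^n := by positivity
  have h3ne : (3:ℝ)^n ≠ 0 := ne_of_gt h3n
  set γ : ℝ := max 2 (3^n * 4 / δ) with hγdef
  have hγ2 : (2:ℝ) ≤ γ := le_max_left _ _
  have hγ1 : (1:ℝ) ≤ γ := by linarith
  have hγ0 : (0:ℝ) < γ := by linarith
  have hεle : 2/γ ≤ 1 := by rw [div_le_one hγ0]; linarith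
  have hε0 : (0:ℝ) ≤ 2/γ := by positivity
  have hγge : 3^n * 4 / δ ≤ γ := le_max_right _ _
  have hkey : 3^n * (2/γ) ≤ δ/2 := by
    have h2 : 2 / (3^n*4/δ) = δ / (2*3^n) := by
      field_simp
      ring
    have h1 : 2/γ ≤ δ/(2*3^n) := by
      rw [← h2]
      apply div_le_div_of_nonneg_left (by norm_num) (by positivity) hγge
    calc 3^n * (2/γ) ≤ 3^n * (δ/(2*3^n)) := by
          exact mul_le_mul_of_nonneg_left h1 (le_of_lt h3n)
      _ = δ/2 := by field_simp
  have hΘlt : ENNReal.ofReal ((1+2/γ)^n) < φ := by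
    have hb : (1+2/γ)^n ≤ 1 + 3^n*(2/γ) := one_add_pow_le n hε0 hεle
    have hlt : (1+2/γ)^n < φ.toReal := by
      have : 1 + 3^n*(2/γ) ≤ 1 + δ/2 := by linarith
      have hδφ : 1 + δ = φ.toReal := by rw [hδ]; ring
      linarith
    calc ENNReal.ofReal ((1+2/γ)^n) < ENNReal.ofReal (φ.toReal) :=
        (ENNReal.ofReal_lt_ofReal_iff_of_nonneg (by positivity)).mpr hlt
      _ = φ := ENNReal.ofReal_toReal hφtop
  set q : ℝ≥0∞ := φ⁻¹ * ENNReal.ofReal ((1+2/γ)^n) with hq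
  have hφinv0 : φ⁻¹ ≠ 0 := ENNReal.inv_ne_zero.mpr hφtop
  have hφinvtop : φ⁻¹ ≠ ⊤ := ENNReal.inv_ne_top.mpr hφ0
  have hqlt : q < 1 := by
    calc q < φ⁻¹ * φ := (ENNReal.mul_lt_mul_iff_right hφinv0 hφinvtop).mpr hΘlt
      _ = 1 := ENNReal.inv_mul_cancel hφ0 hφtop
  set d : ℝ≥0∞ := φ⁻¹ * (ENNReal.ofReal ((2*γ+1)^n * (2/lam₀)) * CM) with hd
  have hdtop : d ≠ ⊤ :=
    ENNReal.mul_ne_top hφinvtop (ENNReal.mul_ne_top ENNReal.ofReal_ne_top ENNReal.coe_ne_top)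
  set Bst : ℝ≥0∞ := ENNReal.ofReal (d.toReal / (1 - q.toReal)) with hBst
  have hBsupBound : ∀ m : ℕ, Bsup X m ≤ Bst := by
    intro m
    exact absorb (Bsup_ne_top X CM hCM m) hqlt hdtop
      (Bsup_recursion X hlam0 hφ1 hφtop hφle hγ1 CM hCM m)
  set K : ℝ≥0∞ := Bst + 1 with hK
  have hK0 : K ≠ 0 := by
    have : (1:ℝ≥0∞) ≤ K := le_add_self
    exact ne_of_gt (lt_of_lt_of_le zero_lt_one this)
  have hKtop : K ≠ ⊤ := by
    rw [hK, hBst]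
    exact ENNReal.add_ne_top.mpr ⟨ENNReal.ofReal_ne_top, ENNReal.one_ne_top⟩
  have hBsupK : ∀ m, Bsup X m ≤ K := fun m => (hBsupBound m).trans le_self_add
  refine ⟨K.toNNReal, ?_⟩
  intro g hg
  have hcoe : (K.toNNReal : ℝ≥0∞) = K := ENNReal.coe_toNNReal hKtop
  rw [hcoe]
  have hLHS : assocNorm X.ρ (hlMaximal g) =
      ⨆ (fl : (Fin n → ℝ) → ℝ≥0∞) (_ : Measurable fl) (_ : X.ρ fl ≤ 1),
        ∫⁻ x, hlMaximal g x * fl x := rfl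
  rw [hLHS]
  refine iSup_le fun fl => iSup_le fun hfl => iSup_le fun hfl1 => ?_
  exact pairing X K hK0 hKtop hBsupK g fl hg hfl hfl1

end Lerner

/-- **Theorem (Lerner, Theorem 1.3(ii))**: if `M` is bounded on `X` and `φ_X(λ₀) > 1`
for some `λ₀ ∈ (0,1)`, then `M` is bounded on the associate space `X'`. -/
theorem maximal_bounded_assoc_of_phi_gt_one
    (n : ℕ) (hn : 0 < n) (X : BanachFunctionSpace n)
    (hM : MaximalBounded X.ρ)
    (hphi : ∃ lam₀ ∈ Set.Ioo (0 : ℝ) 1, 1 < phiFn X.ρ lam₀) :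
    MaximalBounded (assocNorm X.ρ) :=
  Lerner.main n X hM hphi

end
end

section
/- Let X be a Banach function space over ℝⁿ, and assume that the Hardy–Littlewood maximal operator M is bounded on X. Then either the function φ_X(λ) := inf{‖m_λ f‖_X : ‖f‖_X = 1} is unbounded on (0,1), or φ_X(λ) = 1 for all λ ∈ (0,1). -/
open MeasureTheory ENNReal Filter Set
open Metric
open scoped NNReal ENNReal

noncomputable section

namespace Aux
variable {n : ℕ}

lemma cube_eq_pi (a : Fin n → ℝ) (h : ℝ) :
    Cube a h = Set.pi Set.univ (fun i => Set.Icc (a i) (a i + h)) := by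
  ext x; simp only [Cube, Set.mem_setOf_eq, Set.mem_univ_pi]

lemma volume_cube (a : Fin n → ℝ) (h : ℝ) :
    volume (Cube a h) = ENNReal.ofReal h ^ n := by
  rw [cube_eq_pi, volume_pi_pi]
  simp [Real.volume_Icc]

lemma measurableSet_cube (a : Fin n → ℝ) (h : ℝ) : MeasurableSet (Cube a h) := by
  rw [cube_eq_pi]
  exact MeasurableSet.univ_pi fun i => measurableSet_Icc

lemma cube_eq_closedBall (a : Fin n → ℝ) {h : ℝ} (hh : 0 ≤ h) :
    Cube a h = Metric.closedBall (fun i => a i + h / 2) (h / 2) := by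
  ext x
  simp only [Cube, Set.mem_setOf_eq, Metric.mem_closedBall]
  rw [dist_pi_le_iff (by linarith)]
  refine forall_congr' fun i => ?_
  rw [Real.dist_eq, abs_le]
  constructor <;> intro H <;> constructor <;> simp at H ⊢ <;> linarith [H.1, H.2]

lemma closedBall_eq_cube (x : Fin n → ℝ) {r : ℝ} (hr : 0 ≤ r) :
    Metric.closedBall x r = Cube (fun i => x i - r) (2 * r) := by
  rw [cube_eq_closedBall _ (by linarith)]
  have : (fun i => x i - r + 2 * r / 2) = x := by ext i; ring
  rw [this]
  norm_num



lemma ennreal_le_of_forall_gt {a b : ℝ≥0∞} (h : ∀ c, b < c → a ≤ c) : a ≤ b := by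
  by_contra hab
  push_neg at hab
  obtain ⟨c, hc1, hc2⟩ := exists_between hab
  exact absurd (h c hc1) (not_le.2 hc2)

lemma decRearr_le_of_vol_le {f : (Fin n → ℝ) → ℝ≥0∞} {t α : ℝ≥0∞}
    (hv : volume {x | α < f x} ≤ t) : decRearr f t ≤ α := sInf_le hv

lemma vol_lt_of_lt_decRearr {f : (Fin n → ℝ) → ℝ≥0∞} {t α : ℝ≥0∞}
    (hα : α < decRearr f t) : t < volume {x | α < f x} := by
  by_contra h
  push_neg at h
  exact absurd (decRearr_le_of_vol_le h) (not_le.2 hα)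

lemma le_decRearr_of {f : (Fin n → ℝ) → ℝ≥0∞} {t q : ℝ≥0∞}
    (hq : ∀ α, α < q → t < volume {x | α < f x}) : q ≤ decRearr f t :=
  le_sInf fun β hβ => by
    by_contra h
    push_neg at h
    exact absurd hβ (not_le.2 (hq β h))

lemma vol_le_of_decRearr_lt {f : (Fin n → ℝ) → ℝ≥0∞} {t β : ℝ≥0∞}
    (h : decRearr f t < β) : volume {x | β < f x} ≤ t := by
  obtain ⟨γ, hγ, hγβ⟩ := sInf_lt_iff.1 h
  exact le_trans (measure_mono fun x hx => lt_trans hγβ hx) hγ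

lemma decRearr_mono_fun {f g : (Fin n → ℝ) → ℝ≥0∞} {t : ℝ≥0∞}
    (hfg : ∀ x, f x ≤ g x) : decRearr f t ≤ decRearr g t :=
  sInf_le_sInf fun α hα => le_trans (measure_mono fun x hx => lt_of_lt_of_le hx (hfg x)) hα

lemma decRearr_anti {f : (Fin n → ℝ) → ℝ≥0∞} {t t' : ℝ≥0∞} (h : t ≤ t') :
    decRearr f t' ≤ decRearr f t :=
  sInf_le_sInf fun α hα => le_trans hα h

lemma decRearr_smul_le {f : (Fin n → ℝ) → ℝ≥0∞} {t : ℝ≥0∞} {c : ℝ≥0∞}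
    (hc0 : c ≠ 0) (hct : c ≠ ⊤) :
    decRearr (fun x => c * f x) t ≤ c * decRearr f t := by
  refine ennreal_le_of_forall_gt fun β hβ => ?_
  have hβc : decRearr f t < β / c := by
    rw [ENNReal.lt_div_iff_mul_lt (Or.inl hc0) (Or.inl hct), mul_comm]
    exact hβ
  refine decRearr_le_of_vol_le ?_
  have : {x | β < c * f x} ⊆ {x | β / c < f x} := by
    intro x hx
    rw [Set.mem_setOf_eq, ENNReal.div_lt_iff (Or.inl hc0) (Or.inl hct), mul_comm]
    exact hx
  exact le_trans (measure_mono this) (vol_le_of_decRearr_lt hβc)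

lemma decRearr_smul {f : (Fin n → ℝ) → ℝ≥0∞} {t : ℝ≥0∞} {c : ℝ≥0∞}
    (hc0 : c ≠ 0) (hct : c ≠ ⊤) :
    decRearr (fun x => c * f x) t = c * decRearr f t := by
  refine le_antisymm (decRearr_smul_le hc0 hct) ?_
  have h2 := decRearr_smul_le (f := fun x => c * f x) (t := t)
    (c := c⁻¹) (ENNReal.inv_ne_zero.2 hct) (ENNReal.inv_ne_top.2 hc0)
  have : (fun x => c⁻¹ * (c * f x)) = f := by
    ext x
    rw [← mul_assoc, ENNReal.inv_mul_cancel hc0 hct, one_mul]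
  rw [this] at h2
  calc c * decRearr f t ≤ c * (c⁻¹ * decRearr (fun x => c * f x) t) :=
        mul_le_mul_right h2 c
    _ = decRearr (fun x => c * f x) t := by
        rw [← mul_assoc, ENNReal.mul_inv_cancel hc0 hct, one_mul]



lemma le_locMax {lam : ℝ} {f : (Fin n → ℝ) → ℝ≥0∞} {x : Fin n → ℝ}
    {a : Fin n → ℝ} {h : ℝ} (hh : 0 < h) (hx : x ∈ Cube a h) :
    decRearr (Set.indicator (Cube a h) f) (ENNReal.ofReal lam * volume (Cube a h))
      ≤ locMax lam f x := by
  refine le_trans ?_ (le_iSup _ a)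
  refine le_trans ?_ (le_iSup _ h)
  refine le_trans ?_ (le_iSup _ hh)
  exact le_iSup (fun (_ : x ∈ Cube a h) => _) hx

lemma locMax_anti {lam lam' : ℝ} (hl : lam ≤ lam') (f : (Fin n → ℝ) → ℝ≥0∞)
    (x : Fin n → ℝ) : locMax lam' f x ≤ locMax lam f x := by
  refine iSup_le fun a => iSup_le fun h => iSup_le fun hh => iSup_le fun hx => ?_
  refine le_trans (decRearr_anti ?_) (le_locMax hh hx)
  exact mul_le_mul_left (ENNReal.ofReal_le_ofReal hl) _

lemma locMax_smul {lam : ℝ} {c : ℝ≥0∞} (hc0 : c ≠ 0) (hct : c ≠ ⊤)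
    (f : (Fin n → ℝ) → ℝ≥0∞) (x : Fin n → ℝ) :
    locMax lam (fun y => c * f y) x = c * locMax lam f x := by
  unfold locMax
  rw [ENNReal.mul_iSup]
  refine iSup_congr fun a => ?_
  rw [ENNReal.mul_iSup]
  refine iSup_congr fun h => ?_
  rw [ENNReal.mul_iSup]
  refine iSup_congr fun hh => ?_
  rw [ENNReal.mul_iSup]
  refine iSup_congr fun hx => ?_
  rw [← decRearr_smul hc0 hct]
  congr 1
  ext y
  by_cases hy : y ∈ Cube a h <;> simp [Set.indicator, hy]

lemma isOpen_locMax_gt (lam : ℝ) (f : (Fin n → ℝ) → ℝ≥0∞) (α : ℝ≥0∞) :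
    IsOpen {x | α < locMax lam f x} := by
  rw [Metric.isOpen_iff]
  rintro x hx
  simp only [Set.mem_setOf_eq, locMax, lt_iSup_iff] at hx
  obtain ⟨a, h, hh, hxQ, hα⟩ := hx
  obtain ⟨β, hαβ, hβ⟩ := exists_between hα
  have hV : ENNReal.ofReal lam * volume (Cube a h) < volume {y | β < Set.indicator (Cube a h) f y} :=
    vol_lt_of_lt_decRearr hβ
  set V := volume {y | β < Set.indicator (Cube a h) f y} with hVdef
  -- choose a small enlargement δ
  have hcont : Tendsto (fun d : ℝ => ENNReal.ofReal lam * ENNReal.ofReal (h + 2 * d) ^ n)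
      (nhds 0) (nhds (ENNReal.ofReal lam * ENNReal.ofReal h ^ n)) := by
    refine ENNReal.Tendsto.const_mul ?_ (Or.inr ENNReal.ofReal_ne_top)
    refine ENNReal.Tendsto.pow ?_
    refine (ENNReal.continuous_ofReal.tendsto _).comp ?_
    have : Tendsto (fun d : ℝ => h + 2 * d) (nhds 0) (nhds (h + 2 * 0)) := by
      exact Tendsto.const_add _ (tendsto_id.const_mul _)
    simpa using this
  rw [volume_cube] at hV
  have hev : ∀ᶠ d in nhds (0:ℝ),
      ENNReal.ofReal lam * ENNReal.ofReal (h + 2 * d) ^ n < V :=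
    hcont.eventually_lt_const hV
  obtain ⟨δ, hδpos, hδ⟩ : ∃ δ > 0, ENNReal.ofReal lam * ENNReal.ofReal (h + 2 * δ) ^ n < V := by
    obtain ⟨ε, hε, hball⟩ := Metric.eventually_nhds_iff.1 hev
    refine ⟨ε/2, by linarith, hball ?_⟩
    rw [Real.dist_eq, sub_zero, abs_of_pos (by linarith)]
    linarith
  refine ⟨δ, hδpos, fun y hy => ?_⟩
  -- y is in the enlarged cube
  set Q' : Set (Fin n → ℝ) := Cube (fun i => a i - δ) (h + 2 * δ) with hQ'
  have hyQ' : y ∈ Q' := by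
    intro i
    have h1 := hxQ i
    have h2 : |y i - x i| ≤ dist y x := by
      rw [dist_pi_def]
      have := Finset.le_sup (f := fun i => nndist (y i) (x i)) (Finset.mem_univ i)
      calc |y i - x i| = dist (y i) (x i) := (Real.dist_eq _ _).symm
        _ ≤ dist y x := by
          rw [dist_pi_def]
          exact_mod_cast this
    have h3 : dist y x ≤ δ := le_of_lt (Metric.mem_ball.1 hy)
    rw [abs_le] at h2
    simp only [Set.mem_Icc] at h1 ⊢
    constructor <;> linarith [h2.1, h2.2, h1.1, h1.2]
  have hQQ' : Cube a h ⊆ Q' := by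
    intro z hz i
    have := hz i
    simp only [Set.mem_Icc] at this ⊢
    constructor <;> linarith [this.1, this.2, hδpos]
  have hβ' : β ≤ decRearr (Set.indicator Q' f) (ENNReal.ofReal lam * volume Q') := by
    refine le_decRearr_of fun γ hγ => ?_
    have hsub : {y | β < Set.indicator (Cube a h) f y} ⊆ {y | γ < Set.indicator Q' f y} := by
      intro z hz
      have hle : Set.indicator (Cube a h) f z ≤ Set.indicator Q' f z :=
        Set.indicator_le_indicator_of_subset hQQ' (fun _ => zero_le) z
      exact lt_of_lt_of_le (lt_of_lt_of_le hγ (le_of_lt hz)) hle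
    calc ENNReal.ofReal lam * volume Q' = ENNReal.ofReal lam * ENNReal.ofReal (h + 2*δ) ^ n := by
          rw [hQ', volume_cube]
      _ < V := hδ
      _ ≤ volume {y | γ < Set.indicator Q' f y} := measure_mono hsub
  have : β ≤ locMax lam f y :=
    le_trans hβ' (le_locMax (by linarith) hyQ')
  exact lt_of_lt_of_le hαβ this

lemma measurable_locMax (lam : ℝ) (f : (Fin n → ℝ) → ℝ≥0∞) :
    Measurable (locMax lam f) := by
  have : LowerSemicontinuous (locMax lam f) :=
    lowerSemicontinuous_iff_isOpen_preimage.2 fun y => isOpen_locMax_gt lam f y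
  exact this.measurable


lemma ennreal_le_of_forall_lt {a b : ℝ≥0∞} (h : ∀ c, c < a → c ≤ b) : a ≤ b := by
  by_contra hab
  push_neg at hab
  obtain ⟨c, hc1, hc2⟩ := exists_between hab
  exact absurd (h c hc2) (not_le.2 hc1)

lemma ae_le_locMax {lam : ℝ} (hlam : lam < 1) {f : (Fin n → ℝ) → ℝ≥0∞}
    (hf : Measurable f) : ∀ᵐ x ∂(volume : Measure (Fin n → ℝ)), f x ≤ locMax lam f x := by
  have hS : ∀ q : ℚ, MeasurableSet {x | ((Real.toNNReal q : ℝ≥0)) < f x} := by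
    intro q
    exact measurableSet_lt measurable_const hf
  have hae : ∀ᵐ x ∂(volume : Measure (Fin n → ℝ)), ∀ q : ℚ,
      Tendsto (fun r => volume ({y | ((Real.toNNReal q : ℝ≥0)) < f y} ∩ closedBall x r)
        / volume (closedBall x r)) (nhdsWithin 0 (Set.Ioi 0))
        (nhds (Set.indicator {y | ((Real.toNNReal q : ℝ≥0)) < f y} 1 x)) := by
    rw [MeasureTheory.ae_all_iff]
    intro q
    exact Besicovitch.ae_tendsto_measure_inter_div_of_measurableSet volume (hS q)
  filter_upwards [hae] with x hx
  refine ennreal_le_of_forall_lt fun c hc => ?_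
  obtain ⟨q, hq0, hcq, hqf⟩ := ENNReal.lt_iff_exists_rat_btwn.1 hc
  set S := {y | ((Real.toNNReal q : ℝ≥0)) < f y} with hSdef
  have hxS : x ∈ S := hqf
  have hindic : Set.indicator S (1 : (Fin n → ℝ) → ℝ≥0∞) x = 1 := by
    rw [Set.indicator_of_mem hxS]; rfl
  have htend := hx q
  rw [hindic] at htend
  have hlt1 : (ENNReal.ofReal lam) < 1 := by
    exact ENNReal.ofReal_lt_one.2 hlam
  have hev := htend.eventually_const_lt hlt1
  obtain ⟨r, hrQ, hr0'⟩ := (hev.and self_mem_nhdsWithin).exists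
  have hr0 : (0:ℝ) < r := hr0'
  have hball : closedBall x r = Cube (fun i => x i - r) (2 * r) :=
    closedBall_eq_cube x (le_of_lt hr0)
  have hvol0 : volume (closedBall x r) ≠ 0 := by
    rw [hball, volume_cube]
    simp only [ne_eq, pow_eq_zero_iff', ENNReal.ofReal_eq_zero, not_and_or, not_le]
    left; linarith
  have hvolt : volume (closedBall x r) ≠ ⊤ := by
    rw [hball, volume_cube]
    exact ENNReal.pow_ne_top ENNReal.ofReal_ne_top
  have hkey : ENNReal.ofReal lam * volume (closedBall x r) < volume (S ∩ closedBall x r) :=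
    (ENNReal.lt_div_iff_mul_lt (Or.inl hvol0) (Or.inl hvolt)).1 hrQ
  have hxB : x ∈ Cube (fun i => x i - r) (2 * r) := by
    rw [← hball]; exact Metric.mem_closedBall_self (le_of_lt hr0)
  have hd : ((Real.toNNReal q : ℝ≥0) : ℝ≥0∞) ≤
      decRearr (Set.indicator (Cube (fun i => x i - r) (2 * r)) f)
        (ENNReal.ofReal lam * volume (Cube (fun i => x i - r) (2 * r))) := by
    refine le_decRearr_of fun γ hγ => ?_
    rw [← hball]
    refine lt_of_lt_of_le hkey (measure_mono ?_)
    rintro z ⟨hz1, hz2⟩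
    have heq : f z = Set.indicator (closedBall x r) f z := (Set.indicator_of_mem hz2 f).symm
    have hz1' : ((Real.toNNReal q : ℝ≥0) : ℝ≥0∞) < f z := hz1
    show γ < Set.indicator (closedBall x r) f z
    rw [← heq]
    exact lt_trans hγ hz1'
  calc c ≤ ((Real.toNNReal q : ℝ≥0) : ℝ≥0∞) := le_of_lt hcq
    _ ≤ _ := hd
    _ ≤ locMax lam f x := le_locMax (by linarith) hxB


lemma vol_cube_pos {a : Fin n → ℝ} {h : ℝ} (hh : 0 < h) : 0 < volume (Cube a h) := by
  rw [volume_cube]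
  have : ENNReal.ofReal h ^ n ≠ 0 := pow_ne_zero n (ENNReal.ofReal_pos.2 hh).ne'
  exact pos_iff_ne_zero.2 this

lemma vol_cube_ne_top (a : Fin n → ℝ) (h : ℝ) : volume (Cube a h) ≠ ⊤ := by
  rw [volume_cube]
  exact ENNReal.pow_ne_top ENNReal.ofReal_ne_top

lemma vitali_weak (hn : 0 < n) {S : Set (Fin n → ℝ)} (hS : MeasurableSet S)
    {ε : ℝ≥0∞} (hε0 : ε ≠ 0) (hεt : ε ≠ ⊤) :
    volume {y | ∃ a h, 0 < h ∧ y ∈ Cube a h ∧ ε * volume (Cube a h) < volume (S ∩ Cube a h)}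
      ≤ ε⁻¹ * 4 ^ n * volume S := by
  by_cases hStop : volume S = ⊤
  · rw [hStop, ENNReal.mul_top]
    · exact le_top
    · simp [ENNReal.inv_ne_zero.2 hεt, pow_eq_zero_iff', hε0]
  -- radius bound
  set K : ℝ≥0∞ := ε⁻¹ * volume S with hK
  have hKt : K ≠ ⊤ := ENNReal.mul_ne_top (ENNReal.inv_ne_top.2 hε0) hStop
  set R : ℝ := (K ^ ((n:ℝ)⁻¹)).toReal with hR
  set t : Set ((Fin n → ℝ) × ℝ) := {p | 0 < p.2 ∧
    ε * volume (Cube p.1 p.2) < volume (S ∩ Cube p.1 p.2)} with ht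
  have hrad : ∀ p ∈ t, p.2 / 2 ≤ R / 2 := by
    rintro ⟨a, h⟩ ⟨hh, hlt⟩
    have h1 : volume (Cube a h) ≤ K := by
      have : ε * volume (Cube a h) ≤ volume S :=
        le_trans (le_of_lt hlt) (measure_mono Set.inter_subset_left)
      calc volume (Cube a h) = ε⁻¹ * (ε * volume (Cube a h)) := by
            rw [← mul_assoc, ENNReal.inv_mul_cancel hε0 hεt, one_mul]
        _ ≤ ε⁻¹ * volume S := mul_le_mul_right this _
    rw [volume_cube] at h1
    have h2 : ENNReal.ofReal h ≤ K ^ ((n:ℝ)⁻¹) := by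
      have := ENNReal.rpow_le_rpow (z := (n:ℝ)⁻¹) h1 (by positivity)
      rwa [← ENNReal.rpow_natCast (ENNReal.ofReal h) n, ← ENNReal.rpow_mul,
        mul_inv_cancel₀ (by exact_mod_cast hn.ne'), ENNReal.rpow_one] at this
    have h3 : h ≤ R := by
      rw [hR]
      exact (ENNReal.ofReal_le_iff_le_toReal
        (ENNReal.rpow_ne_top_of_nonneg (by positivity) hKt)).1 h2
    linarith
  obtain ⟨u, hut, hdisj, hcover⟩ := Vitali.exists_disjoint_subfamily_covering_enlargement_closedBall
    t (fun p => fun i => p.1 i + p.2 / 2) (fun p => p.2 / 2) (R / 2) hrad 4 (by norm_num)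
  have hcube : ∀ p ∈ t, Cube p.1 p.2 = closedBall (fun i => p.1 i + p.2 / 2) (p.2 / 2) :=
    fun p hp => cube_eq_closedBall p.1 (le_of_lt (ht ▸ hp).1)
  -- countability of u
  have hposvol : ∀ p ∈ u, 0 < volume (closedBall (fun i => p.1 i + p.2 / 2) (p.2 / 2)) := by
    intro p hp
    rw [← hcube p (hut hp)]
    exact vol_cube_pos (hut hp).1
  have hucount : u.Countable := by
    have := MeasureTheory.Measure.countable_meas_pos_of_disjoint_iUnion₀
      (μ := (volume : Measure (Fin n → ℝ)))
      (As := fun p : u => closedBall (fun i => (p : (Fin n → ℝ) × ℝ).1 i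
        + (p : (Fin n → ℝ) × ℝ).2 / 2) ((p : (Fin n → ℝ) × ℝ).2 / 2))
      (fun p => measurableSet_closedBall.nullMeasurableSet)
      (fun p q hpq => Disjoint.aedisjoint (hdisj p.2 q.2 (fun e => hpq (Subtype.ext e))))
    have huniv : {i : u | 0 < volume (closedBall (fun j => (i : (Fin n → ℝ) × ℝ).1 j
        + (i : (Fin n → ℝ) × ℝ).2 / 2) ((i : (Fin n → ℝ) × ℝ).2 / 2))} = Set.univ := by
      ext i
      simp only [Set.mem_setOf_eq, Set.mem_univ, iff_true]
      exact hposvol i i.2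
    rw [huniv] at this
    have hcu : Countable u := Set.countable_univ_iff.mp this
    exact Set.countable_coe_iff.mp hcu
  -- union bound
  have hUsub : {y | ∃ a h, 0 < h ∧ y ∈ Cube a h ∧
      ε * volume (Cube a h) < volume (S ∩ Cube a h)} ⊆
      ⋃ p ∈ u, closedBall (fun i => p.1 i + p.2 / 2) (4 * (p.2 / 2)) := by
    rintro y ⟨a, h, hh, hy, hlt⟩
    have hpt : (⟨a, h⟩ : (Fin n → ℝ) × ℝ) ∈ t := ⟨hh, hlt⟩
    obtain ⟨b, hb, hsub⟩ := hcover _ hpt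
    refine Set.mem_biUnion hb (hsub ?_)
    rw [← hcube _ hpt]
    exact hy
  refine le_trans (measure_mono hUsub) ?_
  refine le_trans (measure_biUnion_le volume hucount _) ?_
  -- volume of enlarged balls
  have hvol4 : ∀ p ∈ u, volume (closedBall (fun i => p.1 i + p.2 / 2) (4 * (p.2 / 2)))
      ≤ ε⁻¹ * 4 ^ n * volume (S ∩ Cube p.1 p.2) := by
    intro p hp
    have hh : 0 < p.2 := (hut hp).1
    have e1 : volume (closedBall (fun i => p.1 i + p.2 / 2) (4 * (p.2 / 2)))
        = 4 ^ n * volume (Cube p.1 p.2) := by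
      rw [closedBall_eq_cube _ (by linarith), volume_cube, volume_cube]
      have : (2 : ℝ) * (4 * (p.2 / 2)) = 4 * p.2 := by ring
      rw [this]
      rw [show ENNReal.ofReal (4 * p.2) = 4 * ENNReal.ofReal p.2 by
        rw [ENNReal.ofReal_mul (by norm_num)]
        norm_num]
      rw [mul_pow]
    have e2 : volume (Cube p.1 p.2) ≤ ε⁻¹ * volume (S ∩ Cube p.1 p.2) := by
      have hlt := (hut hp).2
      calc volume (Cube p.1 p.2) = ε⁻¹ * (ε * volume (Cube p.1 p.2)) := by
            rw [← mul_assoc, ENNReal.inv_mul_cancel hε0 hεt, one_mul]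
        _ ≤ ε⁻¹ * volume (S ∩ Cube p.1 p.2) := mul_le_mul_right (le_of_lt hlt) _
    calc volume (closedBall (fun i => p.1 i + p.2 / 2) (4 * (p.2 / 2)))
        = 4 ^ n * volume (Cube p.1 p.2) := e1
      _ ≤ 4 ^ n * (ε⁻¹ * volume (S ∩ Cube p.1 p.2)) := mul_le_mul_right e2 _
      _ = ε⁻¹ * 4 ^ n * volume (S ∩ Cube p.1 p.2) := by ring
  refine le_trans (Summable.tsum_le_tsum (fun p : u => hvol4 p p.2) ENNReal.summable ENNReal.summable) ?_
  rw [ENNReal.tsum_mul_left]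
  refine mul_le_mul_right ?_ _
  -- disjoint sum bound
  have hdisj2 : (u.PairwiseDisjoint fun p => S ∩ Cube p.1 p.2) := by
    intro p hp q hq hpq
    refine Disjoint.mono Set.inter_subset_right Set.inter_subset_right ?_
    rw [hcube p (hut hp), hcube q (hut hq)]
    exact hdisj hp hq hpq
  rw [← MeasureTheory.measure_biUnion hucount hdisj2
    (fun p hp => hS.inter (measurableSet_cube p.1 p.2))]
  exact measure_mono (Set.iUnion₂_subset fun p hp => Set.inter_subset_left)


lemma ofReal_mul_pow {r s : ℝ} (hr : 0 ≤ r) (hs : 0 ≤ s) :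
    ENNReal.ofReal r * ENNReal.ofReal s ^ n = ENNReal.ofReal (r * s ^ n) := by
  rw [ENNReal.ofReal_mul hr, ENNReal.ofReal_pow hs]

lemma decRearr_max_const {f1 f2 : (Fin n → ℝ) → ℝ≥0∞} {c t : ℝ≥0∞}
    (hle : ∀ y, f1 y ≤ max (f2 y) c) :
    decRearr f1 t ≤ max (decRearr f2 t) c := by
  refine ennreal_le_of_forall_gt fun β hβ => decRearr_le_of_vol_le ?_
  have hβ2 : decRearr f2 t < β := lt_of_le_of_lt (le_max_left _ _) hβ
  have hβc : c < β := lt_of_le_of_lt (le_max_right _ _) hβ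
  refine le_trans (measure_mono ?_) (vol_le_of_decRearr_lt hβ2)
  intro y hy
  have h1 : β < max (f2 y) c := lt_of_lt_of_le hy (hle y)
  rcases max_cases (f2 y) c with ⟨he, _⟩ | ⟨he, _⟩
  · rwa [he] at h1
  · rw [he] at h1
    exact absurd h1 (not_lt.2 (le_of_lt hβc))

lemma decRearr_le_of_vol_bound {f1 f2 : (Fin n → ℝ) → ℝ≥0∞} {K t : ℝ≥0∞}
    (hK : ∀ α, volume {y | α < f1 y} ≤ K * volume {y | α < f2 y}) :
    decRearr f1 (K * t) ≤ decRearr f2 t :=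
  sInf_le_sInf fun α hα => le_trans (hK α) (mul_le_mul_right hα _)

lemma locMax_comp (hn : 0 < n) {lam mu : ℝ} (hl0 : 0 < lam) (hl1 : lam < 1)
    (hm0 : 0 < mu) {f : (Fin n → ℝ) → ℝ≥0∞} (hf : Measurable f) (x : Fin n → ℝ) :
    locMax lam (locMax mu f) x ≤ locMax (lam * mu * (12:ℝ)⁻¹ ^ n) f x := by
  set nu : ℝ := lam * mu * (12:ℝ)⁻¹ ^ n with hnu
  refine iSup_le fun a => iSup_le fun h => iSup_le fun hh => iSup_le fun hx => ?_
  set Q : Set (Fin n → ℝ) := Cube a h with hQ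
  set Q3 : Set (Fin n → ℝ) := Cube (fun i => a i - h) (3 * h) with hQ3
  have hQsub : Q ⊆ Q3 := by
    intro z hz i
    have := hz i
    simp only [Set.mem_Icc] at this ⊢
    constructor <;> [linarith [this.1]; linarith [this.2]]
  have hxQ3 : x ∈ Q3 := hQsub hx
  set g : (Fin n → ℝ) → ℝ≥0∞ := Set.indicator Q3 f with hg
  have hgmeas : Measurable g := hf.indicator (measurableSet_cube _ _)
  set G : (Fin n → ℝ) → ℝ≥0∞ := locMax mu g with hG
  set c₀ : ℝ≥0∞ := locMax ((3:ℝ)⁻¹ ^ n * mu) f x with hc₀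
  -- Step 1 : pointwise split on Q
  have hsplit : ∀ y, Set.indicator Q (locMax mu f) y ≤ max (Set.indicator Q G y) c₀ := by
    intro y
    by_cases hyQ : y ∈ Q
    · rw [Set.indicator_of_mem hyQ, Set.indicator_of_mem hyQ]
      refine iSup_le fun a' => iSup_le fun h' => iSup_le fun hh' => iSup_le fun hy' => ?_
      set Q' : Set (Fin n → ℝ) := Cube a' h' with hQ'
      by_cases hsub : Q' ⊆ Q3
      · refine le_trans ?_ (le_max_left _ _)
        have heq : Set.indicator Q' f = Set.indicator Q' g := by
          ext z
          by_cases hz : z ∈ Q'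
          · rw [Set.indicator_of_mem hz, Set.indicator_of_mem hz, hg,
              Set.indicator_of_mem (hsub hz)]
          · rw [Set.indicator_of_notMem hz, Set.indicator_of_notMem hz]
        rw [heq]
        exact le_locMax hh' hy'
      · refine le_trans ?_ (le_max_right _ _)
        -- Q' is large; enlarge it to Q3' containing x
        obtain ⟨z, hzQ', hzQ3⟩ := Set.not_subset.1 hsub
        have hhh' : h ≤ h' := by
          simp only [hQ3, Cube, Set.mem_setOf_eq, not_forall] at hzQ3
          obtain ⟨i, hi⟩ := hzQ3
          simp only [Set.mem_Icc, not_and_or, not_le] at hi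
          have hy'i := hy' i
          have hz'i := hzQ' i
          have hyQi := hyQ i
          simp only [Set.mem_Icc] at hy'i hz'i hyQi
          rcases hi with hi | hi
          · nlinarith [hy'i.1, hy'i.2, hz'i.1, hz'i.2, hyQi.1, hyQi.2]
          · nlinarith [hy'i.1, hy'i.2, hz'i.1, hz'i.2, hyQi.1, hyQi.2]
        set Q3' : Set (Fin n → ℝ) := Cube (fun i => a' i - h') (3 * h') with hQ3'
        have hsub' : Q' ⊆ Q3' := by
          intro w hw i
          have := hw i
          simp only [Set.mem_Icc] at this ⊢
          constructor <;> [linarith [this.1]; linarith [this.2]]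
        have hxQ3' : x ∈ Q3' := by
          intro i
          have h1 := hx i
          have h2 := hyQ i
          have h3 := hy' i
          simp only [Set.mem_Icc] at h1 h2 h3 ⊢
          constructor <;> nlinarith [h1.1, h1.2, h2.1, h2.2, h3.1, h3.2]
        have ht : ENNReal.ofReal mu * volume Q'
            = ENNReal.ofReal ((3:ℝ)⁻¹ ^ n * mu) * volume Q3' := by
          rw [hQ', hQ3', volume_cube, volume_cube,
            ofReal_mul_pow (le_of_lt hm0) (le_of_lt hh'),
            ofReal_mul_pow (by positivity) (by linarith)]
          congr 1
          have h3 : (3:ℝ)⁻¹ ^ n * 3 ^ n = 1 := by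
            rw [← mul_pow]; norm_num
          rw [mul_pow]
          calc mu * h' ^ n = (3:ℝ)⁻¹ ^ n * 3 ^ n * (mu * h' ^ n) := by rw [h3, one_mul]
            _ = 3⁻¹ ^ n * mu * (3 ^ n * h' ^ n) := by ring
        have hmono : decRearr (Set.indicator Q' f) (ENNReal.ofReal mu * volume Q')
            ≤ decRearr (Set.indicator Q3' f)
              (ENNReal.ofReal ((3:ℝ)⁻¹ ^ n * mu) * volume Q3') := by
          rw [ht]
          exact decRearr_mono_fun
            (Set.indicator_le_indicator_of_subset hsub' (fun _ => zero_le))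
        exact le_trans hmono (le_locMax (by linarith) hxQ3')
    · rw [Set.indicator_of_notMem hyQ]
      exact zero_le
  -- Step 2: apply decRearr to the split
  have hstep2 : decRearr (Set.indicator Q (locMax mu f)) (ENNReal.ofReal lam * volume Q)
      ≤ max (decRearr (Set.indicator Q G) (ENNReal.ofReal lam * volume Q)) c₀ :=
    decRearr_max_const hsplit
  -- Step 3: weak type bound for the first term
  set K : ℝ≥0∞ := (ENNReal.ofReal mu)⁻¹ * 4 ^ n with hKdef
  have hwk : ∀ α : ℝ≥0∞, volume {y | α < Set.indicator Q G y} ≤ K * volume {y | α < g y} := by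
    intro α
    have h1 : {y | α < Set.indicator Q G y} ⊆ {y | α < G y} := by
      intro y hy
      have hy' : α < Set.indicator Q G y := hy
      exact lt_of_lt_of_le hy' (Set.indicator_le_self _ _ y)
    have h2 : {y | α < G y} ⊆ {y | ∃ a' h', 0 < h' ∧ y ∈ Cube a' h' ∧
        ENNReal.ofReal mu * volume (Cube a' h') < volume ({z | α < g z} ∩ Cube a' h')} := by
      intro y hy
      simp only [hG, locMax, Set.mem_setOf_eq, lt_iSup_iff] at hy
      obtain ⟨a', h', hh', hy', hα⟩ := hy
      refine ⟨a', h', hh', hy', ?_⟩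
      refine lt_of_lt_of_le (vol_lt_of_lt_decRearr hα) (measure_mono ?_)
      intro z hz
      have hzQ' : z ∈ Cube a' h' := by
        by_contra hc
        rw [Set.mem_setOf_eq, Set.indicator_of_notMem hc] at hz
        exact absurd hz (not_lt.2 zero_le)
      refine ⟨?_, hzQ'⟩
      rw [Set.mem_setOf_eq, Set.indicator_of_mem hzQ'] at hz
      exact hz
    refine le_trans (measure_mono (le_trans h1 h2)) ?_
    exact vitali_weak hn (measurableSet_lt measurable_const hgmeas)
      (by simp [ENNReal.ofReal_eq_zero, not_le, hm0]) ENNReal.ofReal_ne_top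
  have hK0 : K ≠ 0 := by
    simp only [hKdef, ne_eq, mul_eq_zero, not_or, ENNReal.inv_eq_zero]
    exact ⟨ENNReal.ofReal_ne_top, by positivity⟩
  have hKtop : K ≠ ⊤ := by
    refine ENNReal.mul_ne_top (ENNReal.inv_ne_top.2 ?_) (by simp)
    simp [ENNReal.ofReal_eq_zero, not_le, hm0]
  set t : ℝ≥0∞ := ENNReal.ofReal (lam * mu * (4:ℝ)⁻¹ ^ n) * volume Q with htdef
  have hKt : K * t = ENNReal.ofReal lam * volume Q := by
    rw [htdef, hKdef]
    rw [show ENNReal.ofReal (lam * mu * (4:ℝ)⁻¹ ^ n)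
        = ENNReal.ofReal lam * ENNReal.ofReal mu * ENNReal.ofReal ((4:ℝ)⁻¹) ^ n by
      rw [← ENNReal.ofReal_pow (by norm_num), ← ENNReal.ofReal_mul (le_of_lt hl0),
        ← ENNReal.ofReal_mul (by positivity)]]
    rw [ENNReal.ofReal_inv_of_pos (by norm_num : (0:ℝ) < 4)]
    have h4 : ENNReal.ofReal 4 = (4 : ℝ≥0∞) := by
      norm_num
    rw [h4]
    have hmu0 : ENNReal.ofReal mu ≠ 0 := by simp [ENNReal.ofReal_eq_zero, not_le, hm0]
    calc (ENNReal.ofReal mu)⁻¹ * 4 ^ n *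
          (ENNReal.ofReal lam * ENNReal.ofReal mu * ((4:ℝ≥0∞))⁻¹ ^ n * volume Q)
        = ENNReal.ofReal lam * ((ENNReal.ofReal mu)⁻¹ * ENNReal.ofReal mu)
          * ((4:ℝ≥0∞) ^ n * ((4:ℝ≥0∞))⁻¹ ^ n) * volume Q := by ring
      _ = ENNReal.ofReal lam * volume Q := by
          rw [ENNReal.inv_mul_cancel hmu0 ENNReal.ofReal_ne_top, ← mul_pow,
            ENNReal.mul_inv_cancel (by norm_num) (by norm_num), one_pow, mul_one, mul_one]
  have hstep3 : decRearr (Set.indicator Q G) (ENNReal.ofReal lam * volume Q)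
      ≤ decRearr g t := by
    rw [← hKt]
    exact decRearr_le_of_vol_bound hwk
  -- identify t with the right threshold for Q3
  have htQ3 : t = ENNReal.ofReal nu * volume Q3 := by
    rw [htdef, hQ3, hQ, volume_cube, volume_cube,
      ofReal_mul_pow (by positivity) (le_of_lt hh),
      ofReal_mul_pow (by positivity) (by linarith)]
    congr 1
    have h12 : (12:ℝ)⁻¹ ^ n * 3 ^ n = 4⁻¹ ^ n := by
      rw [← mul_pow]; norm_num
    rw [hnu, mul_pow]
    calc lam * mu * (4:ℝ)⁻¹ ^ n * h ^ n
        = lam * mu * ((12:ℝ)⁻¹ ^ n * 3 ^ n) * h ^ n := by rw [h12]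
      _ = lam * mu * 12⁻¹ ^ n * (3 ^ n * h ^ n) := by ring
  have hfinal : decRearr g t ≤ locMax nu f x := by
    rw [htQ3, hg]
    exact le_locMax (by linarith) hxQ3
  -- combine
  refine le_trans hstep2 (max_le (le_trans hstep3 hfinal) ?_)
  rw [hc₀]
  refine locMax_anti ?_ f x
  rw [hnu]
  have h12 : (12:ℝ)⁻¹ ^ n ≤ (3:ℝ)⁻¹ ^ n := pow_le_pow_left₀ (by norm_num) (by norm_num) n
  have hp : (0:ℝ) < 12⁻¹ ^ n := pow_pos (by norm_num) n
  nlinarith [mul_le_mul_of_nonneg_left h12 hm0.le, mul_pos hm0 hp]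

end Aux

namespace Aux

variable {n : ℕ} (X : BanachFunctionSpace n)

lemma phi_le (lam : ℝ) {f : (Fin n → ℝ) → ℝ≥0∞} (hf : Measurable f)
    (hρ : X.ρ f = 1) : phiFn X.ρ lam ≤ X.ρ (locMax lam f) :=
  (iInf_le _ f).trans ((iInf_le _ hf).trans (iInf_le _ hρ))

lemma one_le_phi {lam : ℝ} (hlam : lam < 1) : 1 ≤ phiFn X.ρ lam := by
  refine le_iInf fun f => le_iInf fun hf => le_iInf fun hρ => ?_
  rw [← hρ]
  exact X.mono f (locMax lam f) hf (measurable_locMax lam f) (ae_le_locMax hlam hf)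

lemma phi_submul (hn : 0 < n) {lam mu : ℝ} (hl : lam ∈ Set.Ioo (0:ℝ) 1)
    (hm : mu ∈ Set.Ioo (0:ℝ) 1) :
    phiFn X.ρ lam * phiFn X.ρ mu ≤ phiFn X.ρ (lam * mu * (12:ℝ)⁻¹ ^ n) := by
  refine le_iInf fun f => le_iInf fun hf => le_iInf fun hρ => ?_
  set g : (Fin n → ℝ) → ℝ≥0∞ := locMax mu f with hgdef
  have hgmeas : Measurable g := measurable_locMax mu f
  have h1 : X.ρ (locMax lam g) ≤ X.ρ (locMax (lam * mu * (12:ℝ)⁻¹ ^ n) f) :=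
    X.mono _ _ (measurable_locMax lam g) (measurable_locMax _ f)
      (Filter.Eventually.of_forall (locMax_comp hn hl.1 hl.2 hm.1 hf))
  have hgone : (1:ℝ≥0∞) ≤ X.ρ g := by
    rw [← hρ]
    exact X.mono f g hf hgmeas (ae_le_locMax hm.2 hf)
  have hphimu : phiFn X.ρ mu ≤ X.ρ g := phi_le X mu hf hρ
  by_cases hgt : X.ρ g = ⊤
  · have h2 : X.ρ g ≤ X.ρ (locMax lam g) :=
      X.mono g _ hgmeas (measurable_locMax lam g) (ae_le_locMax hl.2 hgmeas)
    have : X.ρ (locMax (lam * mu * (12:ℝ)⁻¹ ^ n) f) = ⊤ :=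
      top_unique (le_trans (le_trans (le_of_eq hgt.symm) h2) h1)
    rw [this]
    exact le_top
  · set r : ℝ≥0∞ := X.ρ g with hrdef
    have hr0 : r ≠ 0 := fun h0 => by simp [h0] at hgone
    set c : ℝ≥0 := r.toNNReal⁻¹ with hcdef
    have hc : (c : ℝ≥0∞) = r⁻¹ := by
      rw [hcdef, ENNReal.coe_inv, ENNReal.coe_toNNReal hgt]
      rw [ne_eq, ENNReal.toNNReal_eq_zero_iff]
      push_neg
      exact ⟨hr0, hgt⟩
    have hc0 : (c : ℝ≥0∞) ≠ 0 := by
      rw [hc]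
      exact ENNReal.inv_ne_zero.2 hgt
    have hct : (c : ℝ≥0∞) ≠ ⊤ := ENNReal.coe_ne_top
    have hg'meas : Measurable (fun x => (c : ℝ≥0∞) * g x) := hgmeas.const_mul _
    have hρg' : X.ρ (fun x => (c : ℝ≥0∞) * g x) = 1 := by
      rw [X.smul_eq c g hgmeas, hc, ENNReal.inv_mul_cancel hr0 hgt]
    have hphil : phiFn X.ρ lam ≤ (c : ℝ≥0∞) * X.ρ (locMax lam g) := by
      have := phi_le X lam hg'meas hρg'
      have heq : locMax lam (fun x => (c : ℝ≥0∞) * g x) = fun x => (c:ℝ≥0∞) * locMax lam g x := by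
        funext x
        exact locMax_smul hc0 hct g x
      rw [heq, X.smul_eq c _ (measurable_locMax lam g)] at this
      exact this
    calc phiFn X.ρ lam * phiFn X.ρ mu
        ≤ ((c : ℝ≥0∞) * X.ρ (locMax lam g)) * r := mul_le_mul' hphil hphimu
      _ = ((c : ℝ≥0∞) * r) * X.ρ (locMax lam g) := by ring
      _ = X.ρ (locMax lam g) := by
          rw [hc, ENNReal.inv_mul_cancel hr0 hgt, one_mul]
      _ ≤ _ := h1

end Aux
/-- **Corollary (Lerner, Corollary 1.5)**: if `M` is bounded on `X`, then either `φ_X`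
is unbounded on `(0,1)`, or `φ_X(λ) = 1` for all `λ ∈ (0,1)`. -/
theorem phi_unbounded_or_phi_eq_one
    (n : ℕ) (hn : 0 < n) (X : BanachFunctionSpace n)
    (hM : MaximalBounded X.ρ) :
    phiUnbounded X.ρ ∨ ∀ lam ∈ Set.Ioo (0 : ℝ) 1, phiFn X.ρ lam = 1 := by
  by_cases hU : phiUnbounded X.ρ
  · exact Or.inl hU
  · refine Or.inr fun lam hlam => ?_
    set B : ℝ≥0∞ := ⨆ l ∈ Set.Ioo (0:ℝ) 1, phiFn X.ρ l with hBdef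
    have hBne : B ≠ ⊤ := hU
    have hphiB : ∀ l ∈ Set.Ioo (0:ℝ) 1, phiFn X.ρ l ≤ B := fun l hl => le_biSup _ hl
    refine le_antisymm ?_ (Aux.one_le_phi X hlam.2)
    by_contra hgt
    push_neg at hgt
    -- iterate submultiplicativity
    set c : ℝ := (12:ℝ)⁻¹ ^ n with hc
    have hc0 : 0 < c := pow_pos (by norm_num) n
    have hc1 : c ≤ 1 := pow_le_one₀ (by norm_num) (by norm_num)
    have hmem : ∀ m : ℝ, m ∈ Set.Ioo (0:ℝ) 1 → lam * m * c ∈ Set.Ioo (0:ℝ) 1 := by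
      intro m hm
      constructor
      · exact mul_pos (mul_pos hlam.1 hm.1) hc0
      · have h1 : lam * m < 1 := by nlinarith [hlam.1, hlam.2, hm.1, hm.2]
        nlinarith [mul_pos hlam.1 hm.1, h1, hc0, hc1]
    set mu : ℕ → ℝ := fun k => Nat.rec lam (fun _ m => lam * m * c) k with hmu
    have hmu0 : mu 0 = lam := rfl
    have hmusucc : ∀ k, mu (k + 1) = lam * mu k * c := fun k => rfl
    have hmuIoo : ∀ k, mu k ∈ Set.Ioo (0:ℝ) 1 := by
      intro k
      induction k with
      | zero => exact hlam
      | succ k ih => rw [hmusucc]; exact hmem _ ih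
    have hiter : ∀ k, phiFn X.ρ lam ^ (k + 1) ≤ phiFn X.ρ (mu k) := by
      intro k
      induction k with
      | zero => simp [hmu0]
      | succ k ih =>
        calc phiFn X.ρ lam ^ (k + 2) = phiFn X.ρ lam * phiFn X.ρ lam ^ (k + 1) := by ring
          _ ≤ phiFn X.ρ lam * phiFn X.ρ (mu k) := mul_le_mul_right ih _
          _ ≤ phiFn X.ρ (lam * mu k * c) := Aux.phi_submul X hn hlam (hmuIoo k)
          _ = phiFn X.ρ (mu (k + 1)) := by rw [hmusucc]
    have hbound : ∀ k, phiFn X.ρ lam ^ (k + 1) ≤ B :=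
      fun k => le_trans (hiter k) (hphiB _ (hmuIoo k))
    -- contradiction : powers of something > 1 are unbounded
    have hphine : phiFn X.ρ lam ≠ ⊤ := by
      intro htop
      have := hbound 0
      rw [htop] at this
      simp at this
      exact hBne this
    set L : ℝ≥0 := (phiFn X.ρ lam).toNNReal with hL
    have hLcoe : (L : ℝ≥0∞) = phiFn X.ρ lam := ENNReal.coe_toNNReal hphine
    have hL1 : 1 < L := by
      have := hgt
      rw [← hLcoe] at this
      exact_mod_cast this
    obtain ⟨k, hk⟩ := pow_unbounded_of_one_lt (B.toNNReal + 1) hL1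
    have hkk : B < (L : ℝ≥0∞) ^ k := by
      have h1 : B < ((B.toNNReal + 1 : ℝ≥0) : ℝ≥0∞) := by
        rw [ENNReal.coe_add]
        have : B = (B.toNNReal : ℝ≥0∞) := (ENNReal.coe_toNNReal hBne).symm
        rw [this]
        exact ENNReal.lt_add_right ENNReal.coe_ne_top (by norm_num)
      refine lt_of_lt_of_le h1 ?_
      rw [← ENNReal.coe_pow]
      exact_mod_cast hk.le
    have hk1 : (L : ℝ≥0∞) ^ k ≤ (L:ℝ≥0∞) ^ (k + 1) := by
      rw [pow_succ]
      refine le_mul_of_one_le_right' ?_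
      rw [hLcoe]
      exact Aux.one_le_phi X hlam.2
    rw [hLcoe] at hkk hk1
    exact absurd (le_trans hk1 (hbound k)) (not_le.2 hkk)


end
end

section
/- Let X be a Banach function space over ℝⁿ. Then X is A₁-regular if and only if the Hardy–Littlewood maximal operator M is bounded on X. -/
open MeasureTheory ENNReal Filter Set
open scoped NNReal ENNReal

noncomputable section

section Aux

open scoped Topology

variable {n : ℕ}

lemma cube_eq_pi (a : Fin n → ℝ) (h : ℝ) :
    Cube a h = Set.pi Set.univ (fun i => Set.Icc (a i) (a i + h)) := by
  ext x; simp only [Cube, Set.mem_setOf_eq, Set.mem_univ_pi]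

lemma measurableSet_cube (a : Fin n → ℝ) (h : ℝ) : MeasurableSet (Cube a h) := by
  rw [cube_eq_pi]; exact MeasurableSet.univ_pi fun i => measurableSet_Icc

lemma volume_cube (a : Fin n → ℝ) (h : ℝ) :
    volume (Cube a h) = ENNReal.ofReal h ^ n := by
  rw [cube_eq_pi, volume_pi_pi]
  simp [Real.volume_Icc]

lemma cube_subset {a a' : Fin n → ℝ} {h h' : ℝ}
    (ha : ∀ i, a' i ≤ a i) (hb : ∀ i, a i + h ≤ a' i + h') :
    Cube a h ⊆ Cube a' h' := by
  intro x hx i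
  exact ⟨(ha i).trans (hx i).1, (hx i).2.trans (hb i)⟩

lemma hlMaximal_eq (f : (Fin n → ℝ) → ℝ≥0∞) (x : Fin n → ℝ) :
    hlMaximal f x = ⨆ p : (Fin n → ℚ) × ℚ,
      Set.indicator (Cube (fun i => (p.1 i : ℝ)) (p.2 : ℝ))
        (fun _ => ⨆ (_ : (0:ℝ) < (p.2 : ℝ)),
          (∫⁻ y in Cube (fun i => (p.1 i : ℝ)) (p.2 : ℝ), f y) /
            volume (Cube (fun i => (p.1 i : ℝ)) (p.2 : ℝ))) x := by
  apply le_antisymm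
  · refine iSup_le fun a => iSup_le fun h => iSup_le fun hh => iSup_le fun hx => ?_
    set c := ∫⁻ y in Cube a h, f y with hc
    have key : ∀ k : ℕ, c / (ENNReal.ofReal (h + 2 * (1 / (k+1 : ℕ)))) ^ n ≤
        ⨆ p : (Fin n → ℚ) × ℚ,
          Set.indicator (Cube (fun i => (p.1 i : ℝ)) (p.2 : ℝ))
            (fun _ => ⨆ (_ : (0:ℝ) < (p.2 : ℝ)),
              (∫⁻ y in Cube (fun i => (p.1 i : ℝ)) (p.2 : ℝ), f y) /
                volume (Cube (fun i => (p.1 i : ℝ)) (p.2 : ℝ))) x := by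
      intro k
      set ε : ℝ := 1 / (k+1 : ℕ) with hε
      have hεpos : 0 < ε := by positivity
      have hA : ∀ i, ∃ q : ℚ, a i - ε < (q:ℝ) ∧ (q:ℝ) < a i := fun i =>
        exists_rat_btwn (by linarith)
      choose q hq1 hq2 using hA
      obtain ⟨h', hh1, hh2⟩ : ∃ h' : ℚ, h + ε < (h':ℝ) ∧ (h':ℝ) < h + 2 * ε :=
        exists_rat_btwn (by linarith)
      have hsub : Cube a h ⊆ Cube (fun i => (q i : ℝ)) (h' : ℝ) := by
        refine cube_subset (fun i => (hq2 i).le) (fun i => ?_)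
        have := hq1 i; linarith
      have hx' : x ∈ Cube (fun i => (q i : ℝ)) (h' : ℝ) := hsub hx
      have hh'pos : (0:ℝ) < (h' : ℝ) := by linarith
      refine le_trans ?_ (le_iSup _ (q, h'))
      rw [Set.indicator_of_mem hx', iSup_pos hh'pos]
      refine ENNReal.div_le_div (lintegral_mono_set hsub) ?_
      rw [volume_cube]
      exact pow_le_pow_left' (ENNReal.ofReal_le_ofReal (by linarith)) n
    rw [volume_cube]
    have h1 : Tendsto (fun k : ℕ => h + 2 * (1 / (k+1 : ℕ) : ℝ)) atTop (𝓝 h) := by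
      have := tendsto_one_div_add_atTop_nhds_zero_nat.const_mul (2:ℝ)
      simpa using tendsto_const_nhds.add this
    have h2 : Tendsto (fun k : ℕ => (ENNReal.ofReal (h + 2 * (1 / (k+1 : ℕ) : ℝ))) ^ n)
        atTop (𝓝 ((ENNReal.ofReal h) ^ n)) :=
      ENNReal.Tendsto.pow ((ENNReal.continuous_ofReal.tendsto h).comp h1)
    have h3 := ENNReal.Tendsto.const_div (a := c) h2 (Or.inl (pow_ne_top ENNReal.ofReal_ne_top))
    exact le_of_tendsto' h3 key
  · refine iSup_le fun p => ?_
    by_cases hx : x ∈ Cube (fun i => (p.1 i : ℝ)) (p.2 : ℝ)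
    · rw [Set.indicator_of_mem hx]
      refine iSup_le fun hp => ?_
      exact le_iSup_of_le (fun i => (p.1 i : ℝ)) (le_iSup_of_le (p.2 : ℝ)
        (le_iSup_of_le hp (le_iSup_of_le hx le_rfl)))
    · rw [Set.indicator_of_notMem hx]
      exact zero_le (a := _)

lemma measurable_hlMaximal (f : (Fin n → ℝ) → ℝ≥0∞) : Measurable (hlMaximal f) := by
  have : hlMaximal f = fun x => ⨆ p : (Fin n → ℚ) × ℚ,
      Set.indicator (Cube (fun i => (p.1 i : ℝ)) (p.2 : ℝ))
        (fun _ => ⨆ (_ : (0:ℝ) < (p.2 : ℝ)),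
          (∫⁻ y in Cube (fun i => (p.1 i : ℝ)) (p.2 : ℝ), f y) /
            volume (Cube (fun i => (p.1 i : ℝ)) (p.2 : ℝ))) x :=
    funext (hlMaximal_eq f)
  rw [this]
  exact Measurable.iSup fun p =>
    (measurable_const.indicator (measurableSet_cube _ _))

lemma hlMaximal_mono {f g : (Fin n → ℝ) → ℝ≥0∞} (hfg : ∀ᵐ x ∂volume, f x ≤ g x) :
    ∀ x, hlMaximal f x ≤ hlMaximal g x := by
  intro x
  refine iSup_le fun a => iSup_le fun h => iSup_le fun hh => iSup_le fun hx => ?_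
  refine le_iSup_of_le a (le_iSup_of_le h (le_iSup_of_le hh (le_iSup_of_le hx ?_)))
  exact ENNReal.div_le_div (lintegral_mono_ae (ae_restrict_of_ae hfg)) le_rfl

lemma hlMaximal_const_mul (c : ℝ≥0∞) (hc : c ≠ ⊤) (f : (Fin n → ℝ) → ℝ≥0∞) :
    hlMaximal (fun x => c * f x) = fun x => c * hlMaximal f x := by
  funext x
  unfold hlMaximal
  simp_rw [lintegral_const_mul' c f hc, mul_div_assoc, ← ENNReal.mul_iSup]

lemma hlMaximal_tsum_le (g : ℕ → (Fin n → ℝ) → ℝ≥0∞) (hg : ∀ k, Measurable (g k))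
    (x : Fin n → ℝ) :
    hlMaximal (fun x => ∑' k, g k x) x ≤ ∑' k, hlMaximal (g k) x := by
  refine iSup_le fun a => iSup_le fun h => iSup_le fun hh => iSup_le fun hx => ?_
  rw [lintegral_tsum fun k => (hg k).aemeasurable]
  rw [ENNReal.div_eq_inv_mul, ← ENNReal.tsum_mul_left]
  refine ENNReal.tsum_le_tsum fun k => ?_
  rw [← ENNReal.div_eq_inv_mul]
  exact le_iSup_of_le a (le_iSup_of_le h (le_iSup_of_le hh (le_iSup_of_le hx le_rfl)))

lemma rho_zero (X : BanachFunctionSpace n) : X.ρ (fun _ => 0) = 0 :=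
  (X.eq_zero_iff _ measurable_const).2 (Filter.Eventually.of_forall fun _ => rfl)

lemma rho_tsum_le (X : BanachFunctionSpace n) (g : ℕ → (Fin n → ℝ) → ℝ≥0∞)
    (hg : ∀ k, Measurable (g k)) :
    X.ρ (fun x => ∑' k, g k x) ≤ ∑' k, X.ρ (g k) := by
  by_cases htop : (∑' k, X.ρ (g k)) = ⊤
  · rw [htop]; exact le_top
  set F : ℕ → (Fin n → ℝ) → ℝ≥0∞ := fun j x => ∑ k ∈ Finset.range j, g k x with hF
  have hFmeas : ∀ j, Measurable (F j) := fun j =>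
    Finset.measurable_sum _ fun k _ => hg k
  have hFmono : ∀ x, Monotone fun j => F j x := fun x i j hij =>
    Finset.sum_le_sum_of_subset (Finset.range_subset_range.2 hij)
  have hFle : ∀ j, X.ρ (F j) ≤ ∑ k ∈ Finset.range j, X.ρ (g k) := by
    intro j
    induction j with
    | zero => simpa [hF] using le_of_eq (rho_zero X)
    | succ j ih =>
        have hFs : F (j+1) = fun x => F j x + g j x :=
          funext fun x => Finset.sum_range_succ _ _
        rw [hFs, Finset.sum_range_succ]
        exact (X.add_le _ _ (hFmeas j) (hg j)).trans (add_le_add ih le_rfl)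
  have hb : ∀ j, X.ρ (F j) ≤ ∑' k, X.ρ (g k) := fun j =>
    (hFle j).trans (ENNReal.sum_le_tsum _)
  have hsup : (⨆ j, X.ρ (F j)) < ⊤ :=
    lt_of_le_of_lt (iSup_le hb) (lt_top_iff_ne_top.2 htop)
  have hfatou := X.fatou F hFmeas hFmono hsup
  have heq : (fun x => ∑' k, g k x) = fun x => ⨆ j, F j x :=
    funext fun x => ENNReal.tsum_eq_iSup_nat
  rw [heq, hfatou]
  exact iSup_le hb

lemma ae_lt_top_of_rho_lt_top (X : BanachFunctionSpace n) (w : (Fin n → ℝ) → ℝ≥0∞)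
    (hw : Measurable w) (h : X.ρ w < ⊤) : ∀ᵐ x ∂volume, w x < ⊤ := by
  by_contra hc
  set E := {x | w x = ⊤} with hE
  have hEmeas : MeasurableSet E := hw (measurableSet_singleton ⊤)
  have hEpos : 0 < volume E := by
    rw [ae_iff] at hc
    have : {x | ¬ w x < ⊤} = E := by
      ext x; simp [hE, lt_top_iff_ne_top]
    rw [this] at hc
    exact pos_iff_ne_zero.2 hc
  obtain ⟨F, hFE, hFmeas, hFpos, hFfin⟩ := X.saturation E hEmeas hEpos
  have hFindmeas : Measurable (Set.indicator F fun _ => (1:ℝ≥0∞)) :=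
    measurable_const.indicator hFmeas
  have hind : ∀ c : ℝ≥0, (c:ℝ≥0∞) * X.ρ (Set.indicator F fun _ => 1) ≤ X.ρ w := by
    intro c
    rw [← X.smul_eq c _ hFindmeas]
    refine X.mono _ _ (hFindmeas.const_mul _) hw (Filter.Eventually.of_forall fun x => ?_)
    by_cases hxF : x ∈ F
    · rw [Set.indicator_of_mem hxF, mul_one, hFE hxF]
      exact le_top
    · rw [Set.indicator_of_notMem hxF, mul_zero]
      exact zero_le (a := _)
  have hρF : X.ρ (Set.indicator F fun _ => 1) ≠ 0 := by
    rw [Ne, X.eq_zero_iff _ hFindmeas]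
    intro h0
    have h1 : volume {x | ¬ Set.indicator F (fun _ => (1:ℝ≥0∞)) x = 0} = 0 := ae_iff.mp h0
    have h2 : F ⊆ {x | ¬ Set.indicator F (fun _ => (1:ℝ≥0∞)) x = 0} := fun x hx => by
      simp [Set.indicator_apply, hx]
    exact absurd (measure_mono_null h2 h1) (pos_iff_ne_zero.1 hFpos)
  have htop : X.ρ w = ⊤ := by
    refine top_le_iff.1 ?_
    calc (⊤:ℝ≥0∞) = (⨆ k : ℕ, (k:ℝ≥0∞)) * X.ρ (Set.indicator F fun _ => 1) := by
          rw [ENNReal.iSup_natCast, ENNReal.top_mul hρF]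
      _ = ⨆ k : ℕ, (k:ℝ≥0∞) * X.ρ (Set.indicator F fun _ => 1) := by rw [ENNReal.iSup_mul]
      _ ≤ X.ρ w := iSup_le fun k => by exact_mod_cast hind k
  rw [htop] at h
  exact absurd h (lt_irrefl _)

end Aux

/-- **Proposition 2.5**: a Banach function space `X` is `A₁`-regular if and only if the
Hardy–Littlewood maximal operator is bounded on `X`. -/

theorem isA1Regular_iff_maximalBounded
    (n : ℕ) (hn : 0 < n) (X : BanachFunctionSpace n) :
    IsApRegular X.ρ 1 ↔ MaximalBounded X.ρ := by
  constructor
  · rintro ⟨C₁, C₂, hC₁, hC₂, hreg⟩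
    refine ⟨C₁ * C₂, fun f hf => ?_⟩
    by_cases hfin : X.ρ f < ⊤
    · obtain ⟨w, hwmeas, _, hfw, hA1, hwnorm⟩ := hreg f hf hfin
      rw [ApConst, if_pos rfl] at hA1
      have hMw : ∀ᵐ x ∂volume, hlMaximal w x / w x ≤ (C₁:ℝ≥0∞) :=
        (ae_le_essSup _).mono fun x hx => hx.trans hA1
      have hMw2 : ∀ᵐ x ∂volume, hlMaximal w x ≤ (C₁:ℝ≥0∞) * w x :=
        hMw.mono fun x hx =>
          (ENNReal.div_le_iff_le_mul (Or.inr ENNReal.coe_ne_top)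
            (Or.inr (by exact_mod_cast hC₁.ne'))).1 hx
      have hMfw : ∀ᵐ x ∂volume, hlMaximal f x ≤ (C₁:ℝ≥0∞) * w x :=
        hMw2.mono fun x hx => (hlMaximal_mono hfw x).trans hx
      calc X.ρ (hlMaximal f) ≤ X.ρ (fun x => (C₁:ℝ≥0∞) * w x) :=
            X.mono _ _ (measurable_hlMaximal f) (hwmeas.const_mul _) hMfw
        _ = (C₁:ℝ≥0∞) * X.ρ w := X.smul_eq C₁ w hwmeas
        _ ≤ (C₁:ℝ≥0∞) * ((C₂:ℝ≥0∞) * X.ρ f) := mul_le_mul_right hwnorm _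
        _ = ((C₁ * C₂ : ℝ≥0) : ℝ≥0∞) * X.ρ f := by
            rw [← mul_assoc, ENNReal.coe_mul]
    · have : X.ρ f = ⊤ := by rwa [not_lt, top_le_iff] at hfin
      rw [this, ENNReal.mul_top]
      · exact le_top
      · exact_mod_cast (mul_pos hC₁ hC₂).ne'
  · rintro ⟨C, hC⟩
    set C' : ℝ≥0 := max C 1 with hC'def
    have hC'1 : (1:ℝ≥0) ≤ C' := le_max_right _ _
    have hC'0 : C' ≠ 0 := by
      intro h0; rw [h0] at hC'1; exact absurd hC'1 (by norm_num)
    have h2C'0 : ((2 * C' : ℝ≥0) : ℝ≥0∞) ≠ 0 := by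
      simp [hC'0]
    have h2C't : ((2 * C' : ℝ≥0) : ℝ≥0∞) ≠ ⊤ := ENNReal.coe_ne_top
    have hCle : ∀ g, Measurable g → X.ρ (hlMaximal g) ≤ (C':ℝ≥0∞) * X.ρ g := fun g hg =>
      (hC g hg).trans (mul_le_mul_left (by exact_mod_cast le_max_left C 1) _)
    set D : ℝ≥0 := (2 * C')⁻¹ with hDdef
    have hDC : (D:ℝ≥0∞) = ((2 * C' : ℝ≥0) : ℝ≥0∞)⁻¹ := by
      rw [hDdef, ENNReal.coe_inv (by simp [hC'0])]
    have hcancel : ((2 * C' : ℝ≥0) : ℝ≥0∞) * (D:ℝ≥0∞) = 1 := by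
      rw [hDC, ENNReal.mul_inv_cancel h2C'0 h2C't]
    have hDC' : (D:ℝ≥0∞) * (C':ℝ≥0∞) = 2⁻¹ := by
      have : D * C' = 2⁻¹ := by
        rw [hDdef, mul_inv, mul_assoc, inv_mul_cancel₀ hC'0, mul_one]
      rw [← ENNReal.coe_mul, this]
      simp
    refine ⟨2 * C', 2, ?_, by norm_num, fun f hf hffin => ?_⟩
    · exact mul_pos two_pos (lt_of_lt_of_le one_pos hC'1)
    -- Rubio de Francia iteration
    set g : ℕ → (Fin n → ℝ) → ℝ≥0∞ := fun k x => (D:ℝ≥0∞)^k * (hlMaximal^[k] f) x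
      with hgdef
    have hMkmeas : ∀ k, Measurable (hlMaximal^[k] f) := by
      intro k
      induction k with
      | zero => simpa using hf
      | succ k ih =>
          rw [Function.iterate_succ_apply']
          exact measurable_hlMaximal _
    have hgmeas : ∀ k, Measurable (g k) := fun k => (hMkmeas k).const_mul _
    have hMk : ∀ k, X.ρ (hlMaximal^[k] f) ≤ (C':ℝ≥0∞)^k * X.ρ f := by
      intro k
      induction k with
      | zero => simp
      | succ k ih =>
          rw [Function.iterate_succ_apply']
          calc X.ρ (hlMaximal (hlMaximal^[k] f)) ≤ (C':ℝ≥0∞) * X.ρ (hlMaximal^[k] f) :=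
                hCle _ (hMkmeas k)
            _ ≤ (C':ℝ≥0∞) * ((C':ℝ≥0∞)^k * X.ρ f) := mul_le_mul_right ih _
            _ = (C':ℝ≥0∞)^(k+1) * X.ρ f := by rw [← mul_assoc, ← pow_succ']
    have hgbound : ∀ k, X.ρ (g k) ≤ (2⁻¹:ℝ≥0∞)^k * X.ρ f := by
      intro k
      have h1 : X.ρ (g k) = (D:ℝ≥0∞)^k * X.ρ (hlMaximal^[k] f) := by
        have := X.smul_eq (D^k) (hlMaximal^[k] f) (hMkmeas k)
        rw [ENNReal.coe_pow] at this
        exact this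
      rw [h1]
      calc (D:ℝ≥0∞)^k * X.ρ (hlMaximal^[k] f)
          ≤ (D:ℝ≥0∞)^k * ((C':ℝ≥0∞)^k * X.ρ f) := mul_le_mul_right (hMk k) _
        _ = ((D:ℝ≥0∞) * (C':ℝ≥0∞))^k * X.ρ f := by rw [mul_pow, mul_assoc]
        _ = (2⁻¹:ℝ≥0∞)^k * X.ρ f := by rw [hDC']
    set w : (Fin n → ℝ) → ℝ≥0∞ := fun x => ∑' k, g k x with hwdef
    have hwmeas : Measurable w := Measurable.ennreal_tsum hgmeas
    have hrw : X.ρ w ≤ 2 * X.ρ f := by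
      calc X.ρ w ≤ ∑' k, X.ρ (g k) := rho_tsum_le X g hgmeas
        _ ≤ ∑' k, (2⁻¹:ℝ≥0∞)^k * X.ρ f := ENNReal.tsum_le_tsum hgbound
        _ = (∑' k, (2⁻¹:ℝ≥0∞)^k) * X.ρ f := ENNReal.tsum_mul_right
        _ = 2 * X.ρ f := by
            rw [ENNReal.tsum_geometric, ENNReal.one_sub_inv_two, inv_inv]
    have hfw : ∀ x, f x ≤ w x := by
      intro x
      have := ENNReal.le_tsum (f := fun k => g k x) 0
      simpa [hgdef] using this
    have hkey : ∀ x, hlMaximal w x ≤ ((2 * C' : ℝ≥0) : ℝ≥0∞) * w x := by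
      intro x
      calc hlMaximal w x ≤ ∑' k, hlMaximal (g k) x := hlMaximal_tsum_le g hgmeas x
        _ = ∑' k, ((2 * C' : ℝ≥0) : ℝ≥0∞) * ((D:ℝ≥0∞)^(k+1) * (hlMaximal^[k+1] f) x) := by
            refine tsum_congr fun k => ?_
            have h1 : hlMaximal (g k) x = (D:ℝ≥0∞)^k * hlMaximal (hlMaximal^[k] f) x := by
              have := hlMaximal_const_mul ((D:ℝ≥0∞)^k)
                (pow_ne_top ENNReal.coe_ne_top) (hlMaximal^[k] f)
              exact congrFun this x
            rw [h1, Function.iterate_succ_apply']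
            rw [pow_succ, ← mul_assoc, ← mul_assoc, mul_comm (((2 * C' : ℝ≥0) : ℝ≥0∞)) ((D:ℝ≥0∞)^k),
              mul_assoc ((D:ℝ≥0∞)^k), hcancel, mul_one]
        _ = ((2 * C' : ℝ≥0) : ℝ≥0∞) * ∑' k, (D:ℝ≥0∞)^(k+1) * (hlMaximal^[k+1] f) x :=
            ENNReal.tsum_mul_left
        _ ≤ ((2 * C' : ℝ≥0) : ℝ≥0∞) * w x := by
            refine mul_le_mul_right ?_ _
            have hshift : ∑' k, (D:ℝ≥0∞)^(k+1) * (hlMaximal^[k+1] f) x ≤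
                ∑' k, g k x := by
              conv_rhs => rw [tsum_eq_zero_add' ENNReal.summable]
              exact le_add_self
            exact hshift
    have hwfin : X.ρ w < ⊤ :=
      lt_of_le_of_lt hrw (ENNReal.mul_lt_top (lt_top_iff_ne_top.2 ENNReal.ofNat_ne_top) hffin)
    have hwae : ∀ᵐ x ∂volume, w x < ⊤ := ae_lt_top_of_rho_lt_top X w hwmeas hwfin
    refine ⟨w, hwmeas, ?_, Filter.Eventually.of_forall hfw, ?_, by exact_mod_cast hrw⟩
    · -- local integrability
      intro a h hh
      have hvol : volume (Cube a h) = ENNReal.ofReal h ^ n := volume_cube a h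
      have hvol0 : volume (Cube a h) ≠ 0 := by
        rw [hvol]
        exact pow_ne_zero n (ENNReal.ofReal_pos.2 hh).ne'
      have hvolt : volume (Cube a h) ≠ ⊤ := by
        rw [hvol]; exact pow_ne_top ENNReal.ofReal_ne_top
      obtain ⟨x, hxQ, hxw⟩ : ∃ x ∈ Cube a h, w x < ⊤ := by
        by_contra hcon
        push_neg at hcon
        have hsub : Cube a h ⊆ {x | ¬ w x < ⊤} := fun x hx => not_lt.2 (hcon x hx)
        have := measure_mono_null hsub (ae_iff.mp hwae)
        exact hvol0 this
      have h1 : (∫⁻ y in Cube a h, w y) / volume (Cube a h) ≤ hlMaximal w x :=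
        le_iSup_of_le a (le_iSup_of_le h (le_iSup_of_le hh (le_iSup_of_le hxQ le_rfl)))
      have h2 : (∫⁻ y in Cube a h, w y) / volume (Cube a h) < ⊤ :=
        lt_of_le_of_lt h1 (lt_of_le_of_lt (hkey x)
          (ENNReal.mul_lt_top ENNReal.coe_lt_top hxw))
      have h3 : (∫⁻ y in Cube a h, w y) =
          (∫⁻ y in Cube a h, w y) / volume (Cube a h) * volume (Cube a h) :=
        (ENNReal.div_mul_cancel hvol0 hvolt).symm
      rw [h3]
      exact ENNReal.mul_lt_top h2 (lt_top_iff_ne_top.2 hvolt)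
    · -- the A₁ bound
      rw [ApConst, if_pos rfl]
      refine essSup_le_of_ae_le _ (Filter.Eventually.of_forall fun x => ?_)
      exact (ENNReal.div_le_iff_le_mul (Or.inr h2C't) (Or.inr h2C'0)).2 (hkey x)


end
end

section
/- Let w ∈ A_∞ on ℝⁿ and set δ := 1/(1 + c_n [w]_{A_∞}). Then for every measurable set E ⊂ ℝⁿ of finite measure and every λ ∈ (0,1), w(E) ≤ 2^{n+1} λ^δ · w({x ∈ ℝⁿ : Mχ_E(x) > λ}). -/
open MeasureTheory ENNReal Filter Set
open scoped NNReal ENNReal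

noncomputable section

namespace Aux32

open Metric
open scoped Topology

variable {n : ℕ}

/-- Half-open dyadic cube of generation `k`. -/
def Dc (n : ℕ) (k : ℤ) (m : Fin n → ℤ) : Set (Fin n → ℝ) :=
  Set.pi Set.univ fun i => Set.Ico ((m i : ℝ) * 2 ^ k) (((m i : ℝ) + 1) * 2 ^ k)

lemma two_zpow_pos (k : ℤ) : (0:ℝ) < 2 ^ k := zpow_pos (by norm_num) k

lemma cube_eq_pi (a : Fin n → ℝ) (h : ℝ) :
    Cube a h = Set.pi Set.univ fun i => Set.Icc (a i) (a i + h) := by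
  ext x; exact ⟨fun hx i _ => hx i, fun hx i => hx i (Set.mem_univ i)⟩

lemma measurableSet_cube (a : Fin n → ℝ) (h : ℝ) : MeasurableSet (Cube a h) := by
  rw [cube_eq_pi]; exact MeasurableSet.univ_pi fun i => measurableSet_Icc

lemma volume_cube (a : Fin n → ℝ) {h : ℝ} (hh : 0 ≤ h) :
    volume (Cube a h) = ENNReal.ofReal h ^ n := by
  rw [cube_eq_pi, volume_pi_pi]
  simp [Real.volume_Icc]

lemma measurableSet_Dc (k : ℤ) (m : Fin n → ℤ) : MeasurableSet (Dc n k m) :=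
  MeasurableSet.univ_pi fun i => measurableSet_Ico

lemma volume_Dc (k : ℤ) (m : Fin n → ℤ) :
    volume (Dc n k m) = ENNReal.ofReal (2 ^ k) ^ n := by
  rw [Dc, volume_pi_pi]
  have : ∀ i : Fin n, volume (Set.Ico ((m i : ℝ) * 2 ^ k) (((m i : ℝ) + 1) * 2 ^ k))
      = ENNReal.ofReal (2 ^ k) := by
    intro i; rw [Real.volume_Ico]; ring_nf
  simp [this]

lemma volume_Dc_ne_zero (k : ℤ) (m : Fin n → ℤ) : volume (Dc n k m) ≠ 0 := by
  rw [volume_Dc]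
  apply pow_ne_zero
  simp only [ne_eq, ENNReal.ofReal_eq_zero, not_le]
  exact two_zpow_pos k

lemma volume_Dc_ne_top (k : ℤ) (m : Fin n → ℤ) : volume (Dc n k m) ≠ ⊤ := by
  rw [volume_Dc]; exact pow_ne_top ofReal_ne_top

lemma Dc_subset_cube (k : ℤ) (m : Fin n → ℤ) :
    Dc n k m ⊆ Cube (fun i => (m i : ℝ) * 2 ^ k) (2 ^ k) := by
  intro x hx i
  have := hx i (Set.mem_univ i)
  simp only [Set.mem_Ico] at this
  have he : ((m i : ℝ) + 1) * 2 ^ k = (m i : ℝ) * 2 ^ k + 2 ^ k := by ring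
  show (m i : ℝ) * 2 ^ k ≤ x i ∧ x i ≤ (m i : ℝ) * 2 ^ k + 2 ^ k
  exact ⟨this.1, by linarith [this.2]⟩

lemma volume_cube_Dc (k : ℤ) (m : Fin n → ℤ) :
    volume (Cube (fun i => (m i : ℝ) * 2 ^ k) ((2:ℝ) ^ k)) = volume (Dc n k m) := by
  rw [volume_cube _ (two_zpow_pos k).le, volume_Dc]

/-- index of the generation-`k` dyadic cube containing `x`. -/
def idx (k : ℤ) (x : Fin n → ℝ) : Fin n → ℤ := fun i => ⌊x i / 2 ^ k⌋

lemma mem_Dc_idx (k : ℤ) (x : Fin n → ℝ) : x ∈ Dc n k (idx k x) := by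
  intro i _
  have hp := two_zpow_pos k
  constructor
  · rw [← le_div_iff₀ hp]; exact Int.floor_le _
  · rw [← div_lt_iff₀ hp]; exact Int.lt_floor_add_one _

lemma idx_eq_of_mem {k : ℤ} {m : Fin n → ℤ} {y : Fin n → ℝ} (hy : y ∈ Dc n k m) :
    idx k y = m := by
  funext i
  have := hy i (Set.mem_univ i)
  simp only [Set.mem_Ico] at this
  have hp := two_zpow_pos k
  refine Int.floor_eq_iff.mpr ⟨?_, ?_⟩
  · rw [le_div_iff₀ hp]; exact this.1
  · rw [div_lt_iff₀ hp]; exact this.2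

lemma Ico_dyadic_subset {k k' : ℤ} (hkk : k ≤ k') {m m' : ℤ} {y : ℝ}
    (hy : y ∈ Set.Ico ((m:ℝ) * 2 ^ k) (((m:ℝ) + 1) * 2 ^ k))
    (hy' : y ∈ Set.Ico ((m':ℝ) * 2 ^ k') (((m':ℝ) + 1) * 2 ^ k')) :
    Set.Ico ((m:ℝ) * 2 ^ k) (((m:ℝ) + 1) * 2 ^ k) ⊆
      Set.Ico ((m':ℝ) * 2 ^ k') (((m':ℝ) + 1) * 2 ^ k') := by
  obtain ⟨h1, h2⟩ := hy
  obtain ⟨h3, h4⟩ := hy'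
  have hp := two_zpow_pos k
  set N : ℕ := (k' - k).toNat with hN
  have h2pow : (2:ℝ) ^ k' = (2:ℝ) ^ N * 2 ^ k := by
    rw [← zpow_natCast (2:ℝ) N, hN, Int.toNat_of_nonneg (by omega), ← zpow_add₀ (two_ne_zero)]
    ring_nf
  set j : ℤ := m - m' * 2 ^ N with hj
  have hjr : (m:ℝ) * 2 ^ k - (m':ℝ) * 2 ^ k' = (j:ℝ) * 2 ^ k := by
    rw [h2pow, hj]; push_cast; ring
  have hj0 : 0 ≤ j := by
    by_contra hc
    push_neg at hc
    have hle : j ≤ -1 := by omega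
    have : (j:ℝ) ≤ -1 := by exact_mod_cast hle
    nlinarith
  have hj1 : j + 1 ≤ 2 ^ N := by
    by_contra hc
    push_neg at hc
    have hle : (2:ℤ) ^ N ≤ j := by omega
    have : (2:ℝ) ^ N ≤ (j:ℝ) := by exact_mod_cast hle
    nlinarith
  have hba : (m':ℝ) * 2 ^ k' ≤ (m:ℝ) * 2 ^ k := by
    have hj0' : (0:ℝ) ≤ (j:ℝ) := by exact_mod_cast hj0
    have h0 : (0:ℝ) ≤ (j:ℝ) * 2 ^ k := mul_nonneg hj0' hp.le
    linarith [hjr, h0]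
  have hab : ((m:ℝ) + 1) * 2 ^ k ≤ ((m':ℝ) + 1) * 2 ^ k' := by
    have h5 : ((j:ℝ) + 1) * 2 ^ k ≤ (2:ℝ) ^ N * 2 ^ k := by
      have : ((j:ℝ) + 1) ≤ (2:ℝ) ^ N := by exact_mod_cast hj1
      nlinarith
    nlinarith [hjr]
  intro z hz
  exact ⟨hba.trans hz.1, lt_of_lt_of_le hz.2 hab⟩

lemma Dc_subset_of_inter {k k' : ℤ} (hkk : k ≤ k') {m m' : Fin n → ℤ}
    (hne : (Dc n k m ∩ Dc n k' m').Nonempty) : Dc n k m ⊆ Dc n k' m' := by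
  obtain ⟨y, hy, hy'⟩ := hne
  intro z hz i _
  exact Ico_dyadic_subset hkk (hy i (Set.mem_univ i)) (hy' i (Set.mem_univ i))
    (hz i (Set.mem_univ i))

lemma ae_exists_dense_dyadic {E : Set (Fin n → ℝ)}
    {lam : ℝ} (hlam : lam ∈ Set.Ioo (0:ℝ) 1) :
    ∀ᵐ x ∂(volume.restrict E), ∃ k : ℤ,
      ENNReal.ofReal lam * volume (Dc n k (idx k x)) < volume (E ∩ Dc n k (idx k x)) := by
  filter_upwards [Besicovitch.ae_tendsto_measure_inter_div volume E] with x htt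
  set θ : ℝ := 1 - (1 - lam) / 2 ^ (n + 1) with hθdef
  have h2n : (0:ℝ) < 2 ^ (n+1) := by positivity
  have hθ0 : 0 ≤ θ := by
    have : (1 - lam) / 2 ^ (n+1) ≤ 1 := by
      rw [div_le_one h2n]
      have : (1:ℝ) ≤ 2 ^ (n+1) := one_le_pow₀ (by norm_num)
      linarith [hlam.1]
    simp only [hθdef]; linarith
  have hθ1 : ENNReal.ofReal θ < 1 := by
    rw [ENNReal.ofReal_lt_one]
    have : 0 < (1 - lam) / 2 ^ (n+1) := by
      apply div_pos (by linarith [hlam.2]) h2n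
    simp only [hθdef]; linarith
  have hev : ∀ᶠ r in 𝓝[>] (0:ℝ),
      ENNReal.ofReal θ < volume (E ∩ closedBall x r) / volume (closedBall x r) :=
    htt.eventually (eventually_gt_nhds hθ1)
  have hseq : Tendsto (fun j : ℕ => (2:ℝ) ^ (-(j:ℤ))) atTop (𝓝[>] (0:ℝ)) := by
    apply tendsto_nhdsWithin_of_tendsto_nhds_of_eventually_within
    · have : (fun j : ℕ => (2:ℝ) ^ (-(j:ℤ))) = fun j : ℕ => ((1:ℝ)/2) ^ j := by
        funext j; rw [zpow_neg, zpow_natCast, one_div, inv_pow]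
      rw [this]
      exact tendsto_pow_atTop_nhds_zero_of_lt_one (by norm_num) (by norm_num)
    · exact Eventually.of_forall fun j => two_zpow_pos _
  obtain ⟨j, hj⟩ := (hseq.eventually hev).exists
  set k : ℤ := -(j:ℤ) with hk
  refine ⟨k, ?_⟩
  have hp : (0:ℝ) < 2 ^ k := two_zpow_pos k
  set D := Dc n k (idx k x) with hD
  set B := closedBall x ((2:ℝ) ^ k) with hB
  have hxD : x ∈ D := mem_Dc_idx k x
  have hDB : D ⊆ B := by
    intro y hy
    rw [hB, mem_closedBall, dist_pi_le_iff hp.le]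
    intro i
    have h1 := hy i (Set.mem_univ i)
    have h2 := hxD i (Set.mem_univ i)
    simp only [Set.mem_Ico] at h1 h2
    rw [Real.dist_eq, abs_sub_le_iff]
    constructor <;> linarith
  have hvB : volume B = ENNReal.ofReal (2 * 2 ^ k) ^ n := by
    rw [hB, closedBall_pi x hp.le, volume_pi_pi]
    have : ∀ i : Fin n, volume (closedBall (x i) ((2:ℝ)^k)) = ENNReal.ofReal (2 * 2^k) := by
      intro i
      rw [Real.closedBall_eq_Icc, Real.volume_Icc]; ring_nf
    simp [this]
  have hvD := volume_Dc (n := n) k (idx k x)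
  have hvBne : volume B ≠ 0 := by
    rw [hvB]
    apply pow_ne_zero
    simp only [ne_eq, ENNReal.ofReal_eq_zero, not_le]
    positivity
  have hvBnt : volume B ≠ ⊤ := by
    rw [hvB]; exact pow_ne_top ofReal_ne_top
  have hvDnt : volume D ≠ ⊤ := by rw [hD, hvD]; exact pow_ne_top ofReal_ne_top
  have hθB : ENNReal.ofReal θ * volume B < volume (E ∩ B) := by
    rw [← ENNReal.lt_div_iff_mul_lt (Or.inl hvBne) (Or.inl hvBnt)]
    exact hj
  have hsub : volume (E ∩ B) ≤ volume (E ∩ D) + (volume B - volume D) := by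
    calc volume (E ∩ B) ≤ volume ((E ∩ D) ∪ (B \ D)) := by
          apply measure_mono
          intro y hy
          by_cases hyd : y ∈ D
          · exact Or.inl ⟨hy.1, hyd⟩
          · exact Or.inr ⟨hy.2, hyd⟩
      _ ≤ volume (E ∩ D) + volume (B \ D) := measure_union_le _ _
      _ = volume (E ∩ D) + (volume B - volume D) := by
          rw [measure_diff hDB (measurableSet_Dc k (idx k x)).nullMeasurableSet hvDnt]
  set vB : ℝ := (2 * 2 ^ k) ^ n with hvBr
  set vD : ℝ := ((2:ℝ) ^ k) ^ n with hvDr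
  have hvDpos : 0 < vD := by positivity
  have htB : (volume B).toReal = vB := by
    rw [hvB, ENNReal.toReal_pow, ENNReal.toReal_ofReal (by positivity)]
  have htD : (volume D).toReal = vD := by
    rw [hD, hvD, ENNReal.toReal_pow, ENNReal.toReal_ofReal hp.le]
  set a : ℝ := (volume (E ∩ B)).toReal with ha
  set b : ℝ := (volume (E ∩ D)).toReal with hbdef
  have hEBnt : volume (E ∩ B) ≠ ⊤ :=
    (lt_of_le_of_lt (measure_mono Set.inter_subset_right) hvBnt.lt_top).ne
  have hEDnt : volume (E ∩ D) ≠ ⊤ :=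
    (lt_of_le_of_lt (measure_mono (Set.inter_subset_right.trans hDB)) hvBnt.lt_top).ne
  have h1 : θ * vB < a := by
    have := (ENNReal.toReal_lt_toReal (by finiteness) hEBnt).mpr hθB
    rwa [ENNReal.toReal_mul, ENNReal.toReal_ofReal hθ0, htB] at this
  have hDleB : volume D ≤ volume B := measure_mono hDB
  have h2 : a ≤ b + (vB - vD) := by
    have := (ENNReal.toReal_le_toReal hEBnt (by finiteness)).mpr hsub
    rwa [ENNReal.toReal_add hEDnt (by finiteness), ENNReal.toReal_sub_of_le hDleB hvBnt,
      htB, htD] at this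
  set p : ℝ := 2 ^ n with hpdef
  have hppos : (0:ℝ) < p := by positivity
  have h3 : vB = p * vD := by rw [hvBr, hvDr, hpdef, mul_pow]
  have h4 : (1 - θ) * vB = (1 - lam) / 2 * vD := by
    rw [hθdef, h3, hpdef]
    have h2n1 : (2:ℝ) ^ (n+1) = 2 * 2 ^ n := by rw [pow_succ]; ring
    rw [h2n1]
    field_simp
    ring
  have hgoal : lam * vD < b := by
    have hint := mul_pos hvDpos (sub_pos.mpr hlam.2)
    clear_value θ vB vD a b p
    nlinarith [h1, h2, h4, hint, hvDpos, hlam.1]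
  have hlhs : ENNReal.ofReal lam * volume D = ENNReal.ofReal (lam * vD) := by
    rw [hD, hvD, hvDr, ENNReal.ofReal_mul hlam.1.le, ENNReal.ofReal_pow hp.le]
  have hb0 : 0 < b := lt_trans (mul_pos hlam.1 hvDpos) hgoal
  calc ENNReal.ofReal lam * volume D = ENNReal.ofReal (lam * vD) := hlhs
    _ < ENNReal.ofReal b := (ENNReal.ofReal_lt_ofReal_iff hb0).mpr hgoal
    _ = volume (E ∩ D) := by rw [hbdef, ENNReal.ofReal_toReal hEDnt]

end Aux32

/-- **Inequality (3.2)**: if `w ∈ A_∞` and `δ = 1/(1 + c_n [w]_{A_∞})`, then for every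
measurable set `E` of finite measure and every `λ ∈ (0,1)`,
`w(E) ≤ 2^{n+1} λ^δ w({Mχ_E > λ})`.  Here `c_n` is the dimensional constant such that
every `A_∞` weight `v` satisfies `v(F) ≤ 2 (|F|/|Q|)^{1/(1+c_n[v]_{A_∞})} v(Q)` for all
cubes `Q` and measurable `F ⊆ Q`. -/
theorem weight_set_le_maximal_superlevel
    (n : ℕ) (hn : 0 < n) (c : ℝ) (hc : 0 < c)
    (hcprop : ∀ v : (Fin n → ℝ) → ℝ≥0∞, Measurable v → LocIntegrableW v →
      AinfConst v ≠ ⊤ →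
      ∀ (a : Fin n → ℝ) (h : ℝ), 0 < h →
        ∀ F ⊆ Cube a h, MeasurableSet F →
          ∫⁻ x in F, v x ≤
            2 * (volume F / volume (Cube a h)) ^ (1 + c * (AinfConst v).toReal)⁻¹ *
              ∫⁻ x in Cube a h, v x)
    (w : (Fin n → ℝ) → ℝ≥0∞) (hw : Measurable w) (hwloc : LocIntegrableW w)
    (hwA : AinfConst w ≠ ⊤)
    (E : Set (Fin n → ℝ)) (hE : MeasurableSet E) (hEfin : volume E < ⊤)
    (lam : ℝ) (hlam : lam ∈ Set.Ioo (0 : ℝ) 1) :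
    ∫⁻ x in E, w x ≤
      2 ^ (n + 1) * ENNReal.ofReal lam ^ (1 + c * (AinfConst w).toReal)⁻¹ *
        ∫⁻ x in {x | ENNReal.ofReal lam <
          hlMaximal (Set.indicator E fun _ => (1 : ℝ≥0∞)) x}, w x := by
  classical
  set L := ENNReal.ofReal lam with hLdef
  have hL0 : L ≠ 0 := by
    simp only [hLdef, ne_eq, ENNReal.ofReal_eq_zero, not_le]
    exact hlam.1
  have hLt : L ≠ ⊤ := ENNReal.ofReal_ne_top
  set δ : ℝ := (1 + c * (AinfConst w).toReal)⁻¹ with hδdef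
  have hct : 0 ≤ c * (AinfConst w).toReal := mul_nonneg hc.le ENNReal.toReal_nonneg
  have hδ0 : 0 ≤ δ := by rw [hδdef]; apply inv_nonneg.mpr; linarith
  have hδ1 : δ ≤ 1 := by
    rw [hδdef]
    rw [inv_le_one_iff₀]
    right; linarith
  -- Step A: no large dyadic cube has E-density exceeding lam
  obtain ⟨k₀, hk₀⟩ : ∃ k₀ : ℤ, ∀ (k : ℤ) (m : Fin n → ℤ), k₀ ≤ k →
      volume (E ∩ Aux32.Dc n k m) ≤ L * volume (Aux32.Dc n k m) := by
    obtain ⟨N, hN⟩ := exists_nat_gt (max (volume E / L).toReal 1)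
    refine ⟨(N:ℤ), fun k m hk => ?_⟩
    have hfin : volume E / L ≠ ⊤ := (ENNReal.div_lt_top hEfin.ne hL0).ne
    have hk0 : (0:ℤ) ≤ k := le_trans (by positivity) hk
    have h2k1 : (1:ℝ) ≤ 2 ^ k := by
      have := zpow_le_zpow_right₀ (one_le_two (α := ℝ)) hk0
      simpa using this
    have h2N : volume E / L ≤ ENNReal.ofReal ((2:ℝ)^k) := by
      rw [← ENNReal.ofReal_toReal hfin]
      apply ENNReal.ofReal_le_ofReal
      have h1 : ((N:ℝ)) ≤ 2 ^ (N:ℤ) := by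
        rw [zpow_natCast]
        exact_mod_cast (Nat.lt_two_pow_self (n := N)).le
      have h2 : (2:ℝ) ^ (N:ℤ) ≤ 2 ^ k := zpow_le_zpow_right₀ one_le_two hk
      have h3 := le_of_lt (lt_of_le_of_lt (le_max_left (volume E / L).toReal 1) hN)
      linarith
    have hD : ENNReal.ofReal ((2:ℝ)^k) ≤ volume (Aux32.Dc n k m) := by
      rw [Aux32.volume_Dc]
      exact le_self_pow₀ (by simpa [ENNReal.one_le_ofReal] using h2k1) hn.ne'
    have hED : volume E ≤ L * volume (Aux32.Dc n k m) := by
      have hle := le_trans h2N hD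
      calc volume E = volume E / L * L := (ENNReal.div_mul_cancel hL0 hLt).symm
        _ ≤ volume (Aux32.Dc n k m) * L := by gcongr
        _ = L * volume (Aux32.Dc n k m) := mul_comm _ _
    exact le_trans (measure_mono Set.inter_subset_left) hED
  -- the stopping-time family of maximal dyadic cubes
  set Qs : Set (ℤ × (Fin n → ℤ)) := {q |
    (L * volume (Aux32.Dc n q.1 q.2) < volume (E ∩ Aux32.Dc n q.1 q.2)) ∧
    ∀ (k' : ℤ) (m' : Fin n → ℤ), q.1 < k' → Aux32.Dc n q.1 q.2 ⊆ Aux32.Dc n k' m' →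
      volume (E ∩ Aux32.Dc n k' m') ≤ L * volume (Aux32.Dc n k' m')} with hQs
  set U : Set (Fin n → ℝ) := ⋃ q : Qs, Aux32.Dc n q.1.1 q.1.2 with hUdef
  have hUm : MeasurableSet U := MeasurableSet.iUnion fun q => Aux32.measurableSet_Dc _ _
  -- a.e. covering of E by the family
  have hcover : ∀ᵐ x ∂(volume.restrict E), x ∈ U := by
    filter_upwards [Aux32.ae_exists_dense_dyadic (E := E) hlam] with x hx
    have hbdd : ∀ k : ℤ, (ENNReal.ofReal lam * volume (Aux32.Dc n k (Aux32.idx k x)) <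
        volume (E ∩ Aux32.Dc n k (Aux32.idx k x))) → k ≤ k₀ := by
      intro k hk
      by_contra hcon
      push_neg at hcon
      rw [← hLdef] at hk
      exact absurd (hk₀ k _ hcon.le) (not_le.mpr hk)
    obtain ⟨k, hkP, hkmax⟩ := Int.exists_greatest_of_bdd ⟨k₀, hbdd⟩ hx
    rw [← hLdef] at hkP
    have hqmem : (k, Aux32.idx k x) ∈ Qs := by
      refine ⟨hkP, fun k' m' hlt hsubQ => ?_⟩
      by_contra hcon
      push_neg at hcon
      have hxk' : x ∈ Aux32.Dc n k' m' := hsubQ (Aux32.mem_Dc_idx k x)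
      have hm' : Aux32.idx k' x = m' := Aux32.idx_eq_of_mem hxk'
      have : k' ≤ k := hkmax k' (by rw [hm', ← hLdef] at *; exact hcon)
      omega
    exact Set.mem_iUnion.mpr ⟨⟨(k, Aux32.idx k x), hqmem⟩, Aux32.mem_Dc_idx k x⟩
  have hdiff0 : volume (E \ U) = 0 := by
    have h2 := (ae_restrict_iff' hE).mp hcover
    rw [ae_iff] at h2
    refine measure_mono_null ?_ h2
    intro x hx
    simp only [Set.mem_setOf_eq]
    push_neg
    exact ⟨hx.1, hx.2⟩
  -- pairwise disjointness
  have hdis : Pairwise (Function.onFun Disjoint fun q : Qs => Aux32.Dc n q.1.1 q.1.2) := by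
    have haux : ∀ q q' : ℤ × (Fin n → ℤ), q ∈ Qs → q' ∈ Qs → q.1 < q'.1 →
        ¬ (Aux32.Dc n q.1 q.2 ∩ Aux32.Dc n q'.1 q'.2).Nonempty := by
      intro q q' hq hq' hlt hne
      exact absurd hq'.1
        (not_lt.mpr (hq.2 q'.1 q'.2 hlt (Aux32.Dc_subset_of_inter hlt.le hne)))
    intro q q' hne
    rw [Function.onFun, Set.disjoint_iff_inter_eq_empty]
    by_contra hcon
    have hnon := Set.nonempty_iff_ne_empty.mpr hcon
    rcases lt_trichotomy q.1.1 q'.1.1 with h | h | h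
    · exact haux _ _ q.2 q'.2 h hnon
    · obtain ⟨y, hy, hy'⟩ := hnon
      have h1 : Aux32.idx q.1.1 y = q.1.2 := Aux32.idx_eq_of_mem hy
      have h2 : Aux32.idx q'.1.1 y = q'.1.2 := Aux32.idx_eq_of_mem hy'
      exact hne (Subtype.ext (Prod.ext h (by rw [← h1, ← h2, h])))
    · exact haux _ _ q'.2 q.2 h (Set.inter_comm _ _ ▸ hnon)
  -- each cube of the family lies in the superlevel set
  have hsubOm : ∀ q : ℤ × (Fin n → ℤ), q ∈ Qs → Aux32.Dc n q.1 q.2 ⊆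
      {x | L < hlMaximal (Set.indicator E fun _ => (1 : ℝ≥0∞)) x} := by
    rintro ⟨k, m⟩ hq y hy
    have hp := Aux32.two_zpow_pos k
    set aa : Fin n → ℝ := fun i => (m i : ℝ) * 2 ^ k with haa
    have hyC : y ∈ Cube aa ((2:ℝ)^k) := Aux32.Dc_subset_cube k m hy
    have hvol : volume (Cube aa ((2:ℝ)^k)) = volume (Aux32.Dc n k m) :=
      Aux32.volume_cube_Dc k m
    have hint : ∫⁻ z in Cube aa ((2:ℝ)^k), (Set.indicator E fun _ => (1:ℝ≥0∞)) z
        = volume (E ∩ Cube aa ((2:ℝ)^k)) := by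
      rw [lintegral_indicator hE]
      simp [Measure.restrict_restrict hE]
    have hgt : L < (∫⁻ z in Cube aa ((2:ℝ)^k), (Set.indicator E fun _ => (1:ℝ≥0∞)) z)
        / volume (Cube aa ((2:ℝ)^k)) := by
      rw [hint, hvol, ENNReal.lt_div_iff_mul_lt (Or.inl (Aux32.volume_Dc_ne_zero k m))
        (Or.inl (Aux32.volume_Dc_ne_top k m))]
      calc L * volume (Aux32.Dc n k m) < volume (E ∩ Aux32.Dc n k m) := hq.1
        _ ≤ volume (E ∩ Cube aa ((2:ℝ)^k)) :=
            measure_mono (Set.inter_subset_inter_right E (Aux32.Dc_subset_cube k m))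
    refine lt_of_lt_of_le hgt ?_
    apply le_iSup_of_le aa
    apply le_iSup_of_le ((2:ℝ)^k)
    apply le_iSup_of_le hp
    apply le_iSup_of_le hyC
    exact le_rfl
  -- per-cube weight estimate
  have hper : ∀ q : ℤ × (Fin n → ℤ), q ∈ Qs →
      ∫⁻ x in E ∩ Aux32.Dc n q.1 q.2, w x ≤
        2 ^ (n+1) * L ^ δ * ∫⁻ x in Aux32.Dc n q.1 q.2, w x := by
    rintro ⟨k, m⟩ hq
    have hp : (0:ℝ) < 2^k := Aux32.two_zpow_pos k
    set D := Aux32.Dc n k m with hDdef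
    set aa : Fin n → ℝ := fun i => (m i : ℝ) * 2 ^ k with haa
    set C := Cube aa ((2:ℝ)^k) with hCdef
    have hDC : D ⊆ C := Aux32.Dc_subset_cube k m
    have hvCD : volume C = volume D := Aux32.volume_cube_Dc k m
    have hvDt : volume D ≠ ⊤ := Aux32.volume_Dc_ne_top k m
    have hvD0 : volume D ≠ 0 := Aux32.volume_Dc_ne_zero k m
    -- corner point and the parent cube
    have hx₀D : aa ∈ D := by
      intro i _
      constructor
      · exact le_refl _
      · have : (m i : ℝ) * 2 ^ k + 0 < (m i : ℝ) * 2 ^ k + 2 ^ k := by linarith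
        calc aa i = (m i : ℝ) * 2 ^ k := rfl
          _ < ((m i : ℝ) + 1) * 2 ^ k := by linarith [hp]
    set P := Aux32.Dc n (k+1) (Aux32.idx (k+1) aa) with hPdef
    have hDP : D ⊆ P :=
      Aux32.Dc_subset_of_inter (by omega) ⟨aa, hx₀D, Aux32.mem_Dc_idx (k+1) aa⟩
    have hnp : volume (E ∩ P) ≤ L * volume P :=
      hq.2 (k+1) (Aux32.idx (k+1) aa) (by omega) hDP
    have hvP : volume P = 2^n * volume D := by
      rw [hPdef, Aux32.volume_Dc, hDdef, Aux32.volume_Dc]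
      have he1 : ENNReal.ofReal ((2:ℝ)^(k+1)) = 2 * ENNReal.ofReal ((2:ℝ)^k) := by
        have he0 : (2:ℝ)^(k+1) = 2 * 2^k := by
          rw [zpow_add₀ (two_ne_zero) k 1, zpow_one]; ring
        rw [he0, ENNReal.ofReal_mul (by norm_num), ENNReal.ofReal_ofNat]
      rw [he1, mul_pow]
    have hED_le : volume (E ∩ D) ≤ 2^n * L * volume D := by
      calc volume (E ∩ D) ≤ volume (E ∩ P) :=
            measure_mono (Set.inter_subset_inter_right E hDP)
        _ ≤ L * volume P := hnp
        _ = L * (2^n * volume D) := by rw [hvP]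
        _ = 2^n * L * volume D := by ring
    have hCDnull : volume (C \ D) = 0 := by
      rw [measure_diff hDC (Aux32.measurableSet_Dc k m).nullMeasurableSet hvDt,
        hvCD, tsub_self]
    have hEC_le : volume (E ∩ C) ≤ 2^n * L * volume C := by
      calc volume (E ∩ C) ≤ volume ((E ∩ D) ∪ (C \ D)) := by
            apply measure_mono
            intro y hy
            by_cases hyd : y ∈ D
            · exact Or.inl ⟨hy.1, hyd⟩
            · exact Or.inr ⟨hy.2, hyd⟩
        _ ≤ volume (E ∩ D) + volume (C \ D) := measure_union_le _ _
        _ = volume (E ∩ D) := by rw [hCDnull, add_zero]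
        _ ≤ 2^n * L * volume D := hED_le
        _ = 2^n * L * volume C := by rw [hvCD]
    have hratio : volume (E ∩ C) / volume C ≤ 2^n * L :=
      ENNReal.div_le_of_le_mul hEC_le
    have hmain := hcprop w hw hwloc hwA aa ((2:ℝ)^k) hp (E ∩ C)
      Set.inter_subset_right (hE.inter (Aux32.measurableSet_cube aa _))
    rw [← hδdef, ← hCdef] at hmain
    have hpow : (volume (E ∩ C) / volume C) ^ δ ≤ 2^n * L^δ := by
      calc (volume (E ∩ C) / volume C) ^ δ ≤ (2^n * L) ^ δ :=
            ENNReal.rpow_le_rpow hratio hδ0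
        _ = ((2:ℝ≥0∞)^n)^δ * L^δ := ENNReal.mul_rpow_of_nonneg _ _ hδ0
        _ ≤ 2^n * L^δ := by
            have h1 : ((2:ℝ≥0∞)^n)^δ ≤ ((2:ℝ≥0∞)^n)^(1:ℝ) :=
              ENNReal.rpow_le_rpow_of_exponent_le (one_le_pow₀ one_le_two) hδ1
            rw [ENNReal.rpow_one] at h1
            exact mul_le_mul_left h1 _
    have hwCD : ∫⁻ x in C, w x = ∫⁻ x in D, w x := by
      apply setLIntegral_congr
      rw [MeasureTheory.ae_eq_set]
      refine ⟨hCDnull, ?_⟩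
      rw [Set.diff_eq_empty.mpr hDC]
      exact measure_empty
    calc ∫⁻ x in E ∩ D, w x ≤ ∫⁻ x in E ∩ C, w x :=
          lintegral_mono_set (Set.inter_subset_inter_right E hDC)
      _ ≤ 2 * (volume (E ∩ C) / volume C) ^ δ * ∫⁻ x in C, w x := hmain
      _ ≤ 2 * (2^n * L^δ) * ∫⁻ x in C, w x := by gcongr
      _ = 2 ^ (n+1) * L ^ δ * ∫⁻ x in D, w x := by rw [hwCD]; ring
  -- assembling
  have hEsplit : ∫⁻ x in E, w x ≤ ∑' q : Qs, ∫⁻ x in E ∩ Aux32.Dc n q.1.1 q.1.2, w x := by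
    calc ∫⁻ x in E, w x = ∫⁻ x in (E ∩ U) ∪ (E \ U), w x := by
          rw [Set.inter_union_diff]
      _ ≤ (∫⁻ x in E ∩ U, w x) + ∫⁻ x in E \ U, w x := lintegral_union_le _ _ _
      _ = ∫⁻ x in E ∩ U, w x := by
          rw [setLIntegral_measure_zero _ _ hdiff0, add_zero]
      _ = ∫⁻ x in ⋃ q : Qs, E ∩ Aux32.Dc n q.1.1 q.1.2, w x := by
          rw [hUdef, Set.inter_iUnion]
      _ ≤ ∑' q : Qs, ∫⁻ x in E ∩ Aux32.Dc n q.1.1 q.1.2, w x := lintegral_iUnion_le _ _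
  refine le_trans hEsplit ?_
  calc ∑' q : Qs, ∫⁻ x in E ∩ Aux32.Dc n q.1.1 q.1.2, w x
      ≤ ∑' q : Qs, 2 ^ (n+1) * L ^ δ * ∫⁻ x in Aux32.Dc n q.1.1 q.1.2, w x :=
        ENNReal.tsum_le_tsum fun q => hper q.1 q.2
    _ = 2 ^ (n+1) * L ^ δ * ∑' q : Qs, ∫⁻ x in Aux32.Dc n q.1.1 q.1.2, w x :=
        ENNReal.tsum_mul_left
    _ = 2 ^ (n+1) * L ^ δ * ∫⁻ x in U, w x := by
        rw [hUdef, lintegral_iUnion (fun q => Aux32.measurableSet_Dc _ _) hdis]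
    _ ≤ 2 ^ (n+1) * L ^ δ *
        ∫⁻ x in {x | L < hlMaximal (Set.indicator E fun _ => (1 : ℝ≥0∞)) x}, w x := by
        apply mul_le_mul_right
        exact lintegral_mono_set (Set.iUnion_subset fun q => hsubOm q.1 q.2)


end
end
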